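/- arXiv:1612.06058 — 7 statements merged into one kernel-verified Lean document; each statement's English description precedes it below -/
import Mathlib

section
/- Let f : [0,∞) → [0,∞) be non-increasing, càdlàg, with f(0) = 1, and let α ∈ ℝ. Let τ be the Lamperti time-change associated to (f, α) and g(t) = f(τ(t)) its Lamperti transform. Then the first hitting time of 0 by g satisfies T_0(g) = ∫_0^{T_0(f)} f(r)^α dr, as an equality of elements of [0,∞]. -/
open MeasureTheory Filter Set
open scoped ENNReal NNReal

/-- A function is càdlàg on `[0,∞)`: right-continuous at every `t ≥ 0` and
with left limits at every `t > 0`. -/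
def Cadlag (f : ℝ → ℝ) : Prop :=
  (∀ t : ℝ, 0 ≤ t → ContinuousWithinAt f (Set.Ici t) t) ∧
  ∀ t : ℝ, 0 < t → ∃ l : ℝ, Filter.Tendsto f (nhdsWithin t (Set.Iio t)) (nhds l)

/-- `∫_0^u f(r)^α dr`, taken in `[0,∞]`, with the `ENNReal.rpow` conventions
`0^α = ∞` for `α < 0` and `0^α = 0` for `α > 0`. -/
noncomputable def lampInt (f : ℝ → ℝ) (α : ℝ) (u : ℝ) : ℝ≥0∞ :=
  ∫⁻ r in Set.Ioc (0:ℝ) u, (ENNReal.ofReal (f r)) ^ α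

/-- The Lamperti time change `τ(t) = inf{u ≥ 0 : ∫_0^u f(r)^α dr > t}`,
with values in `[0,∞]` (`inf ∅ = ∞`). -/
noncomputable def lampTau (f : ℝ → ℝ) (α : ℝ) (t : ℝ) : ℝ≥0∞ :=
  sInf ((fun v : ℝ => ENNReal.ofReal v) ''
    {v : ℝ | 0 ≤ v ∧ ENNReal.ofReal t < lampInt f α v})

/-- The Lamperti transform `g(t) = f(τ(t))`, with the convention `f(∞) = 0`. -/
noncomputable def lampG (f : ℝ → ℝ) (α : ℝ) (t : ℝ) : ℝ :=
  if lampTau f α t = ∞ then 0 else f ((lampTau f α t).toReal)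

/-- First hitting time of `0`: `T₀(h) = inf{t ≥ 0 : h(t) = 0}`, in `[0,∞]`. -/
noncomputable def hit0 (h : ℝ → ℝ) : ℝ≥0∞ :=
  sInf ((fun v : ℝ => ENNReal.ofReal v) '' {t : ℝ | 0 ≤ t ∧ h t = 0})

/-- `∫_0^T f(r)^α dr` for an extended-real upper limit `T ∈ [0,∞]`. -/
noncomputable def lampIntTo (f : ℝ → ℝ) (α : ℝ) (T : ℝ≥0∞) : ℝ≥0∞ :=
  ∫⁻ r in {r : ℝ | 0 ≤ r ∧ (ENNReal.ofReal r) < T}, (ENNReal.ofReal (f r)) ^ α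

/-- `T₀(g) = ∫_0^{T₀(f)} f(r)^α dr` in `[0,∞]`. -/
theorem absorption_time_of_lamperti_transform
    (f : ℝ → ℝ) (α : ℝ)
    (hnonneg : ∀ t : ℝ, 0 ≤ t → 0 ≤ f t)
    (hmono : ∀ s t : ℝ, 0 ≤ s → s ≤ t → f t ≤ f s)
    (hcadlag : Cadlag f)
    (hf0 : f 0 = 1) :
    hit0 (lampG f α) = lampIntTo f α (hit0 f) := by
  classical
  -- auxiliary measurable extension of f
  set F : ℝ → ℝ := fun r => if 0 ≤ r then f r else f 0 with hFdef
  have hFanti : Antitone F := by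
    intro a b hab
    by_cases ha : 0 ≤ a
    · have hb : 0 ≤ b := ha.trans hab
      simp only [hFdef, if_pos ha, if_pos hb]
      exact hmono a b ha hab
    · by_cases hb : 0 ≤ b
      · simp only [hFdef, if_neg ha, if_pos hb]
        exact hmono 0 b le_rfl hb
      · simp only [hFdef, if_neg ha, if_neg hb, le_refl]
  have hFmeas : Measurable F := hFanti.measurable
  set G : ℝ → ℝ≥0∞ := fun r => (ENNReal.ofReal (F r)) ^ α with hGdef
  have hGmeas : Measurable G := (ENNReal.measurable_ofReal.comp hFmeas).pow_const α
  set ν : Measure ℝ := volume.withDensity G with hνdef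
  -- every set integral in the statement is a ν-measure
  have key : ∀ s : Set ℝ, MeasurableSet s → s ⊆ Set.Ici (0:ℝ) →
      (∫⁻ r in s, (ENNReal.ofReal (f r)) ^ α) = ν s := by
    intro s hs hs0
    rw [hνdef, withDensity_apply _ hs]
    refine setLIntegral_congr_fun hs ?_
    intro r hr
    have hFr : F r = f r := if_pos (hs0 hr)
    simp [hGdef, hFr]
  have hInt : ∀ u : ℝ, lampInt f α u = ν (Set.Ioc 0 u) := fun u =>
    key _ measurableSet_Ioc (fun r hr => le_of_lt hr.1)
  set T := hit0 f with hTdef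
  set S : Set ℝ := {r : ℝ | 0 ≤ r ∧ ENNReal.ofReal r < T} with hSdef
  have hSmeas : MeasurableSet S := by
    have : S = Set.Ici (0:ℝ) ∩ (fun r : ℝ => ENNReal.ofReal r) ⁻¹' (Set.Iio T) := by
      ext r; simp [hSdef]
    rw [this]
    exact measurableSet_Ici.inter (ENNReal.measurable_ofReal measurableSet_Iio)
  have hIntTo : lampIntTo f α T = ν S := key _ hSmeas (fun r hr => hr.1)
  have hν0 : ν ({0} : Set ℝ) = 0 :=
    (withDensity_absolutelyContinuous volume G) Real.volume_singleton
  -- facts about the hitting time of f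
  have H1 : ∀ s : ℝ, 0 ≤ s → ENNReal.ofReal s < T → f s ≠ 0 := by
    intro s hs hsT h0
    have : T ≤ ENNReal.ofReal s := sInf_le ⟨s, ⟨hs, h0⟩, rfl⟩
    exact absurd hsT (not_lt.2 this)
  have H2 : T ≠ ∞ → ∀ s : ℝ, T.toReal ≤ s → f s = 0 := by
    intro hTne
    have Hgt : ∀ s : ℝ, T.toReal < s → f s = 0 := by
      intro s hs
      have hs0 : 0 < s := lt_of_le_of_lt ENNReal.toReal_nonneg hs
      have h1 : T < ENNReal.ofReal s := by
        rw [← ENNReal.ofReal_toReal hTne]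
        exact (ENNReal.ofReal_lt_ofReal_iff hs0).2 hs
      obtain ⟨b, hb, hbs⟩ := sInf_lt_iff.1 h1
      obtain ⟨w, ⟨hw0, hfw⟩, rfl⟩ := hb
      have hws : w ≤ s := by
        by_contra hcon
        exact absurd hbs (not_lt.2 (ENNReal.ofReal_le_ofReal (le_of_not_ge hcon)))
      have := hmono w s hw0 hws
      have h2 := hnonneg s hs0.le
      linarith [hfw ▸ this]
    intro s hs
    rcases eq_or_lt_of_le hs with heq | hlt
    · have hs0 : 0 ≤ s := heq ▸ ENNReal.toReal_nonneg
      have hcont : Filter.Tendsto f (nhdsWithin s (Set.Ioi s)) (nhds (f s)) :=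
        (hcadlag.1 s hs0).mono Set.Ioi_subset_Ici_self
      have hzero : Filter.Tendsto f (nhdsWithin s (Set.Ioi s)) (nhds 0) := by
        refine Filter.Tendsto.congr' ?_ tendsto_const_nhds
        filter_upwards [self_mem_nhdsWithin] with x hx
        exact (Hgt x (heq ▸ hx)).symm
      exact tendsto_nhds_unique hcont hzero
    · exact Hgt s hlt
  -- approximation of A from inside
  have KeyLow : ∀ t : ℝ, ENNReal.ofReal t < ν S →
      ∃ u : ℝ, 0 ≤ u ∧ ENNReal.ofReal u < T ∧ ENNReal.ofReal t < ν (Set.Ioc 0 u) := by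
    intro t ht
    rcases eq_or_ne T ∞ with hTtop | hTtop
    · have hSeq : S = Set.Ici (0:ℝ) := by
        ext r; simp [hSdef, hTtop]
      have hU : Set.Ioi (0:ℝ) = ⋃ n : ℕ, Set.Ioc (0:ℝ) n := by
        ext x
        simp only [Set.mem_iUnion, Set.mem_Ioc, Set.mem_Ioi]
        constructor
        · intro hx; obtain ⟨n, hn⟩ := exists_nat_ge x; exact ⟨n, hx, hn⟩
        · rintro ⟨n, hx, _⟩; exact hx
      have hmono' : Monotone (fun n : ℕ => Set.Ioc (0:ℝ) (n:ℝ)) := fun a b hab =>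
        Set.Ioc_subset_Ioc_right (by exact_mod_cast hab)
      have hle : ν S ≤ ⨆ n : ℕ, ν (Set.Ioc (0:ℝ) (n:ℝ)) := by
        calc ν S ≤ ν ({0} ∪ Set.Ioi (0:ℝ)) := by
              refine measure_mono ?_
              rw [hSeq]
              intro x hx
              rcases eq_or_lt_of_le (Set.mem_Ici.1 hx) with h | h
              · exact Or.inl (by simp [← h])
              · exact Or.inr h
          _ ≤ ν {0} + ν (Set.Ioi (0:ℝ)) := measure_union_le _ _
          _ = ν (Set.Ioi (0:ℝ)) := by rw [hν0, zero_add]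
          _ = ⨆ n : ℕ, ν (Set.Ioc (0:ℝ) (n:ℝ)) := by
              rw [hU]; exact hmono'.directed_le.measure_iUnion
      obtain ⟨n, hn⟩ := lt_iSup_iff.1 (lt_of_lt_of_le ht hle)
      exact ⟨n, Nat.cast_nonneg n, hTtop ▸ ENNReal.ofReal_lt_top, hn⟩
    · set c := T.toReal with hcdef
      have hSeq : S = Set.Ico 0 c := by
        ext r
        simp only [hSdef, Set.mem_setOf_eq, Set.mem_Ico]
        constructor
        · rintro ⟨hr, hrT⟩
          refine ⟨hr, ?_⟩
          rw [← ENNReal.ofReal_toReal hTtop] at hrT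
          exact (ENNReal.ofReal_lt_ofReal_iff_of_nonneg hr).1 hrT
        · rintro ⟨hr, hrc⟩
          refine ⟨hr, ?_⟩
          rw [← ENNReal.ofReal_toReal hTtop]
          exact (ENNReal.ofReal_lt_ofReal_iff_of_nonneg hr).2 hrc
      rcases le_or_gt c 0 with hc | hc
      · exfalso
        have : S = ∅ := by rw [hSeq]; exact Set.Ico_eq_empty (by intro h; linarith)
        rw [this] at ht
        simp at ht
      · set u : ℕ → ℝ := fun n => c - c / (n + 1) with hudef
        have hu0 : ∀ n : ℕ, 0 ≤ u n := by
          intro n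
          have : c / ((n:ℝ) + 1) ≤ c := by
            apply div_le_self hc.le
            have : (0:ℝ) ≤ (n:ℝ) := Nat.cast_nonneg n
            linarith
          simp only [hudef]; linarith
        have huc : ∀ n : ℕ, u n < c := by
          intro n
          have h1 : (0:ℝ) < (n:ℝ) + 1 := by positivity
          have : 0 < c / ((n:ℝ) + 1) := div_pos hc h1
          simp only [hudef]; linarith
        have humono : Monotone u := by
          intro a b hab
          have h1 : (0:ℝ) < (a:ℝ) + 1 := by positivity
          have h2 : ((a:ℝ) + 1) ≤ ((b:ℝ) + 1) := by
            have : (a:ℝ) ≤ (b:ℝ) := by exact_mod_cast hab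
            linarith
          have := div_le_div_of_nonneg_left hc.le h1 h2
          simp only [hudef]; linarith
        have hU : Set.Ioo (0:ℝ) c = ⋃ n : ℕ, Set.Ioc (0:ℝ) (u n) := by
          ext x
          simp only [Set.mem_iUnion, Set.mem_Ioc, Set.mem_Ioo]
          constructor
          · rintro ⟨hx1, hx2⟩
            obtain ⟨n, hn⟩ := exists_nat_ge (c / (c - x))
            refine ⟨n, hx1, ?_⟩
            have hcx : 0 < c - x := sub_pos.2 hx2
            have h1 : (0:ℝ) < (n:ℝ) + 1 := by positivity
            have h2 : c / ((n:ℝ) + 1) ≤ c - x := by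
              rw [div_le_iff₀ h1]
              calc c = (c - x) * (c / (c - x)) := by field_simp
                _ ≤ (c - x) * ((n:ℝ) + 1) := by
                    apply mul_le_mul_of_nonneg_left _ hcx.le
                    linarith
            simp only [hudef]; linarith
          · rintro ⟨n, hx1, hx2⟩
            exact ⟨hx1, lt_of_le_of_lt hx2 (huc n)⟩
        have hmono' : Monotone (fun n : ℕ => Set.Ioc (0:ℝ) (u n)) := fun a b hab =>
          Set.Ioc_subset_Ioc_right (humono hab)
        have hle : ν S ≤ ⨆ n : ℕ, ν (Set.Ioc (0:ℝ) (u n)) := by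
          calc ν S ≤ ν ({0} ∪ Set.Ioo (0:ℝ) c) := by
                refine measure_mono ?_
                rw [hSeq]
                rintro x ⟨hx1, hx2⟩
                rcases eq_or_lt_of_le hx1 with h | h
                · exact Or.inl (by simp [← h])
                · exact Or.inr ⟨h, hx2⟩
            _ ≤ ν {0} + ν (Set.Ioo (0:ℝ) c) := measure_union_le _ _
            _ = ν (Set.Ioo (0:ℝ) c) := by rw [hν0, zero_add]
            _ = ⨆ n : ℕ, ν (Set.Ioc (0:ℝ) (u n)) := by
                rw [hU]; exact hmono'.directed_le.measure_iUnion
        obtain ⟨n, hn⟩ := lt_iSup_iff.1 (lt_of_lt_of_le ht hle)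
        refine ⟨u n, hu0 n, ?_, hn⟩
        rw [← ENNReal.ofReal_toReal hTtop]
        exact (ENNReal.ofReal_lt_ofReal_iff hc).2 (huc n)
  -- before A the Lamperti transform is positive
  have Glow : ∀ t : ℝ, ENNReal.ofReal t < ν S → lampG f α t ≠ 0 := by
    intro t hlt
    obtain ⟨v, hv0, hvT, htv⟩ := KeyLow t hlt
    have hτle : lampTau f α t ≤ ENNReal.ofReal v := by
      apply sInf_le
      exact ⟨v, ⟨hv0, by rw [hInt]; exact htv⟩, rfl⟩
    have hτne : lampTau f α t ≠ ∞ := ne_top_of_le_ne_top ENNReal.ofReal_ne_top hτle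
    rw [lampG, if_neg hτne]
    refine H1 _ ENNReal.toReal_nonneg ?_
    calc ENNReal.ofReal (lampTau f α t).toReal = lampTau f α t := ENNReal.ofReal_toReal hτne
      _ ≤ ENNReal.ofReal v := hτle
      _ < T := hvT
  -- after A the Lamperti transform is zero
  have Ghigh : ∀ t : ℝ, ν S < ENNReal.ofReal t → lampG f α t = 0 := by
    intro t hlt
    have hTle : T ≤ lampTau f α t := by
      apply le_sInf
      rintro b ⟨v, ⟨hv0, hv⟩, rfl⟩
      by_contra hcon
      push_neg at hcon
      have hsub : Set.Ioc (0:ℝ) v ⊆ S := fun r hr =>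
        ⟨hr.1.le, lt_of_le_of_lt (ENNReal.ofReal_le_ofReal hr.2) hcon⟩
      rw [hInt] at hv
      have h1 : ENNReal.ofReal t < ν S := lt_of_lt_of_le hv (measure_mono hsub)
      exact lt_irrefl _ (h1.trans hlt)
    rw [lampG]
    split_ifs with hτ
    · rfl
    · have hTne : T ≠ ∞ := fun h => hτ (top_le_iff.1 (h ▸ hTle))
      exact H2 hTne _ ((ENNReal.toReal_le_toReal hTne hτ).2 hTle)
  -- conclusion
  rw [hIntTo]
  apply le_antisymm
  · rcases eq_or_ne (ν S) ∞ with hA | hA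
    · rw [hA]; exact le_top
    · apply ENNReal.le_of_forall_pos_le_add
      intro ε hε _
      have hAlt : ν S < ENNReal.ofReal ((ν S).toReal + ε) := by
        rw [ENNReal.ofReal_add ENNReal.toReal_nonneg ε.coe_nonneg,
          ENNReal.ofReal_toReal hA, ENNReal.ofReal_coe_nnreal]
        exact ENNReal.lt_add_right hA (by exact_mod_cast hε.ne')
      have hg := Ghigh ((ν S).toReal + ε) hAlt
      have hmem : hit0 (lampG f α) ≤ ENNReal.ofReal ((ν S).toReal + ε) := by
        apply sInf_le
        exact ⟨(ν S).toReal + ε, ⟨by positivity, hg⟩, rfl⟩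
      calc hit0 (lampG f α) ≤ ENNReal.ofReal ((ν S).toReal + ε) := hmem
        _ = ν S + ε := by
            rw [ENNReal.ofReal_add ENNReal.toReal_nonneg ε.coe_nonneg,
              ENNReal.ofReal_toReal hA, ENNReal.ofReal_coe_nnreal]
  · apply le_sInf
    rintro b ⟨t, ⟨ht0, hgt⟩, rfl⟩
    by_contra hcon
    push_neg at hcon
    exact Glow t hcon hgt
end

section
/- Let f : [0,∞) → [0,∞) be non-increasing, càdlàg, with f(0) = 1, let α ∈ ℝ, let τ be the Lamperti time-change associated to (f, α) and g = f∘τ its Lamperti transform. Then τ is one-sidedly differentiable at every point of [0, T_0(g)): for every t ∈ [0, T_0(g)) the right derivative of τ at t exists and equals f(τ(t))^{−α}, and for every t ∈ (0, T_0(g)) the left derivative of τ at t exists and equals f(τ(t)−)^{−α}, where f(s−) denotes the left limit of f at s. -/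
open MeasureTheory Filter Set
open scoped ENNReal NNReal

lemma rpow_bound_aux {p q x α : ℝ} (hp : 0 < p) (hpx : p ≤ x) (hxq : x ≤ q) :
    min (p ^ α) (q ^ α) ≤ x ^ α ∧ x ^ α ≤ max (p ^ α) (q ^ α) := by
  rcases le_or_gt 0 α with hα | hα
  · exact ⟨(min_le_left _ _).trans (Real.rpow_le_rpow hp.le hpx hα),
      (Real.rpow_le_rpow (hp.le.trans hpx) hxq hα).trans (le_max_right _ _)⟩
  · exact ⟨(min_le_right _ _).trans (Real.rpow_le_rpow_of_nonpos (hp.trans_le hpx) hxq hα.le),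
      (Real.rpow_le_rpow_of_nonpos hp hpx hα.le).trans (le_max_left _ _)⟩

lemma lampInt_mono (f : ℝ → ℝ) (α : ℝ) : Monotone (lampInt f α) := fun _ _ hab =>
  lintegral_mono_set (Set.Ioc_subset_Ioc_right hab)

lemma lampInt_add (f : ℝ → ℝ) (α : ℝ) {a b : ℝ} (ha : 0 ≤ a) (hab : a ≤ b) :
    lampInt f α b = lampInt f α a + ∫⁻ r in Set.Ioc a b, (ENNReal.ofReal (f r)) ^ α := by
  unfold lampInt
  rw [← Set.Ioc_union_Ioc_eq_Ioc ha hab,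
    lintegral_union measurableSet_Ioc (Set.Ioc_disjoint_Ioc_of_le le_rfl)]

lemma piece_bounds (f : ℝ → ℝ) (α : ℝ) {a b m M : ℝ}
    (hm : ∀ r ∈ Set.Ioo a b, ENNReal.ofReal m ≤ (ENNReal.ofReal (f r)) ^ α)
    (hM : ∀ r ∈ Set.Ioo a b, (ENNReal.ofReal (f r)) ^ α ≤ ENNReal.ofReal M) :
    ENNReal.ofReal m * ENNReal.ofReal (b - a) ≤
        (∫⁻ r in Set.Ioc a b, (ENNReal.ofReal (f r)) ^ α) ∧
      (∫⁻ r in Set.Ioc a b, (ENNReal.ofReal (f r)) ^ α) ≤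
        ENNReal.ofReal M * ENNReal.ofReal (b - a) := by
  have hIoo : (∫⁻ r in Set.Ioc a b, (ENNReal.ofReal (f r)) ^ α) =
      ∫⁻ r in Set.Ioo a b, (ENNReal.ofReal (f r)) ^ α :=
    (setLIntegral_congr Ioo_ae_eq_Ioc).symm
  rw [hIoo]
  constructor
  · calc ENNReal.ofReal m * ENNReal.ofReal (b - a)
        = ∫⁻ _ in Set.Ioo a b, ENNReal.ofReal m := by
          rw [setLIntegral_const, Real.volume_Ioo]
    _ ≤ _ := setLIntegral_mono' measurableSet_Ioo hm
  · calc (∫⁻ r in Set.Ioo a b, (ENNReal.ofReal (f r)) ^ α)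
        ≤ ∫⁻ _ in Set.Ioo a b, ENNReal.ofReal M :=
          setLIntegral_mono' measurableSet_Ioo hM
    _ = ENNReal.ofReal M * ENNReal.ofReal (b - a) := by
          rw [setLIntegral_const, Real.volume_Ioo]

lemma tau_mono (f : ℝ → ℝ) (α : ℝ) : Monotone (lampTau f α) := by
  intro s t hst
  apply sInf_le_sInf
  apply Set.image_mono
  intro v hv
  exact ⟨hv.1, lt_of_le_of_lt (ENNReal.ofReal_le_ofReal hst) hv.2⟩

lemma tau_inverse (f : ℝ → ℝ) (α : ℝ)
    (hnonneg : ∀ t : ℝ, 0 ≤ t → 0 ≤ f t)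
    (hmono : ∀ s t : ℝ, 0 ≤ s → s ≤ t → f t ≤ f s)
    (hcadlag : Cadlag f) (hf0 : f 0 = 1)
    {s : ℝ} (hs : 0 ≤ s) (hsT : ENNReal.ofReal s < hit0 (lampG f α)) :
    lampTau f α s ≠ ∞ ∧ 0 < f ((lampTau f α s).toReal) ∧
      lampInt f α ((lampTau f α s).toReal) = ENNReal.ofReal s := by
  have hne : lampTau f α s ≠ ∞ := by
    intro h
    have hg : lampG f α s = 0 := by rw [lampG, if_pos h]
    exact absurd (sInf_le ⟨s, ⟨hs, hg⟩, rfl⟩ : hit0 (lampG f α) ≤ ENNReal.ofReal s)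
      (not_le.mpr hsT)
  set w := (lampTau f α s).toReal with hwdef
  have hw0 : 0 ≤ w := ENNReal.toReal_nonneg
  have hfw : 0 < f w := by
    rcases (hnonneg w hw0).lt_or_eq with h | h
    · exact h
    · exfalso
      have hg : lampG f α s = 0 := by rw [lampG, if_neg hne]; exact h.symm
      exact absurd (sInf_le ⟨s, ⟨hs, hg⟩, rfl⟩ : hit0 (lampG f α) ≤ ENNReal.ofReal s)
        (not_le.mpr hsT)
  have hconv : ENNReal.ofReal w = lampTau f α s := ENNReal.ofReal_toReal hne
  have claim_up : ∀ v : ℝ, w < v → ENNReal.ofReal s < lampInt f α v := by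
    intro v hv
    by_contra hcon
    push_neg at hcon
    have hle : ENNReal.ofReal v ≤ lampTau f α s := by
      apply le_sInf
      rintro x ⟨u, ⟨hu0, hu⟩, rfl⟩
      by_contra hx
      push_neg at hx
      have huv : u ≤ v := ((ENNReal.ofReal_lt_ofReal_iff (hw0.trans_lt hv)).mp hx).le
      exact absurd hu (not_lt.mpr ((lampInt_mono f α huv).trans hcon))
    rw [← hconv] at hle
    exact absurd ((ENNReal.ofReal_le_ofReal_iff hw0).mp hle) (not_le.mpr hv)
  have claim_down : ∀ v : ℝ, 0 ≤ v → v < w → lampInt f α v ≤ ENNReal.ofReal s := by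
    intro v hv0 hv
    by_contra hcon
    push_neg at hcon
    have hle : lampTau f α s ≤ ENNReal.ofReal v := sInf_le ⟨v, ⟨hv0, hcon⟩, rfl⟩
    rw [← hconv] at hle
    exact absurd ((ENNReal.ofReal_le_ofReal_iff hv0).mp hle) (not_le.mpr hv)
  refine ⟨hne, hfw, le_antisymm ?_ ?_⟩
  · -- lampInt f α w ≤ ofReal s
    rcases hw0.lt_or_eq with h0 | h0
    · -- 0 < w
      set M₁ := max ((f w) ^ α) 1 with hM₁def
      have hM₁0 : 0 < M₁ := lt_max_of_lt_right one_pos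
      have hbound : ∀ v ∈ Set.Ico 0 w,
          lampInt f α w ≤ ENNReal.ofReal s + ENNReal.ofReal M₁ * ENNReal.ofReal (w - v) := by
        rintro v ⟨hv0, hvw⟩
        rw [lampInt_add f α hv0 hvw.le]
        refine add_le_add (claim_down v hv0 hvw) ?_
        refine (piece_bounds f α (m := 0) (fun r hr => by simp) ?_).2
        intro r hr
        have hr0 : 0 < r := lt_of_le_of_lt hv0 hr.1
        have hfr1 : f r ≤ 1 := hf0 ▸ hmono 0 r le_rfl hr0.le
        have hfrw : f w ≤ f r := hmono r w hr0.le hr.2.le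
        have hfr0 : 0 < f r := hfw.trans_le hfrw
        rw [ENNReal.ofReal_rpow_of_pos hfr0]
        apply ENNReal.ofReal_le_ofReal
        have := (rpow_bound_aux (α := α) hfw hfrw hfr1).2
        rwa [Real.one_rpow] at this
      apply ENNReal.le_of_forall_pos_le_add
      intro ε hε _
      have hε' : (0:ℝ) < ε := hε
      set η := min (w / 2) ((ε : ℝ) / (M₁ + 1)) with hηdef
      have hη0 : 0 < η := lt_min (by linarith) (div_pos hε' (by positivity))
      have hηw : η ≤ w / 2 := min_le_left _ _
      have h1 := hbound (w - η) ⟨by linarith, by linarith⟩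
      rw [show w - (w - η) = η by ring] at h1
      refine h1.trans (add_le_add le_rfl ?_)
      rw [← ENNReal.ofReal_mul hM₁0.le]
      rw [show ((ε : ℝ≥0∞)) = ENNReal.ofReal (ε : ℝ) from (ENNReal.ofReal_coe_nnreal (p := ε)).symm]
      apply ENNReal.ofReal_le_ofReal
      have h2 : M₁ * η ≤ M₁ * ((ε : ℝ) / (M₁ + 1)) :=
        mul_le_mul_of_nonneg_left (min_le_right _ _) hM₁0.le
      refine h2.trans ?_
      rw [mul_div_assoc']
      rw [div_le_iff₀ (by positivity)]
      nlinarith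
    · -- w = 0
      have : lampInt f α w = 0 := by
        rw [lampInt, ← h0, Set.Ioc_self, Measure.restrict_empty, lintegral_zero_measure]
      rw [this]; exact zero_le
  · -- ofReal s ≤ lampInt f α w
    obtain ⟨δ, hδ0, hδ⟩ := Metric.tendsto_nhdsWithin_nhds.mp (hcadlag.1 w hw0) (f w / 2)
      (by positivity)
    set M₀ := max ((f w / 2) ^ α) ((f w) ^ α) with hM₀def
    have hM₀0 : 0 < M₀ := lt_max_of_lt_right (Real.rpow_pos_of_pos hfw α)
    have hbound2 : ∀ η : ℝ, 0 < η → η < δ →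
        ENNReal.ofReal s ≤ lampInt f α w + ENNReal.ofReal M₀ * ENNReal.ofReal η := by
      intro η hη0 hηδ
      have h1 : ENNReal.ofReal s ≤ lampInt f α (w + η) := (claim_up (w + η) (by linarith)).le
      rw [lampInt_add f α hw0 (by linarith : w ≤ w + η)] at h1
      refine h1.trans (add_le_add le_rfl ?_)
      have h2 : (∫⁻ r in Set.Ioc w (w + η), (ENNReal.ofReal (f r)) ^ α) ≤
          ENNReal.ofReal M₀ * ENNReal.ofReal (w + η - w) := by
        refine (piece_bounds f α (m := 0) (fun r hr => by simp) ?_).2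
        intro r hr
        have hrw : w ≤ r := hr.1.le
        have hdist : dist r w < δ := by
          rw [Real.dist_eq, abs_of_nonneg (by linarith : (0:ℝ) ≤ r - w)]
          have := hr.2; linarith
        have hclose := hδ hr.1.le hdist
        rw [Real.dist_eq] at hclose
        have hfr2 : f w / 2 < f r := by
          rcases abs_lt.mp hclose with ⟨h3, _⟩; linarith
        have hfrw : f r ≤ f w := hmono w r hw0 hrw
        have hfr0 : 0 < f r := lt_of_le_of_lt (by positivity) hfr2
        rw [ENNReal.ofReal_rpow_of_pos hfr0]
        exact ENNReal.ofReal_le_ofReal (rpow_bound_aux (by positivity) hfr2.le hfrw).2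
      rw [show w + η - w = η by ring] at h2
      exact h2
    apply ENNReal.le_of_forall_pos_le_add
    intro ε hε _
    have hε' : (0:ℝ) < ε := hε
    set η := min (δ / 2) ((ε : ℝ) / (M₀ + 1)) with hηdef
    have hη0 : 0 < η := lt_min (by linarith) (div_pos hε' (by positivity))
    have h1 := hbound2 η hη0 (lt_of_le_of_lt (min_le_left _ _) (by linarith))
    refine h1.trans (add_le_add le_rfl ?_)
    rw [← ENNReal.ofReal_mul hM₀0.le]
    rw [show ((ε : ℝ≥0∞)) = ENNReal.ofReal (ε : ℝ) from (ENNReal.ofReal_coe_nnreal (p := ε)).symm]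
    apply ENNReal.ofReal_le_ofReal
    have h2 : M₀ * η ≤ M₀ * ((ε : ℝ) / (M₀ + 1)) :=
      mul_le_mul_of_nonneg_left (min_le_right _ _) hM₀0.le
    refine h2.trans ?_
    rw [mul_div_assoc', div_le_iff₀ (by positivity)]
    nlinarith

theorem right_part
    (f : ℝ → ℝ) (α : ℝ)
    (hnonneg : ∀ t : ℝ, 0 ≤ t → 0 ≤ f t)
    (hmono : ∀ s t : ℝ, 0 ≤ s → s ≤ t → f t ≤ f s)
    (hcadlag : Cadlag f)
    (hf0 : f 0 = 1) :
    (∀ t : ℝ, 0 ≤ t → ENNReal.ofReal t < hit0 (lampG f α) →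
      HasDerivWithinAt (fun s : ℝ => (lampTau f α s).toReal)
        ((f ((lampTau f α t).toReal)) ^ (-α)) (Set.Ici t) t) := by
  intro t ht htT
  obtain ⟨hne, hfw, hAw⟩ := tau_inverse f α hnonneg hmono hcadlag hf0 ht htT
  set w := (lampTau f α t).toReal with hwdef
  have hw0 : 0 ≤ w := ENNReal.toReal_nonneg
  set c := f w with hcdef
  rw [hasDerivWithinAt_iff_tendsto_slope, Set.Ici_sdiff_left,
    Metric.tendsto_nhdsWithin_nhds]
  intro η hη
  -- continuity of x ↦ x^(-α) at c
  have hcont : ContinuousAt (fun x : ℝ => x ^ (-α)) c :=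
    Real.continuousAt_rpow_const c (-α) (Or.inl hfw.ne')
  obtain ⟨ρ₀, hρ₀, hρball⟩ := Metric.continuousAt_iff.mp hcont (η / 2) (by linarith)
  set ρ := min (ρ₀ / 2) (c / 2) with hρdef
  have hρ0 : 0 < ρ := lt_min (by linarith) (by linarith)
  have hρc : c / 2 ≤ c - ρ := by
    have := min_le_right (ρ₀ / 2) (c / 2); linarith
  have hcρ0 : 0 < c - ρ := lt_of_lt_of_le (by linarith) hρc
  have hclose : |(c - ρ) ^ (-α) - c ^ (-α)| < η / 2 := by
    have h1 : dist (c - ρ) c < ρ₀ := by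
      rw [Real.dist_eq, abs_of_nonpos (by linarith)]
      have := min_le_left (ρ₀ / 2) (c / 2); linarith
    have := hρball h1
    rwa [Real.dist_eq] at this
  -- right continuity of f at w
  obtain ⟨δ, hδ0, hδ⟩ := Metric.tendsto_nhdsWithin_nhds.mp (hcadlag.1 w hw0) ρ hρ0
  set m := min ((c - ρ) ^ α) (c ^ α) with hmdef
  set M := max ((c - ρ) ^ α) (c ^ α) with hMdef
  have hm0 : 0 < m := lt_min (Real.rpow_pos_of_pos hcρ0 α) (Real.rpow_pos_of_pos hfw α)
  have hM0 : 0 < M := lt_of_lt_of_le hm0 (min_le_max)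
  have hminv : m⁻¹ ≤ c ^ (-α) + η / 2 := by
    rcases min_cases ((c - ρ) ^ α) (c ^ α) with ⟨he, _⟩ | ⟨he, _⟩ <;> rw [hmdef, he]
    · rw [← Real.rpow_neg hcρ0.le]
      have := abs_lt.mp hclose; linarith [this.2]
    · rw [← Real.rpow_neg hfw.le]; linarith
  have hMinv : c ^ (-α) - η / 2 ≤ M⁻¹ := by
    rcases max_cases ((c - ρ) ^ α) (c ^ α) with ⟨he, _⟩ | ⟨he, _⟩ <;> rw [hMdef, he]
    · rw [← Real.rpow_neg hcρ0.le]
      have := abs_lt.mp hclose; linarith [this.1]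
    · rw [← Real.rpow_neg hfw.le]; linarith
  -- bound on integrand to the right of w
  have hbnd : ∀ r : ℝ, w < r → r < w + δ →
      ENNReal.ofReal m ≤ (ENNReal.ofReal (f r)) ^ α ∧
        (ENNReal.ofReal (f r)) ^ α ≤ ENNReal.ofReal M := by
    intro r hr1 hr2
    have hdist : dist r w < δ := by
      rw [Real.dist_eq, abs_of_nonneg (by linarith)]; linarith
    have hcl := hδ (le_of_lt hr1) hdist
    rw [Real.dist_eq] at hcl
    have hfrlb : c - ρ ≤ f r := by have := (abs_lt.mp hcl).1; linarith
    have hfrub : f r ≤ c := hmono w r hw0 hr1.le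
    have hfr0 : 0 < f r := lt_of_lt_of_le hcρ0 hfrlb
    have hb := rpow_bound_aux (α := α) hcρ0 hfrlb hfrub
    rw [ENNReal.ofReal_rpow_of_pos hfr0]
    exact ⟨ENNReal.ofReal_le_ofReal hb.1, ENNReal.ofReal_le_ofReal hb.2⟩
  -- neighborhood where hit0 condition persists
  obtain ⟨θ₁, hθ₁0, hθ₁⟩ : ∃ θ₁ > 0, ∀ s : ℝ, 0 ≤ s → s < t + θ₁ →
      ENNReal.ofReal s < hit0 (lampG f α) := by
    rcases eq_or_ne (hit0 (lampG f α)) ∞ with hT | hT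
    · exact ⟨1, one_pos, fun s _ _ => hT ▸ ENNReal.ofReal_lt_top⟩
    · have hlt : t < (hit0 (lampG f α)).toReal := by
        rw [← ENNReal.ofReal_toReal hT] at htT
        exact (ENNReal.ofReal_lt_ofReal_iff_of_nonneg ht).mp htT
      refine ⟨(hit0 (lampG f α)).toReal - t, by linarith, fun s hs0 hs => ?_⟩
      rw [← ENNReal.ofReal_toReal hT]
      exact (ENNReal.ofReal_lt_ofReal_iff_of_nonneg hs0).mpr (by linarith)
  refine ⟨min (m * (δ / 2)) θ₁, lt_min (by positivity) hθ₁0, ?_⟩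
  intro s hsmem hsd
  have hst : t < s := hsmem
  have hs0 : 0 ≤ s := le_trans ht hst.le
  rw [Real.dist_eq, abs_of_nonneg (by linarith)] at hsd
  have hsd1 : s - t < m * (δ / 2) := lt_of_lt_of_le hsd (min_le_left _ _)
  have hsd2 : s - t < θ₁ := lt_of_lt_of_le hsd (min_le_right _ _)
  have hsT' := hθ₁ s hs0 (by linarith)
  obtain ⟨hneS, _, hAws⟩ := tau_inverse f α hnonneg hmono hcadlag hf0 hs0 hsT'
  set ws := (lampTau f α s).toReal with hwsdef
  have hwws : w ≤ ws :=
    (ENNReal.toReal_le_toReal hne hneS).mpr (tau_mono f α hst.le)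
  -- the increment of the integral
  have hI : (∫⁻ r in Set.Ioc w ws, (ENNReal.ofReal (f r)) ^ α) = ENNReal.ofReal (s - t) := by
    have h1 := lampInt_add f α hw0 hwws
    rw [hAws, hAw] at h1
    have h2 : ENNReal.ofReal s = ENNReal.ofReal t + ENNReal.ofReal (s - t) := by
      rw [← ENNReal.ofReal_add ht (by linarith)]; ring_nf
    rw [h2] at h1
    exact ((ENNReal.add_right_inj ENNReal.ofReal_ne_top).mp h1).symm
  -- ws is close to w
  have hws2 : ws ≤ w + δ / 2 := by
    by_contra hcon
    push_neg at hcon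
    have h1 : ENNReal.ofReal m * ENNReal.ofReal (w + δ / 2 - w) ≤
        ∫⁻ r in Set.Ioc w (w + δ / 2), (ENNReal.ofReal (f r)) ^ α :=
      (piece_bounds f α (fun r hr => (hbnd r hr.1 (by have := hr.2; linarith)).1)
        (fun r hr => (hbnd r hr.1 (by have := hr.2; linarith)).2)).1
    have h2 : (∫⁻ r in Set.Ioc w (w + δ / 2), (ENNReal.ofReal (f r)) ^ α) ≤
        ∫⁻ r in Set.Ioc w ws, (ENNReal.ofReal (f r)) ^ α :=
      lintegral_mono_set (Set.Ioc_subset_Ioc_right hcon.le)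
    rw [hI] at h2
    have h3 : ENNReal.ofReal (m * (δ / 2)) ≤ ENNReal.ofReal (s - t) := by
      rw [ENNReal.ofReal_mul hm0.le]
      refine le_trans ?_ h2
      rw [show w + δ / 2 - w = δ / 2 by ring] at h1
      exact h1
    have := (ENNReal.ofReal_le_ofReal_iff (by linarith)).mp h3
    linarith
  -- two-sided bounds for the increment
  have hkey := piece_bounds f α (a := w) (b := ws) (m := m) (M := M)
    (fun r hr => (hbnd r hr.1 (by have := hr.2; linarith)).1)
    (fun r hr => (hbnd r hr.1 (by have := hr.2; linarith)).2)
  rw [hI] at hkey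
  have hlow : m * (ws - w) ≤ s - t := by
    have := hkey.1
    rw [← ENNReal.ofReal_mul hm0.le] at this
    exact (ENNReal.ofReal_le_ofReal_iff (by linarith)).mp this
  have hhigh : s - t ≤ M * (ws - w) := by
    have := hkey.2
    rw [← ENNReal.ofReal_mul hM0.le] at this
    exact (ENNReal.ofReal_le_ofReal_iff (mul_nonneg hM0.le (by linarith))).mp this
  -- conclude about the slope
  have hd : 0 < s - t := by linarith
  have hu0 : 0 ≤ ws - w := by linarith
  have hs1 : (ws - w) / (s - t) ≤ m⁻¹ := by
    rw [div_le_iff₀ hd]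
    calc ws - w = m⁻¹ * (m * (ws - w)) := by
          rw [← mul_assoc, inv_mul_cancel₀ hm0.ne', one_mul]
    _ ≤ m⁻¹ * (s - t) := mul_le_mul_of_nonneg_left hlow (by positivity)
  have hs2 : M⁻¹ ≤ (ws - w) / (s - t) := by
    rw [le_div_iff₀ hd]
    calc M⁻¹ * (s - t) ≤ M⁻¹ * (M * (ws - w)) :=
          mul_le_mul_of_nonneg_left hhigh (by positivity)
    _ = ws - w := by rw [← mul_assoc, inv_mul_cancel₀ hM0.ne', one_mul]
  have hslope : slope (fun s : ℝ => (lampTau f α s).toReal) t s = (ws - w) / (s - t) := by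
    rw [slope_def_field]
  rw [hslope, Real.dist_eq, abs_lt]
  constructor
  · linarith [hs2, hMinv]
  · linarith [hs1, hminv]

theorem left_part
    (f : ℝ → ℝ) (α : ℝ)
    (hnonneg : ∀ t : ℝ, 0 ≤ t → 0 ≤ f t)
    (hmono : ∀ s t : ℝ, 0 ≤ s → s ≤ t → f t ≤ f s)
    (hcadlag : Cadlag f)
    (hf0 : f 0 = 1) :
    (∀ t : ℝ, 0 < t → ENNReal.ofReal t < hit0 (lampG f α) →
      HasDerivWithinAt (fun s : ℝ => (lampTau f α s).toReal)
        ((Function.leftLim f ((lampTau f α t).toReal)) ^ (-α)) (Set.Iic t) t) := by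
  intro t ht htT
  obtain ⟨hne, hfw, hAw⟩ := tau_inverse f α hnonneg hmono hcadlag hf0 ht.le htT
  set w := (lampTau f α t).toReal with hwdef
  have hw0 : 0 ≤ w := ENNReal.toReal_nonneg
  have hwpos : 0 < w := by
    rcases hw0.lt_or_eq with h | h
    · exact h
    · exfalso
      have h1 : lampInt f α w = 0 := by
        rw [lampInt, ← h, Set.Ioc_self, Measure.restrict_empty, lintegral_zero_measure]
      rw [hAw] at h1
      exact absurd h1 (ENNReal.ofReal_pos.mpr ht).ne'
  -- the left limit
  obtain ⟨l, hl⟩ := hcadlag.2 w hwpos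
  have hLL : Function.leftLim f w = l :=
    leftLim_eq_of_tendsto hl
  have hcl : f w ≤ l := by
    refine ge_of_tendsto hl ?_
    filter_upwards [Ioo_mem_nhdsLT_of_mem (show w ∈ Set.Ioc (w/2) w from ⟨by linarith, le_rfl⟩)]
      with r hr
    exact hmono r w (by have := hr.1; linarith) hr.2.le
  have hl0 : 0 < l := lt_of_lt_of_le hfw hcl
  rw [hLL, hasDerivWithinAt_iff_tendsto_slope, Set.Iic_diff_right,
    Metric.tendsto_nhdsWithin_nhds]
  intro η hη
  have hcont : ContinuousAt (fun x : ℝ => x ^ (-α)) l :=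
    Real.continuousAt_rpow_const l (-α) (Or.inl hl0.ne')
  obtain ⟨ρ₀, hρ₀, hρball⟩ := Metric.continuousAt_iff.mp hcont (η / 2) (by linarith)
  set ρ := min (ρ₀ / 2) (l / 2) with hρdef
  have hρ0 : 0 < ρ := lt_min (by linarith) (by linarith)
  have hρl : l / 2 ≤ l - ρ := by
    have := min_le_right (ρ₀ / 2) (l / 2); linarith
  have hlρ0 : 0 < l - ρ := lt_of_lt_of_le (by linarith) hρl
  have hcloseP : |(l - ρ) ^ (-α) - l ^ (-α)| < η / 2 := by
    have h1 : dist (l - ρ) l < ρ₀ := by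
      rw [Real.dist_eq, abs_of_nonpos (by linarith)]
      have := min_le_left (ρ₀ / 2) (l / 2); linarith
    have := hρball h1; rwa [Real.dist_eq] at this
  have hcloseQ : |(l + ρ) ^ (-α) - l ^ (-α)| < η / 2 := by
    have h1 : dist (l + ρ) l < ρ₀ := by
      rw [Real.dist_eq, abs_of_nonneg (by linarith)]
      have := min_le_left (ρ₀ / 2) (l / 2); linarith
    have := hρball h1; rwa [Real.dist_eq] at this
  have hlρ0' : 0 < l + ρ := by linarith
  -- left limit control of f near w
  obtain ⟨δ, hδ0, hδ⟩ := Metric.tendsto_nhdsWithin_nhds.mp hl ρ hρ0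
  set m := min ((l - ρ) ^ α) ((l + ρ) ^ α) with hmdef
  set M := max ((l - ρ) ^ α) ((l + ρ) ^ α) with hMdef
  have hm0 : 0 < m := lt_min (Real.rpow_pos_of_pos hlρ0 α) (Real.rpow_pos_of_pos hlρ0' α)
  have hM0 : 0 < M := lt_of_lt_of_le hm0 (min_le_max)
  have hminv : m⁻¹ ≤ l ^ (-α) + η / 2 := by
    rcases min_cases ((l - ρ) ^ α) ((l + ρ) ^ α) with ⟨he, _⟩ | ⟨he, _⟩ <;> rw [hmdef, he]
    · rw [← Real.rpow_neg hlρ0.le]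
      have := abs_lt.mp hcloseP; linarith [this.2]
    · rw [← Real.rpow_neg hlρ0'.le]
      have := abs_lt.mp hcloseQ; linarith [this.2]
  have hMinv : l ^ (-α) - η / 2 ≤ M⁻¹ := by
    rcases max_cases ((l - ρ) ^ α) ((l + ρ) ^ α) with ⟨he, _⟩ | ⟨he, _⟩ <;> rw [hMdef, he]
    · rw [← Real.rpow_neg hlρ0.le]
      have := abs_lt.mp hcloseP; linarith [this.1]
    · rw [← Real.rpow_neg hlρ0'.le]
      have := abs_lt.mp hcloseQ; linarith [this.1]
  -- bound on integrand to the left of w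
  have hbnd : ∀ r : ℝ, w - δ < r → r < w →
      ENNReal.ofReal m ≤ (ENNReal.ofReal (f r)) ^ α ∧
        (ENNReal.ofReal (f r)) ^ α ≤ ENNReal.ofReal M := by
    intro r hr1 hr2
    have hdist : dist r w < δ := by
      rw [Real.dist_eq, abs_of_nonpos (by linarith)]; linarith
    have hcl2 := hδ hr2 hdist
    rw [Real.dist_eq] at hcl2
    have h1 := abs_lt.mp hcl2
    have hfrlb : l - ρ ≤ f r := by linarith [h1.1]
    have hfrub : f r ≤ l + ρ := by linarith [h1.2]
    have hfr0 : 0 < f r := lt_of_lt_of_le hlρ0 hfrlb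
    have hb := rpow_bound_aux (α := α) hlρ0 hfrlb hfrub
    rw [ENNReal.ofReal_rpow_of_pos hfr0]
    exact ⟨ENNReal.ofReal_le_ofReal hb.1, ENNReal.ofReal_le_ofReal hb.2⟩
  refine ⟨min (m * (δ / 2)) t, lt_min (by positivity) ht, ?_⟩
  intro s hsmem hsd
  have hst : s < t := hsmem
  rw [Real.dist_eq, abs_of_nonpos (by linarith)] at hsd
  have hsd1 : t - s < m * (δ / 2) := by
    have := lt_of_lt_of_le hsd (min_le_left _ _); linarith
  have hs0 : 0 ≤ s := by
    have := lt_of_lt_of_le hsd (min_le_right _ _); linarith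
  have hsT' : ENNReal.ofReal s < hit0 (lampG f α) :=
    lt_of_le_of_lt (ENNReal.ofReal_le_ofReal hst.le) htT
  obtain ⟨hneS, _, hAws⟩ := tau_inverse f α hnonneg hmono hcadlag hf0 hs0 hsT'
  set ws := (lampTau f α s).toReal with hwsdef
  have hws0 : 0 ≤ ws := ENNReal.toReal_nonneg
  have hwws : ws ≤ w :=
    (ENNReal.toReal_le_toReal hneS hne).mpr (tau_mono f α hst.le)
  have hI : (∫⁻ r in Set.Ioc ws w, (ENNReal.ofReal (f r)) ^ α) = ENNReal.ofReal (t - s) := by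
    have h1 := lampInt_add f α hws0 hwws
    rw [hAws, hAw] at h1
    have h2 : ENNReal.ofReal t = ENNReal.ofReal s + ENNReal.ofReal (t - s) := by
      rw [← ENNReal.ofReal_add hs0 (by linarith)]; ring_nf
    rw [h2] at h1
    exact ((ENNReal.add_right_inj ENNReal.ofReal_ne_top).mp h1).symm
  -- ws is close to w
  have hws2 : w - δ / 2 ≤ ws := by
    by_contra hcon
    push_neg at hcon
    have h1 : ENNReal.ofReal m * ENNReal.ofReal (w - (w - δ / 2)) ≤
        ∫⁻ r in Set.Ioc (w - δ / 2) w, (ENNReal.ofReal (f r)) ^ α :=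
      (piece_bounds f α (fun r hr => (hbnd r (by have := hr.1; linarith) hr.2).1)
        (fun r hr => (hbnd r (by have := hr.1; linarith) hr.2).2)).1
    have h2 : (∫⁻ r in Set.Ioc (w - δ / 2) w, (ENNReal.ofReal (f r)) ^ α) ≤
        ∫⁻ r in Set.Ioc ws w, (ENNReal.ofReal (f r)) ^ α :=
      lintegral_mono_set (Set.Ioc_subset_Ioc_left hcon.le)
    rw [hI] at h2
    have h3 : ENNReal.ofReal (m * (δ / 2)) ≤ ENNReal.ofReal (t - s) := by
      rw [ENNReal.ofReal_mul hm0.le]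
      refine le_trans ?_ h2
      rw [show w - (w - δ / 2) = δ / 2 by ring] at h1
      exact h1
    have := (ENNReal.ofReal_le_ofReal_iff (by linarith)).mp h3
    linarith
  have hkey := piece_bounds f α (a := ws) (b := w) (m := m) (M := M)
    (fun r hr => (hbnd r (by have := hr.1; linarith) hr.2).1)
    (fun r hr => (hbnd r (by have := hr.1; linarith) hr.2).2)
  rw [hI] at hkey
  have hlow : m * (w - ws) ≤ t - s := by
    have := hkey.1
    rw [← ENNReal.ofReal_mul hm0.le] at this
    exact (ENNReal.ofReal_le_ofReal_iff (by linarith)).mp this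
  have hhigh : t - s ≤ M * (w - ws) := by
    have := hkey.2
    rw [← ENNReal.ofReal_mul hM0.le] at this
    exact (ENNReal.ofReal_le_ofReal_iff (mul_nonneg hM0.le (by linarith))).mp this
  have hd : 0 < t - s := by linarith
  have hu0 : 0 ≤ w - ws := by linarith
  have hs1 : (w - ws) / (t - s) ≤ m⁻¹ := by
    rw [div_le_iff₀ hd]
    calc w - ws = m⁻¹ * (m * (w - ws)) := by
          rw [← mul_assoc, inv_mul_cancel₀ hm0.ne', one_mul]
    _ ≤ m⁻¹ * (t - s) := mul_le_mul_of_nonneg_left hlow (by positivity)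
  have hs2 : M⁻¹ ≤ (w - ws) / (t - s) := by
    rw [le_div_iff₀ hd]
    calc M⁻¹ * (t - s) ≤ M⁻¹ * (M * (w - ws)) :=
          mul_le_mul_of_nonneg_left hhigh (by positivity)
    _ = w - ws := by rw [← mul_assoc, inv_mul_cancel₀ hM0.ne', one_mul]
  have hslope : slope (fun s : ℝ => (lampTau f α s).toReal) t s = (w - ws) / (t - s) := by
    rw [slope_def_field]
    rw [show (lampTau f α s).toReal - (lampTau f α t).toReal = -(w - ws) from by
      rw [← hwsdef, ← hwdef]; ring]
    rw [show s - t = -(t - s) by ring, neg_div_neg_eq]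
  rw [hslope, Real.dist_eq, abs_lt]
  constructor
  · linarith [hs2, hMinv]
  · linarith [hs1, hminv]


/-- one-sided differentiability of the Lamperti time change.
On `[0, T₀(g))` the right derivative of (the real-valued version of) `τ` at `t`
is `f(τ(t))^(-α)`, and on `(0, T₀(g))` its left derivative is `f(τ(t)-)^(-α)`. -/
theorem lamperti_time_change_one_sided_derivatives
    (f : ℝ → ℝ) (α : ℝ)
    (hnonneg : ∀ t : ℝ, 0 ≤ t → 0 ≤ f t)
    (hmono : ∀ s t : ℝ, 0 ≤ s → s ≤ t → f t ≤ f s)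
    (hcadlag : Cadlag f)
    (hf0 : f 0 = 1) :
    (∀ t : ℝ, 0 ≤ t → ENNReal.ofReal t < hit0 (lampG f α) →
      HasDerivWithinAt (fun s : ℝ => (lampTau f α s).toReal)
        ((f ((lampTau f α t).toReal)) ^ (-α)) (Set.Ici t) t) ∧
    (∀ t : ℝ, 0 < t → ENNReal.ofReal t < hit0 (lampG f α) →
      HasDerivWithinAt (fun s : ℝ => (lampTau f α s).toReal)
        ((Function.leftLim f ((lampTau f α t).toReal)) ^ (-α)) (Set.Iic t) t) :=
  ⟨right_part f α hnonneg hmono hcadlag hf0, left_part f α hnonneg hmono hcadlag hf0⟩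
end

section
/- Let f : [0,∞) → [0,∞) be non-increasing, càdlàg, with f(0) = 1, let α ∈ ℝ, let τ be the Lamperti time-change associated to (f, α) and g = f∘τ its Lamperti transform. Let ρ be the Lamperti time-change associated to (g, −α), i.e. ρ(s) = inf{v ≥ 0 : ∫_0^v g(r)^{−α} dr > s}. Then ρ is the inverse bijection of τ: ρ(τ(t)) = t for every t ∈ [0, T_0(g)), and τ(ρ(s)) = s for every s ∈ [0, T_0(f)). -/
set_option linter.unusedSectionVars false
set_option linter.unusedVariables false
open MeasureTheory Filter Set
open scoped ENNReal NNReal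

namespace LampAux

/-! ### Generic helper lemmas -/

lemma sInf_ofReal_Ioi {t : ℝ} (ht : 0 ≤ t) :
    sInf ((fun v : ℝ => ENNReal.ofReal v) '' Ioi t) = ENNReal.ofReal t := by
  apply le_antisymm
  · refine ENNReal.le_of_forall_pos_le_add fun ε hε _ => ?_
    calc sInf ((fun v : ℝ => ENNReal.ofReal v) '' Ioi t) ≤ ENNReal.ofReal (t + ε) :=
          sInf_le ⟨t + ε, by simp [Set.mem_Ioi]; positivity, rfl⟩
      _ ≤ ENNReal.ofReal t + ε := by
          rw [ENNReal.ofReal_add ht (by positivity)]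
          simp
  · refine le_sInf fun b hb => ?_
    obtain ⟨v, hv, rfl⟩ := hb
    exact ENNReal.ofReal_le_ofReal (le_of_lt hv)


lemma sInf_ofReal_upper {E : Set ℝ} {u : ℝ} (hu : 0 ≤ u) (hsub : E ⊆ Ici u)
    (hmem : ∀ v : ℝ, u < v → v ∈ E) :
    sInf ((fun v : ℝ => ENNReal.ofReal v) '' E) = ENNReal.ofReal u := by
  apply le_antisymm
  · refine ENNReal.le_of_forall_pos_le_add fun ε hε _ => ?_
    calc sInf ((fun v : ℝ => ENNReal.ofReal v) '' E) ≤ ENNReal.ofReal (u + ε) :=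
          sInf_le ⟨u + ε, hmem _ (lt_add_of_pos_right u (by exact_mod_cast hε)), rfl⟩
      _ ≤ ENNReal.ofReal u + ε := by
          rw [ENNReal.ofReal_add hu (by positivity)]
          simp
  · refine le_sInf fun b hb => ?_
    obtain ⟨v, hv, rfl⟩ := hb
    exact ENNReal.ofReal_le_ofReal (hsub hv)

lemma rpow_anti {x y : ℝ≥0∞} {α : ℝ} (h : x ≤ y) (hα : α ≤ 0) : y ^ α ≤ x ^ α := by
  have h1 : (y ^ (-α))⁻¹ ≤ (x ^ (-α))⁻¹ :=
    ENNReal.inv_le_inv.2 (ENNReal.rpow_le_rpow h (neg_nonneg.2 hα))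
  rwa [← ENNReal.rpow_neg, ← ENNReal.rpow_neg, neg_neg] at h1

lemma rpow_pos_lt_top {x : ℝ≥0∞} {α : ℝ} (h0 : x ≠ 0) (ht : x ≠ ⊤) :
    0 < x ^ α ∧ x ^ α < ⊤ := by
  constructor
  · exact ENNReal.rpow_pos (pos_iff_ne_zero.2 h0) ht
  · rw [lt_top_iff_ne_top]
    intro hc
    rcases ENNReal.rpow_eq_top_iff.1 hc with ⟨h, _⟩ | ⟨h, _⟩
    exacts [h0 h, ht h]

/-! ### The density and its measure -/

noncomputable def D (f : ℝ → ℝ) (α : ℝ) : ℝ → ℝ≥0∞ :=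
  fun r => (ENNReal.ofReal (f (max r 0))) ^ α

noncomputable def nu (f : ℝ → ℝ) (α : ℝ) : Measure ℝ :=
  volume.withDensity (D f α)

section

variable {f : ℝ → ℝ} {α : ℝ}
variable (hnonneg : ∀ t : ℝ, 0 ≤ t → 0 ≤ f t)
variable (hmono : ∀ s t : ℝ, 0 ≤ s → s ≤ t → f t ≤ f s)
variable (hcadlag : Cadlag f) (hf0 : f 0 = 1)

include hmono in
lemma measD : Measurable (D f α) := by
  have h1 : Antitone fun r : ℝ => ENNReal.ofReal (f (max r 0)) := by
    intro a b hab
    exact ENNReal.ofReal_le_ofReal (hmono _ _ (le_max_right a 0) (max_le_max hab le_rfl))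
  exact h1.measurable.pow_const α

lemma nu_Ioc (u : ℝ) : lampInt f α u = nu f α (Ioc 0 u) := by
  rw [nu, withDensity_apply _ measurableSet_Ioc, lampInt]
  refine setLIntegral_congr_fun measurableSet_Ioc (fun r hr => ?_)
  rw [D, max_eq_left (le_of_lt hr.1)]

lemma measU (T' : ℝ≥0∞) : MeasurableSet {r : ℝ | 0 ≤ r ∧ (ENNReal.ofReal r) < T'} := by
  have : {r : ℝ | 0 ≤ r ∧ (ENNReal.ofReal r) < T'} =
      Ici (0:ℝ) ∩ (fun r : ℝ => ENNReal.ofReal r) ⁻¹' (Iio T') := rfl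
  rw [this]
  exact measurableSet_Ici.inter (ENNReal.measurable_ofReal measurableSet_Iio)

lemma nu_U (T' : ℝ≥0∞) :
    lampIntTo f α T' = nu f α {r : ℝ | 0 ≤ r ∧ (ENNReal.ofReal r) < T'} := by
  rw [nu, withDensity_apply _ (measU T'), lampIntTo]
  refine setLIntegral_congr_fun (measU T') (fun r hr => ?_)
  rw [D, max_eq_left hr.1]

/-! ### Facts about `f` and its hitting time -/

include hnonneg in
lemma fpos {u : ℝ} (hu : 0 ≤ u)
    (hlt : ENNReal.ofReal u < hit0 f) : 0 < f u := by
  rcases lt_or_eq_of_le (hnonneg u hu) with h | h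
  · exact h
  · exfalso
    have : hit0 f ≤ ENNReal.ofReal u := sInf_le ⟨u, ⟨hu, h.symm⟩, rfl⟩
    exact absurd hlt (not_lt.2 this)

include hnonneg hmono hcadlag in
lemma fzero {u : ℝ} (hu : 0 ≤ u) (hle : hit0 f ≤ ENNReal.ofReal u) :
    f u = 0 := by
  have hv0 : ∀ v : ℝ, u < v → f v = 0 := by
    intro v hv
    have hvn : 0 ≤ v := le_trans hu hv.le
    have : ∃ z : ℝ, (0 ≤ z ∧ f z = 0) ∧ z ≤ v := by
      by_contra hcon
      push_neg at hcon
      have h1 : ENNReal.ofReal v ≤ hit0 f := by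
        refine le_sInf fun b hb => ?_
        obtain ⟨z, hz, rfl⟩ := hb
        exact ENNReal.ofReal_le_ofReal (hcon z hz).le
      have : ENNReal.ofReal v ≤ ENNReal.ofReal u := le_trans h1 hle
      rw [ENNReal.ofReal_le_ofReal_iff hu] at this
      exact absurd this (not_le.2 hv)
    obtain ⟨z, ⟨hz0, hzf⟩, hzv⟩ := this
    exact le_antisymm (hzf ▸ hmono z v hz0 hzv) (hnonneg v hvn)
  have h1 : Tendsto f (nhdsWithin u (Ioi u)) (nhds (f u)) :=
    (hcadlag.1 u hu).mono_left (nhdsWithin_mono u Ioi_subset_Ici_self)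
  have h2 : Tendsto f (nhdsWithin u (Ioi u)) (nhds 0) := by
    refine tendsto_const_nhds.congr' ?_
    filter_upwards [self_mem_nhdsWithin] with x hx
    exact (hv0 x hx).symm
  exact tendsto_nhds_unique h1 h2

include hnonneg hmono hcadlag hf0 in
lemma hit0_pos : 0 < hit0 f := by
  by_contra h
  push_neg at h
  have h0 : hit0 f ≤ ENNReal.ofReal 0 := by simpa using h
  have := fzero hnonneg hmono hcadlag le_rfl h0
  rw [hf0] at this; norm_num at this

include hmono hf0 in
lemma f_le_one {u : ℝ} (hu : 0 ≤ u) : f u ≤ 1 := hf0 ▸ hmono 0 u le_rfl hu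

/-! ### Interval measure lemmas -/

lemma nu_split {u v : ℝ} (h0 : 0 ≤ u) (huv : u ≤ v) :
    nu f α (Ioc 0 v) = nu f α (Ioc 0 u) + nu f α (Ioc u v) := by
  rw [← Set.Ioc_union_Ioc_eq_Ioc h0 huv]
  exact measure_union (Set.Ioc_disjoint_Ioc_of_le le_rfl) measurableSet_Ioc

include hnonneg hmono hf0 in
lemma D_le_on {u r : ℝ} (hr : 0 < r) (hru : r ≤ u) (hfu : 0 < f u) :
    D f α r ≤ max 1 ((ENNReal.ofReal (f u)) ^ α) := by
  rw [D, max_eq_left hr.le]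
  rcases le_or_gt 0 α with hα | hα
  · refine le_max_of_le_left ?_
    calc (ENNReal.ofReal (f r)) ^ α ≤ (ENNReal.ofReal 1) ^ α :=
          ENNReal.rpow_le_rpow (ENNReal.ofReal_le_ofReal (f_le_one hmono hf0 hr.le)) hα
      _ = 1 := by rw [ENNReal.ofReal_one, ENNReal.one_rpow]
  · exact le_max_of_le_right (rpow_anti (ENNReal.ofReal_le_ofReal (hmono r u hr.le hru)) hα.le)

include hnonneg hmono hf0 in
lemma A_fin {u : ℝ} (hu : 0 ≤ u) (hlt : ENNReal.ofReal u < hit0 f) :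
    nu f α (Ioc 0 u) < ⊤ := by
  have hfu : 0 < f u := fpos hnonneg hu hlt
  set C : ℝ≥0∞ := max 1 ((ENNReal.ofReal (f u)) ^ α) with hC
  have hCt : C < ⊤ := by
    refine max_lt ENNReal.one_lt_top ?_
    exact (rpow_pos_lt_top (by simp [ENNReal.ofReal_pos.2 hfu, ne_of_gt]) ENNReal.ofReal_ne_top).2
  calc nu f α (Ioc 0 u) = ∫⁻ r in Ioc (0:ℝ) u, D f α r := withDensity_apply _ measurableSet_Ioc
    _ ≤ ∫⁻ _ in Ioc (0:ℝ) u, C := by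
        refine setLIntegral_mono' measurableSet_Ioc fun r hrr => ?_
        exact D_le_on hnonneg hmono hf0 hrr.1 hrr.2 hfu
    _ = C * volume (Ioc (0:ℝ) u) := setLIntegral_const _ _
    _ < ⊤ := ENNReal.mul_lt_top hCt (by rw [Real.volume_Ioc]; exact ENNReal.ofReal_lt_top)

include hnonneg hmono hf0 in
lemma D_ge_on {u w r : ℝ} (hu : 0 ≤ u) (hur : u < r) (hrw : r ≤ w) :
    min ((ENNReal.ofReal (f w)) ^ α) ((ENNReal.ofReal (f u)) ^ α) ≤ D f α r := by
  rw [D, max_eq_left (le_trans hu hur.le)]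
  rcases le_or_gt 0 α with hα | hα
  · exact le_trans (min_le_left _ _)
      (ENNReal.rpow_le_rpow (ENNReal.ofReal_le_ofReal (hmono r w (le_trans hu hur.le) hrw)) hα)
  · exact le_trans (min_le_right _ _)
      (rpow_anti (ENNReal.ofReal_le_ofReal (hmono u r hu hur.le)) hα.le)

include hnonneg hmono hf0 in
lemma A_strict {u v : ℝ} (hu : 0 ≤ u) (huv : u < v) (hlt : ENNReal.ofReal u < hit0 f) :
    nu f α (Ioc 0 u) < nu f α (Ioc 0 v) := by
  -- find w with u < w ≤ v and ofReal w < hit0 f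
  obtain ⟨w, huw, hwv, hw⟩ : ∃ w : ℝ, u < w ∧ w ≤ v ∧ ENNReal.ofReal w < hit0 f := by
    rcases lt_or_ge (ENNReal.ofReal v) (hit0 f) with h | h
    · exact ⟨v, huv, le_rfl, h⟩
    · have hT : hit0 f ≠ ⊤ := by
        intro hc; rw [hc] at h; exact (not_lt.2 le_top) (lt_of_le_of_lt h (lt_top_iff_ne_top.2 ENNReal.ofReal_ne_top))
      have h1 : u < (hit0 f).toReal := (ENNReal.ofReal_lt_iff_lt_toReal hu hT).1 hlt
      have h2 : (hit0 f).toReal ≤ v := by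
        have := ENNReal.toReal_mono ENNReal.ofReal_ne_top h
        rwa [ENNReal.toReal_ofReal (le_trans hu huv.le)] at this
      refine ⟨(u + (hit0 f).toReal) / 2, by linarith, by linarith, ?_⟩
      rw [ENNReal.ofReal_lt_iff_lt_toReal (by linarith) hT]
      linarith
  have hw0 : 0 ≤ w := le_trans hu huw.le
  have hfw : 0 < f w := fpos hnonneg hw0 hw
  have hfu : 0 < f u := fpos hnonneg hu hlt
  set c : ℝ≥0∞ := min ((ENNReal.ofReal (f w)) ^ α) ((ENNReal.ofReal (f u)) ^ α) with hc
  have hcpos : 0 < c := by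
    refine lt_min ?_ ?_
    · exact (rpow_pos_lt_top (ne_of_gt (ENNReal.ofReal_pos.2 hfw)) ENNReal.ofReal_ne_top).1
    · exact (rpow_pos_lt_top (ne_of_gt (ENNReal.ofReal_pos.2 hfu)) ENNReal.ofReal_ne_top).1
  have hlow : 0 < nu f α (Ioc u w) := by
    have : c * volume (Ioc u w) ≤ nu f α (Ioc u w) := by
      calc c * volume (Ioc u w) = ∫⁻ _ in Ioc u w, c := (setLIntegral_const _ _).symm
        _ ≤ ∫⁻ r in Ioc u w, D f α r := by
            refine setLIntegral_mono' measurableSet_Ioc fun r hrr => ?_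
            exact D_ge_on hnonneg hmono hf0 hu hrr.1 hrr.2
        _ = nu f α (Ioc u w) := (withDensity_apply _ measurableSet_Ioc).symm
    refine lt_of_lt_of_le ?_ this
    refine ENNReal.mul_pos (ne_of_gt hcpos) ?_
    rw [Real.volume_Ioc]
    exact ne_of_gt (ENNReal.ofReal_pos.2 (by linarith))
  calc nu f α (Ioc 0 u) < nu f α (Ioc 0 u) + nu f α (Ioc u w) :=
        ENNReal.lt_add_right (ne_of_lt (A_fin hnonneg hmono hf0 hu hlt)) (ne_of_gt hlow)
    _ ≤ nu f α (Ioc 0 u) + nu f α (Ioc u v) :=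
        add_le_add_right (measure_mono (Set.Ioc_subset_Ioc le_rfl hwv)) _
    _ = nu f α (Ioc 0 v) := (nu_split hu (le_trans huw.le hwv)).symm

lemma nu_singleton (x : ℝ) : nu f α {x} = 0 := by
  rw [nu, withDensity_apply _ (measurableSet_singleton x),
    Measure.restrict_eq_zero.2 (by simp), lintegral_zero_measure]

lemma A_left {r : ℝ} {c : ℝ≥0∞} (hr : 0 ≤ r)
    (h : ∀ v : ℝ, 0 ≤ v → v < r → nu f α (Ioc 0 v) ≤ c) :
    nu f α (Ioc 0 r) ≤ c := by
  rcases eq_or_lt_of_le hr with h0 | h0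
  · simp [← h0]
  -- Ioc 0 r ≤ Ioo 0 r + {r}
  have hIoo : nu f α (Ioc 0 r) ≤ nu f α (Ioo 0 r) := by
    calc nu f α (Ioc 0 r) = nu f α (Ioo 0 r ∪ {r}) := by rw [Set.Ioo_union_right h0]
      _ ≤ nu f α (Ioo 0 r) + nu f α {r} := measure_union_le _ _
      _ = nu f α (Ioo 0 r) := by rw [nu_singleton, add_zero]
  refine le_trans hIoo ?_
  have hun : Ioo (0:ℝ) r = ⋃ n : ℕ, Ioc 0 (r - r / (n + 2)) := by
    ext x
    simp only [Set.mem_Ioo, Set.mem_iUnion, Set.mem_Ioc]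
    constructor
    · rintro ⟨hx0, hxr⟩
      obtain ⟨n, hn⟩ := exists_nat_ge (r / (r - x))
      refine ⟨n, hx0, ?_⟩
      have hrx : 0 < r - x := by linarith
      rw [le_sub_comm]
      rw [div_le_iff₀ (by positivity)] at hn ⊢
      nlinarith
    · rintro ⟨n, hx0, hxn⟩
      have : r / (n + 2) > 0 := by positivity
      exact ⟨hx0, by linarith⟩
  have hmom : Monotone fun n : ℕ => Ioc (0:ℝ) (r - r / (n + 2)) := by
    intro m n hmn
    refine Set.Ioc_subset_Ioc le_rfl ?_
    have h1 : ((m:ℝ) + 2) ≤ (n:ℝ) + 2 := by exact_mod_cast by omega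
    have h2 : r / ((n:ℝ) + 2) ≤ r / ((m:ℝ) + 2) := by
      gcongr <;> first | exact h0.le | positivity | linarith
    linarith
  rw [hun, hmom.directed_le.measure_iUnion]
  refine iSup_le fun n => ?_
  have h2 : (0:ℝ) < (n:ℝ) + 2 := by positivity
  have hle : r / (n + 2) ≤ r := by
    rw [div_le_iff₀ h2]; nlinarith
  have hlt : 0 < r / (n + 2) := by positivity
  exact h _ (by linarith) (by linarith)

lemma A_right {r w : ℝ} {c : ℝ≥0∞} (hr : 0 ≤ r) (hrw : r < w)
    (hfin : nu f α (Ioc 0 w) ≠ ⊤)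
    (h : ∀ v : ℝ, r < v → v ≤ w → c ≤ nu f α (Ioc 0 v)) :
    c ≤ nu f α (Ioc 0 r) := by
  have hun : Ioc (0:ℝ) r = ⋂ n : ℕ, Ioc 0 (r + (w - r) / (n + 1)) := by
    ext x
    simp only [Set.mem_Ioc, Set.mem_iInter]
    constructor
    · rintro ⟨hx0, hxr⟩ n
      have : 0 < (w - r) / ((n:ℝ) + 1) := by
        have : (0:ℝ) < w - r := by linarith
        positivity
      exact ⟨hx0, by linarith⟩
    · intro hx
      refine ⟨(hx 0).1, ?_⟩
      by_contra hcon
      push_neg at hcon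
      obtain ⟨n, hn⟩ := exists_nat_ge ((w - r) / (x - r))
      have hxr : 0 < x - r := by linarith
      have h2 : (w - r) / ((n:ℝ) + 1) < x - r := by
        rw [div_lt_iff₀ (by positivity)]
        rw [div_le_iff₀ (by positivity)] at hn
        nlinarith
      have := (hx n).2
      linarith
  have hant : Antitone fun n : ℕ => Ioc (0:ℝ) (r + (w - r) / (n + 1)) := by
    intro m n hmn
    refine Set.Ioc_subset_Ioc le_rfl ?_
    have h1 : ((m:ℝ) + 1) ≤ (n:ℝ) + 1 := by exact_mod_cast by omega
    have h2 : (w - r) / ((n:ℝ) + 1) ≤ (w - r) / ((m:ℝ) + 1) := by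
      gcongr <;> first | positivity | linarith
    linarith
  rw [hun, hant.directed_ge.measure_iInter (fun n => measurableSet_Ioc.nullMeasurableSet) ?fin]
  case fin =>
    refine ⟨0, ?_⟩
    have he : r + (w - r) / ((0:ℕ) + 1) = w := by norm_num
    rw [he]; exact hfin
  refine le_iInf fun n => ?_
  have hpos : 0 < (w - r) / ((n:ℝ) + 1) := by
    have : (0:ℝ) < w - r := by linarith
    positivity
  have hle : (w - r) / ((n:ℝ) + 1) ≤ w - r := by
    rw [div_le_iff₀ (by positivity)]
    nlinarith
  exact h _ (by linarith) (by linarith)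

/-! ### The region where `f` is positive -/

noncomputable def U (f : ℝ → ℝ) : Set ℝ := {r : ℝ | 0 ≤ r ∧ ENNReal.ofReal r < hit0 f}

lemma measUf {f : ℝ → ℝ} : MeasurableSet (U f) := measU (hit0 f)

include hnonneg hmono hcadlag hf0 in
lemma exists_mid {u : ℝ} (hu : 0 ≤ u) (hlt : ENNReal.ofReal u < hit0 f) (v : ℝ) (huv : u < v) :
    ∃ w : ℝ, u < w ∧ w ≤ v ∧ ENNReal.ofReal w < hit0 f := by
  rcases lt_or_ge (ENNReal.ofReal v) (hit0 f) with h | h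
  · exact ⟨v, huv, le_rfl, h⟩
  · have hT : hit0 f ≠ ⊤ := by
      intro hc; rw [hc] at h
      exact (not_lt.2 h) (lt_top_iff_ne_top.2 ENNReal.ofReal_ne_top)
    have h1 : u < (hit0 f).toReal := (ENNReal.ofReal_lt_iff_lt_toReal hu hT).1 hlt
    have h2 : (hit0 f).toReal ≤ v := by
      have := ENNReal.toReal_mono ENNReal.ofReal_ne_top h
      rwa [ENNReal.toReal_ofReal (le_trans hu huv.le)] at this
    refine ⟨(u + (hit0 f).toReal) / 2, by linarith, by linarith, ?_⟩
    rw [ENNReal.ofReal_lt_iff_lt_toReal (by linarith) hT]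
    linarith

lemma A_le_S {w : ℝ} (hw : 0 ≤ w) (hlt : ENNReal.ofReal w < hit0 f) :
    nu f α (Ioc 0 w) ≤ nu f α (U f) := by
  refine measure_mono fun r hr => ?_
  exact ⟨hr.1.le, lt_of_le_of_lt (ENNReal.ofReal_le_ofReal hr.2) hlt⟩

include hnonneg hmono hcadlag hf0 in
lemma exists_lt_A {t : ℝ≥0∞} (h : t < nu f α (U f)) :
    ∃ w : ℝ, 0 ≤ w ∧ ENNReal.ofReal w < hit0 f ∧ t < nu f α (Ioc 0 w) := by
  have hsing : nu f α (U f) ≤ nu f α (U f \ {0}) := by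
    calc nu f α (U f) ≤ nu f α ((U f \ {0}) ∪ {0}) := measure_mono (by
          intro x hx; by_cases hx0 : x = 0
          · exact Or.inr (by simp [hx0])
          · exact Or.inl ⟨hx, hx0⟩)
      _ ≤ nu f α (U f \ {0}) + nu f α {0} := measure_union_le _ _
      _ = nu f α (U f \ {0}) := by rw [nu_singleton, add_zero]
  have h' : t < nu f α (U f \ {0}) := lt_of_lt_of_le h hsing
  rcases eq_or_ne (hit0 f) ⊤ with hT | hT
  · -- U f \ {0} = Ioi 0 = ⋃ Ioc 0 (n+1)
    have hU : U f \ {0} = ⋃ n : ℕ, Ioc (0:ℝ) (n + 1) := by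
      ext x
      simp only [U, hT, Set.mem_diff, Set.mem_setOf_eq, Set.mem_singleton_iff,
        Set.mem_iUnion, Set.mem_Ioc]
      constructor
      · rintro ⟨⟨hx0, _⟩, hxne⟩
        obtain ⟨n, hn⟩ := exists_nat_gt x
        exact ⟨n, lt_of_le_of_ne hx0 (Ne.symm hxne), by linarith⟩
      · rintro ⟨n, hn0, _⟩
        exact ⟨⟨hn0.le, lt_top_iff_ne_top.2 ENNReal.ofReal_ne_top⟩, ne_of_gt hn0⟩
    rw [hU] at h'
    have hmom : Monotone fun n : ℕ => Ioc (0:ℝ) (n + 1) := by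
      intro m n hmn
      refine Set.Ioc_subset_Ioc le_rfl ?_
      have : (m:ℝ) ≤ n := by exact_mod_cast hmn
      linarith
    rw [hmom.directed_le.measure_iUnion] at h'
    obtain ⟨n, hn⟩ := lt_iSup_iff.1 h'
    exact ⟨n + 1, by positivity, by rw [hT]; exact lt_top_iff_ne_top.2 ENNReal.ofReal_ne_top, hn⟩
  · set T0 := (hit0 f).toReal with hT0
    have hT0pos : 0 < T0 := ENNReal.toReal_pos (ne_of_gt (hit0_pos hnonneg hmono hcadlag hf0)) hT
    have hU : U f \ {0} = Ioo 0 T0 := by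
      ext x
      simp only [U, Set.mem_diff, Set.mem_setOf_eq, Set.mem_singleton_iff, Set.mem_Ioo]
      constructor
      · rintro ⟨⟨hx0, hxT⟩, hxne⟩
        exact ⟨lt_of_le_of_ne hx0 (Ne.symm hxne), (ENNReal.ofReal_lt_iff_lt_toReal hx0 hT).1 hxT⟩
      · rintro ⟨hx0, hxT⟩
        exact ⟨⟨hx0.le, (ENNReal.ofReal_lt_iff_lt_toReal hx0.le hT).2 hxT⟩, ne_of_gt hx0⟩
    have hun : Ioo (0:ℝ) T0 = ⋃ n : ℕ, Ioc 0 (T0 - T0 / (n + 2)) := by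
      ext x
      simp only [Set.mem_Ioo, Set.mem_iUnion, Set.mem_Ioc]
      constructor
      · rintro ⟨hx0, hxr⟩
        obtain ⟨n, hn⟩ := exists_nat_ge (T0 / (T0 - x))
        refine ⟨n, hx0, ?_⟩
        have hrx : 0 < T0 - x := by linarith
        rw [le_sub_comm]
        rw [div_le_iff₀ (by positivity)] at hn ⊢
        nlinarith
      · rintro ⟨n, hx0, hxn⟩
        have : T0 / ((n:ℝ) + 2) > 0 := by positivity
        exact ⟨hx0, by linarith⟩
    have hmom : Monotone fun n : ℕ => Ioc (0:ℝ) (T0 - T0 / (n + 2)) := by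
      intro m n hmn
      refine Set.Ioc_subset_Ioc le_rfl ?_
      have h1 : ((m:ℝ) + 2) ≤ (n:ℝ) + 2 := by exact_mod_cast by omega
      have h2 : T0 / ((n:ℝ) + 2) ≤ T0 / ((m:ℝ) + 2) := by
        gcongr <;> first | exact hT0pos.le | positivity | linarith
      linarith
    rw [hU, hun, hmom.directed_le.measure_iUnion] at h'
    obtain ⟨n, hn⟩ := lt_iSup_iff.1 h'
    have h2 : (0:ℝ) < (n:ℝ) + 2 := by positivity
    have hle : T0 / ((n:ℝ) + 2) ≤ T0 := by
      rw [div_le_iff₀ h2]; nlinarith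
    have hlt2 : 0 < T0 / ((n:ℝ) + 2) := by positivity
    refine ⟨T0 - T0 / (n + 2), by linarith, ?_, hn⟩
    rw [ENNReal.ofReal_lt_iff_lt_toReal (by linarith) hT]
    linarith

/-! ### Structure of `lampTau` -/

include hnonneg hmono hcadlag hf0 in
lemma tau_spec {t : ℝ} (ht : 0 ≤ t) (hS : ENNReal.ofReal t < nu f α (U f)) :
    ∃ u : ℝ, 0 ≤ u ∧ ENNReal.ofReal u < hit0 f ∧
      nu f α (Ioc 0 u) = ENNReal.ofReal t ∧ lampTau f α t = ENNReal.ofReal u := by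
  classical
  set E := {v : ℝ | 0 ≤ v ∧ ENNReal.ofReal t < lampInt f α v} with hE
  have hEeq : ∀ v : ℝ, v ∈ E ↔ 0 ≤ v ∧ ENNReal.ofReal t < nu f α (Ioc 0 v) := by
    intro v; rw [hE]; simp only [Set.mem_setOf_eq, nu_Ioc]
  obtain ⟨w, hw0, hwT, hwA⟩ := exists_lt_A hnonneg hmono hcadlag hf0 hS
  have hne : E.Nonempty := ⟨w, (hEeq w).2 ⟨hw0, hwA⟩⟩
  have hbdd : BddBelow E := ⟨0, fun v hv => ((hEeq v).1 hv).1⟩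
  set u := sInf E with hu
  have hu0 : 0 ≤ u := le_csInf hne fun v hv => ((hEeq v).1 hv).1
  have hupper : ∀ v v' : ℝ, v ∈ E → v ≤ v' → v' ∈ E := by
    intro v v' hv hvv'
    rw [hEeq] at hv ⊢
    exact ⟨le_trans hv.1 hvv',
      lt_of_lt_of_le hv.2 (measure_mono (Set.Ioc_subset_Ioc le_rfl hvv'))⟩
  have hEv : ∀ v : ℝ, u < v → v ∈ E := by
    intro v hv
    obtain ⟨e, he, hev⟩ := (csInf_lt_iff hbdd hne).1 hv
    exact hupper e v he hev.le
  have hvE : ∀ v : ℝ, 0 ≤ v → v < u → nu f α (Ioc 0 v) ≤ ENNReal.ofReal t := by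
    intro v hv0 hvu
    have : v ∉ E := fun hvm => absurd (csInf_le hbdd hvm) (not_le.2 hvu)
    rw [hEeq] at this
    push_neg at this
    exact this hv0
  have hAu_le : nu f α (Ioc 0 u) ≤ ENNReal.ofReal t := A_left hu0 hvE
  have huT : ENNReal.ofReal u < hit0 f := by
    by_contra hcon
    push_neg at hcon
    have hsub : U f ⊆ {0} ∪ Ioc 0 u := by
      intro r hr
      rcases eq_or_lt_of_le hr.1 with h0 | h0
      · exact Or.inl (by simp [← h0])
      · refine Or.inr ⟨h0, ?_⟩
        have : ENNReal.ofReal r < ENNReal.ofReal u := lt_of_lt_of_le hr.2 hcon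
        exact le_of_lt ((ENNReal.ofReal_lt_ofReal_iff_of_nonneg h0.le).1 this)
    have : nu f α (U f) ≤ ENNReal.ofReal t := by
      calc nu f α (U f) ≤ nu f α ({0} ∪ Ioc 0 u) := measure_mono hsub
        _ ≤ nu f α {0} + nu f α (Ioc 0 u) := measure_union_le _ _
        _ = nu f α (Ioc 0 u) := by rw [nu_singleton, zero_add]
        _ ≤ ENNReal.ofReal t := hAu_le
    exact absurd hS (not_lt.2 this)
  obtain ⟨w', huw', _, hw'T⟩ := exists_mid hnonneg hmono hcadlag hf0 hu0 huT (u + 1) (by linarith)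
  have hAu_ge : ENNReal.ofReal t ≤ nu f α (Ioc 0 u) := by
    refine A_right hu0 huw' (ne_of_lt (A_fin hnonneg hmono hf0 (le_trans hu0 huw'.le) hw'T)) ?_
    intro v huv hvw
    exact (((hEeq v).1 (hEv v huv)).2).le
  have hAu : nu f α (Ioc 0 u) = ENNReal.ofReal t := le_antisymm hAu_le hAu_ge
  refine ⟨u, hu0, huT, hAu, ?_⟩
  rw [lampTau]
  exact sInf_ofReal_upper hu0 (fun v hv => csInf_le hbdd hv) hEv

include hnonneg hmono hcadlag hf0 in
lemma tau_A {s : ℝ} (hs : 0 ≤ s) (hT : ENNReal.ofReal s < hit0 f) :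
    lampTau f α ((nu f α (Ioc 0 s)).toReal) = ENNReal.ofReal s := by
  have hfin : nu f α (Ioc 0 s) ≠ ⊤ := ne_of_lt (A_fin hnonneg hmono hf0 hs hT)
  have hofr : ENNReal.ofReal ((nu f α (Ioc 0 s)).toReal) = nu f α (Ioc 0 s) :=
    ENNReal.ofReal_toReal hfin
  rw [lampTau]
  have hEeq : {v : ℝ | 0 ≤ v ∧ ENNReal.ofReal ((nu f α (Ioc 0 s)).toReal)
      < lampInt f α v} = {v : ℝ | s < v} := by
    ext v
    simp only [Set.mem_setOf_eq, nu_Ioc, hofr]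
    constructor
    · rintro ⟨hv0, hv⟩
      by_contra hc
      push_neg at hc
      exact absurd hv (not_lt.2 (measure_mono (Set.Ioc_subset_Ioc le_rfl hc)))
    · intro hv
      exact ⟨le_trans hs hv.le, A_strict hnonneg hmono hf0 hs hv hT⟩
  rw [hEeq]
  exact sInf_ofReal_upper hs (fun v hv => Set.mem_Ici.2 (le_of_lt hv)) fun v hv => hv

include hnonneg hmono hcadlag hf0 in
lemma g_eq {s : ℝ} (hs : 0 ≤ s) (hT : ENNReal.ofReal s < hit0 f) :
    lampG f α ((nu f α (Ioc 0 s)).toReal) = f s := by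
  rw [lampG, tau_A hnonneg hmono hcadlag hf0 hs hT]
  rw [if_neg ENNReal.ofReal_ne_top, ENNReal.toReal_ofReal hs]

lemma tau_mono : Monotone (lampTau f α) := by
  intro a b hab
  refine sInf_le_sInf (Set.image_mono fun v hv => ?_)
  exact ⟨hv.1, lt_of_le_of_lt (ENNReal.ofReal_le_ofReal hab) hv.2⟩

include hnonneg in
lemma g_nonneg (t : ℝ) : 0 ≤ lampG f α t := by
  rw [lampG]
  split
  · exact le_rfl
  · exact hnonneg _ ENNReal.toReal_nonneg

include hnonneg hmono in
lemma g_anti : Antitone (lampG f α) := by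
  intro a b hab
  rcases eq_or_ne (lampTau f α b) ⊤ with hb | hb
  · rw [lampG, if_pos hb]
    exact g_nonneg hnonneg a
  · have ha : lampTau f α a ≠ ⊤ := by
      intro hc
      exact hb (top_le_iff.1 (hc ▸ tau_mono hab))
    rw [lampG, lampG, if_neg ha, if_neg hb]
    exact hmono _ _ ENNReal.toReal_nonneg (ENNReal.toReal_mono hb (tau_mono hab))

/-! ### The transformed density and the key change of variables -/

noncomputable def G (f : ℝ → ℝ) (α : ℝ) : ℝ → ℝ≥0∞ :=
  fun r => (ENNReal.ofReal (lampG f α r)) ^ (-α)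

noncomputable def nuG (f : ℝ → ℝ) (α : ℝ) : Measure ℝ :=
  volume.withDensity (G f α)

include hnonneg hmono in
lemma measG : Measurable (G f α) := by
  have h1 : Antitone fun r : ℝ => ENNReal.ofReal (lampG f α r) :=
    fun a b hab => ENNReal.ofReal_le_ofReal (g_anti hnonneg hmono hab)
  exact h1.measurable.pow_const (-α)

lemma B_Ioc (v : ℝ) : lampInt (lampG f α) (-α) v = nuG f α (Ioc 0 v) := by
  rw [nuG, withDensity_apply _ measurableSet_Ioc, lampInt]
  rfl

lemma ofReal_min (a b : ℝ) :
    ENNReal.ofReal (min a b) = min (ENNReal.ofReal a) (ENNReal.ofReal b) := by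
  have h : Monotone ENNReal.ofReal := fun x y hxy => ENNReal.ofReal_le_ofReal hxy
  exact h.map_min

include hnonneg hmono hcadlag hf0 in
lemma B_tau {t : ℝ} (ht : 0 ≤ t) (hS : ENNReal.ofReal t < nu f α (U f)) :
    nuG f α (Ioc 0 t) = lampTau f α t := by
  classical
  obtain ⟨u, hu0, huT, hAu, htau⟩ := tau_spec hnonneg hmono hcadlag hf0 ht hS
  -- the rescaling map
  set φ : ℝ → ℝ := fun r => (nu f α (Ioc 0 (min r u))).toReal with hφ
  have hAfin : ∀ r : ℝ, nu f α (Ioc 0 (min r u)) ≠ ⊤ := by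
    intro r
    refine ne_of_lt (lt_of_le_of_lt (measure_mono (Set.Ioc_subset_Ioc le_rfl (min_le_right r u))) ?_)
    rw [hAu]; exact ENNReal.ofReal_lt_top
  have hφmono : Monotone φ := by
    intro a b hab
    exact ENNReal.toReal_mono (hAfin b)
      (measure_mono (Set.Ioc_subset_Ioc le_rfl (min_le_min hab le_rfl)))
  have hφmeas : Measurable φ := hφmono.measurable
  have hφr : ∀ r : ℝ, r ≤ u → φ r = (nu f α (Ioc 0 r)).toReal := by
    intro r hr; rw [hφ]; simp only [min_eq_left hr]
  -- the measure to transport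
  set μ : Measure ℝ := (volume.restrict (Ioc 0 u)).withDensity (D f α) with hμ
  have hμs : ∀ s : Set ℝ, MeasurableSet s → μ s = nu f α (s ∩ Ioc 0 u) := by
    intro s hs
    rw [hμ, withDensity_apply _ hs, Measure.restrict_restrict hs, nu,
      withDensity_apply _ (hs.inter measurableSet_Ioc)]
  -- the sup-inverse
  set Q : ℝ → Set ℝ := fun c => {r : ℝ | 0 ≤ r ∧ r ≤ u ∧ nu f α (Ioc 0 r) ≤ ENNReal.ofReal c}
    with hQ
  have hQ0 : ∀ c : ℝ, (0:ℝ) ∈ Q c := by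
    intro c
    refine ⟨le_rfl, hu0, ?_⟩
    rw [Set.Ioc_self, measure_empty]; exact zero_le
  have hQne : ∀ c : ℝ, (Q c).Nonempty := fun c => ⟨0, hQ0 c⟩
  have hQbdd : ∀ c : ℝ, BddAbove (Q c) := fun c => ⟨u, fun r hr => hr.2.1⟩
  set σ : ℝ → ℝ := fun c => sSup (Q c) with hσ
  have hσ0 : ∀ c : ℝ, 0 ≤ σ c := fun c => le_csSup (hQbdd c) (hQ0 c)
  have hσu : ∀ c : ℝ, σ c ≤ u := fun c => csSup_le (hQne c) fun r hr => hr.2.1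
  have hAσ_le : ∀ c : ℝ, nu f α (Ioc 0 (σ c)) ≤ ENNReal.ofReal c := by
    intro c
    refine A_left (hσ0 c) fun v hv0 hvσ => ?_
    obtain ⟨q, hq, hvq⟩ := exists_lt_of_lt_csSup (hQne c) hvσ
    exact le_trans (measure_mono (Set.Ioc_subset_Ioc le_rfl hvq.le)) hq.2.2
  have hle_σ : ∀ c r : ℝ, 0 ≤ r → r ≤ u → (nu f α (Ioc 0 r) ≤ ENNReal.ofReal c ↔ r ≤ σ c) := by
    intro c r hr0 hru
    constructor
    · intro h; exact le_csSup (hQbdd c) ⟨hr0, hru, h⟩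
    · intro h
      exact le_trans (measure_mono (Set.Ioc_subset_Ioc le_rfl h)) (hAσ_le c)
  have hApos : ∀ r : ℝ, 0 < r → 0 < nu f α (Ioc 0 r) := by
    intro r hr
    have := A_strict (α := α) hnonneg hmono hf0 (le_refl 0) hr
      (by simpa using hit0_pos hnonneg hmono hcadlag hf0)
    simpa using this
  -- preimage of Iic
  have hP : ∀ c : ℝ, φ ⁻¹' (Iic c) ∩ Ioc 0 u = Ioc 0 (σ c) := by
    intro c
    ext r
    simp only [Set.mem_inter_iff, Set.mem_preimage, Set.mem_Iic, Set.mem_Ioc]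
    constructor
    · rintro ⟨hc, hr0, hru⟩
      rw [hφr r hru] at hc
      have hfin : nu f α (Ioc 0 r) ≠ ⊤ := by rw [← min_eq_left hru]; exact hAfin r
      refine ⟨hr0, ?_⟩
      rcases le_or_gt 0 c with h0c | h0c
      · exact (hle_σ c r hr0.le hru).1 ((ENNReal.le_ofReal_iff_toReal_le hfin h0c).2 hc)
      · exfalso
        have h1 : 0 < (nu f α (Ioc 0 r)).toReal :=
          ENNReal.toReal_pos (ne_of_gt (hApos r hr0)) hfin
        linarith
    · rintro ⟨hr0, hrσ⟩
      have hru : r ≤ u := le_trans hrσ (hσu c)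
      have hfin : nu f α (Ioc 0 r) ≠ ⊤ := by rw [← min_eq_left hru]; exact hAfin r
      have hAr : nu f α (Ioc 0 r) ≤ ENNReal.ofReal c := (hle_σ c r hr0.le hru).2 hrσ
      refine ⟨?_, hr0, hru⟩
      rw [hφr r hru]
      rcases le_or_gt 0 c with h0c | h0c
      · exact (ENNReal.le_ofReal_iff_toReal_le hfin h0c).1 hAr
      · exfalso
        have : ENNReal.ofReal c = 0 := by
          rw [ENNReal.ofReal_eq_zero]; linarith
        rw [this, le_zero_iff] at hAr
        exact (ne_of_gt (hApos r hr0)) hAr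
  have hσmono : Monotone σ := by
    intro a b hab
    refine csSup_le_csSup (hQbdd b) (hQne a) fun r hr => ?_
    exact ⟨hr.1, hr.2.1, le_trans hr.2.2 (ENNReal.ofReal_le_ofReal hab)⟩
  -- value of A at σ c
  have hAσ : ∀ c : ℝ, nu f α (Ioc 0 (σ c)) =
      min (ENNReal.ofReal c) (ENNReal.ofReal t) := by
    intro c
    rcases lt_or_ge t c with htc | htc
    · -- σ c = u
      have hσc : σ c = u := by
        refine le_antisymm (hσu c) ?_
        refine le_csSup (hQbdd c) ⟨hu0, le_rfl, ?_⟩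
        rw [hAu]; exact ENNReal.ofReal_le_ofReal htc.le
      rw [hσc, hAu, min_eq_right (ENNReal.ofReal_le_ofReal htc.le)]
    · rw [min_eq_left (ENNReal.ofReal_le_ofReal htc)]
      rcases le_or_gt 0 c with h0c | h0c
      · -- 0 ≤ c ≤ t
        refine le_antisymm (hAσ_le c) ?_
        rcases eq_or_lt_of_le (hσu c) with hequ | hltu
        · rw [hequ, hAu]; exact ENNReal.ofReal_le_ofReal htc
        · refine A_right (hσ0 c) hltu (by rw [hAu]; exact ENNReal.ofReal_ne_top) ?_
          intro v hσv hvu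
          by_contra hcon
          push_neg at hcon
          exact absurd ((hle_σ c v (le_trans (hσ0 c) hσv.le) hvu).1 hcon.le)
            (not_le.2 hσv)
      · -- c < 0
        have h1 : nu f α (Ioc 0 (σ c)) ≤ ENNReal.ofReal c := hAσ_le c
        have h2 : ENNReal.ofReal c = 0 := by rw [ENNReal.ofReal_eq_zero]; linarith
        rw [h2] at h1 ⊢
        exact le_antisymm h1 zero_le
  -- the pushforward identity
  have hmapfin : IsFiniteMeasure (Measure.map φ μ) := by
    constructor
    rw [Measure.map_apply hφmeas MeasurableSet.univ, Set.preimage_univ, hμs _ MeasurableSet.univ,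
      Set.univ_inter, hAu]
    exact ENNReal.ofReal_lt_top
  have hAσfin : ∀ c : ℝ, nu f α (Ioc 0 (σ c)) ≠ ⊤ := by
    intro c
    refine ne_of_lt (lt_of_le_of_lt (measure_mono (Set.Ioc_subset_Ioc le_rfl (hσu c))) ?_)
    rw [hAu]; exact ENNReal.ofReal_lt_top
  have hmap : Measure.map φ μ = volume.restrict (Ioc 0 t) := by
    have _inst : IsLocallyFiniteMeasure (Measure.map φ μ) :=
      @IsFiniteMeasure.toIsLocallyFiniteMeasure ℝ _ _ _ hmapfin
    refine Measure.ext_of_Ioc _ _ fun a b hab => ?_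
    rw [Measure.map_apply hφmeas measurableSet_Ioc, Measure.restrict_apply measurableSet_Ioc,
      Set.Ioc_inter_Ioc, Real.volume_Ioc]
    have hpre : φ ⁻¹' (Ioc a b) = φ ⁻¹' Iic b \ φ ⁻¹' Iic a := by
      ext x; simp only [Set.mem_preimage, Set.mem_Ioc, Set.mem_diff, Set.mem_Iic, not_le]; tauto
    rw [hpre, hμs _ ((hφmeas measurableSet_Iic).diff (hφmeas measurableSet_Iic))]
    have hsets : (φ ⁻¹' Iic b \ φ ⁻¹' Iic a) ∩ Ioc 0 u =
        (φ ⁻¹' Iic b ∩ Ioc 0 u) \ (φ ⁻¹' Iic a ∩ Ioc 0 u) := by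
      ext x
      simp only [Set.mem_inter_iff, Set.mem_diff, Set.mem_preimage]
      tauto
    rw [hsets, hP b, hP a]
    have hσab : σ a ≤ σ b := hσmono hab.le
    have hdiff : Ioc 0 (σ b) \ Ioc 0 (σ a) = Ioc (σ a) (σ b) := by
      ext x
      simp only [Set.mem_diff, Set.mem_Ioc, not_and, not_le]
      constructor
      · rintro ⟨⟨hx0, hxb⟩, h⟩
        exact ⟨h hx0, hxb⟩
      · rintro ⟨hax, hxb⟩
        have h0x : 0 < x := lt_of_le_of_lt (hσ0 a) hax
        exact ⟨⟨h0x, hxb⟩, fun _ => hax⟩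
    rw [hdiff]
    have hval : nu f α (Ioc (σ a) (σ b)) =
        nu f α (Ioc 0 (σ b)) - nu f α (Ioc 0 (σ a)) := by
      rw [nu_split (hσ0 a) hσab, ENNReal.add_sub_cancel_left (hAσfin a)]
    rw [hval, hAσ a, hAσ b]
    rw [show ENNReal.ofReal b ⊓ ENNReal.ofReal t = ENNReal.ofReal (min b t) from (ofReal_min b t).symm,
      show ENNReal.ofReal a ⊓ ENNReal.ofReal t = ENNReal.ofReal (min a t) from (ofReal_min a t).symm]
    -- now a pure `ofReal` computation
    have ha' : ENNReal.ofReal a = ENNReal.ofReal (max a 0) := by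
      rcases le_total a 0 with h | h
      · rw [ENNReal.ofReal_of_nonpos h, max_eq_right h, ENNReal.ofReal_zero]
      · rw [max_eq_left h]
    have hmin' : ENNReal.ofReal (min a t) = ENNReal.ofReal (min (max a 0) t) := by
      rcases le_total a 0 with h | h
      · rw [max_eq_right h, ENNReal.ofReal_of_nonpos (le_trans (min_le_left a t) h)]
        rw [min_eq_left ht, ENNReal.ofReal_zero]
      · rw [max_eq_left h]
    rw [hmin']
    set a' := max a 0 with ha'def
    have ha'0 : 0 ≤ a' := le_max_right a 0
    rcases le_total a' t with h1 | h1
    · rw [min_eq_left h1, ENNReal.ofReal_sub _ ha'0]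
    · have h2 : min b t ≤ a' := le_trans (min_le_right b t) h1
      rw [min_eq_right h1]
      rw [tsub_eq_zero_of_le (ENNReal.ofReal_le_ofReal (min_le_right b t))]
      rw [ENNReal.ofReal_eq_zero.2 (by linarith)]
  -- conclude by the change of variables
  have hGmeas : Measurable (G f α) := measG hnonneg hmono
  calc nuG f α (Ioc 0 t) = ∫⁻ r, G f α r ∂(volume.restrict (Ioc 0 t)) := by
        rw [nuG, withDensity_apply _ measurableSet_Ioc]
    _ = ∫⁻ r, G f α r ∂(Measure.map φ μ) := by rw [hmap]
    _ = ∫⁻ x, G f α (φ x) ∂μ := lintegral_map hGmeas hφmeas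
    _ = ∫⁻ x, (D f α * fun y => G f α (φ y)) x ∂(volume.restrict (Ioc 0 u)) :=
          lintegral_withDensity_eq_lintegral_mul _ (measD hmono) (hGmeas.comp hφmeas)
    _ = ∫⁻ x in Ioc 0 u, (1:ℝ≥0∞) ∂volume := by
          refine setLIntegral_congr_fun measurableSet_Ioc
            (fun x hx => ?_)
          have hx0 : 0 < x := hx.1
          have hxu : x ≤ u := hx.2
          have hxT : ENNReal.ofReal x < hit0 f :=
            lt_of_le_of_lt (ENNReal.ofReal_le_ofReal hxu) huT
          have hfx : 0 < f x := fpos hnonneg hx0.le hxT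
          have hgφ : lampG f α (φ x) = f x := by
            rw [hφr x hxu]
            exact g_eq hnonneg hmono hcadlag hf0 hx0.le hxT
          simp only [Pi.mul_apply]
          rw [D, G, hgφ, max_eq_left hx0.le]
          have ha0 : ENNReal.ofReal (f x) ≠ 0 := ne_of_gt (ENNReal.ofReal_pos.2 hfx)
          rw [← ENNReal.rpow_add α (-α) ha0 ENNReal.ofReal_ne_top,
            show α + -α = 0 from by ring, ENNReal.rpow_zero]
    _ = ENNReal.ofReal u := by
          rw [setLIntegral_const, one_mul, Real.volume_Ioc, sub_zero]
    _ = lampTau f α t := htau.symm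

/-! ### `hit0` of the transform is at most `S` -/

include hnonneg hmono hcadlag hf0 in
lemma hit0g_le_S : hit0 (lampG f α) ≤ nu f α (U f) := by
  classical
  rcases eq_or_ne (nu f α (U f)) ⊤ with hS | hS
  · rw [hS]; exact le_top
  set s0 := (nu f α (U f)).toReal with hs0
  have hs00 : 0 ≤ s0 := ENNReal.toReal_nonneg
  have hofr : ENNReal.ofReal s0 = nu f α (U f) := ENNReal.ofReal_toReal hS
  suffices hg0 : lampG f α s0 = 0 by
    have : hit0 (lampG f α) ≤ ENNReal.ofReal s0 := sInf_le ⟨s0, ⟨hs00, hg0⟩, rfl⟩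
    rwa [hofr] at this
  -- case analysis
  rcases eq_or_ne (hit0 f) ⊤ with hT | hT
  · -- `f` never hits zero: `A v ≤ S` for all `v`, so `τ(s0) = ∞`
    have hAle : ∀ v : ℝ, nu f α (Ioc 0 v) ≤ nu f α (U f) := by
      intro v
      refine measure_mono fun r hr => ?_
      exact ⟨hr.1.le, by rw [hT]; exact lt_top_iff_ne_top.2 ENNReal.ofReal_ne_top⟩
    have hE : {v : ℝ | 0 ≤ v ∧ ENNReal.ofReal s0 < lampInt f α v} = ∅ := by
      ext v
      simp only [Set.mem_setOf_eq, Set.mem_empty_iff_false, iff_false, not_and, not_lt]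
      intro hv0
      rw [nu_Ioc, hofr]
      exact hAle v
    rw [lampG, if_pos (by rw [lampTau, hE, Set.image_empty, sInf_empty])]
  rcases lt_or_ge (0:ℝ) α with hα | hα
  · -- `α > 0` : the density vanishes past `hit0 f`, so again `A v ≤ S`
    have hAle : ∀ v : ℝ, nu f α (Ioc 0 v) ≤ nu f α (U f) := by
      intro v
      have hzero : nu f α (Ioc 0 v \ U f) = 0 := by
        rw [nu, withDensity_apply _ (measurableSet_Ioc.diff measUf)]
        rw [show (0:ℝ≥0∞) = ∫⁻ _ in Ioc 0 v \ U f, 0 ∂volume from (lintegral_zero).symm]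
        refine setLIntegral_congr_fun (measurableSet_Ioc.diff measUf)
          (fun r hr => ?_)
        have hr0 : 0 ≤ r := hr.1.1.le
        have hrT : hit0 f ≤ ENNReal.ofReal r := by
          by_contra hc
          push_neg at hc
          exact hr.2 ⟨hr0, hc⟩
        have hfr : f r = 0 := fzero hnonneg hmono hcadlag hr0 hrT
        rw [D, max_eq_left hr0, hfr, ENNReal.ofReal_zero]
        rw [ENNReal.rpow_eq_zero_iff]
        exact Or.inl ⟨rfl, hα⟩
      calc nu f α (Ioc 0 v) ≤ nu f α (Ioc 0 v ∩ U f) + nu f α (Ioc 0 v \ U f) :=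
            measure_le_inter_add_diff _ _ _
        _ = nu f α (Ioc 0 v ∩ U f) := by rw [hzero, add_zero]
        _ ≤ nu f α (U f) := measure_mono Set.inter_subset_right
    have hE : {v : ℝ | 0 ≤ v ∧ ENNReal.ofReal s0 < lampInt f α v} = ∅ := by
      ext v
      simp only [Set.mem_setOf_eq, Set.mem_empty_iff_false, iff_false, not_and, not_lt]
      intro hv0
      rw [nu_Ioc, hofr]
      exact hAle v
    rw [lampG, if_pos (by rw [lampTau, hE, Set.image_empty, sInf_empty])]
  · -- `α ≤ 0` and `hit0 f < ∞` : `τ(s0) = hit0 f` and `f` vanishes there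
    set t0 := (hit0 f).toReal with ht0
    have ht00 : 0 ≤ t0 := ENNReal.toReal_nonneg
    have ht0pos : 0 < t0 :=
      ENNReal.toReal_pos (ne_of_gt (hit0_pos hnonneg hmono hcadlag hf0)) hT
    have hofrT : ENNReal.ofReal t0 = hit0 f := ENNReal.ofReal_toReal hT
    have hft0 : f t0 = 0 := fzero hnonneg hmono hcadlag ht00 (le_of_eq hofrT.symm)
    -- (ii) below t0 the integral stays ≤ S
    have hAle : ∀ v : ℝ, v ≤ t0 → nu f α (Ioc 0 v) ≤ nu f α (U f) := by
      intro v hv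
      have hsub : Ioc 0 v ⊆ U f ∪ {t0} := by
        intro r hr
        rcases eq_or_lt_of_le (le_trans hr.2 hv) with h | h
        · exact Or.inr (by simp [h])
        · refine Or.inl ⟨hr.1.le, ?_⟩
          rw [← hofrT]
          exact (ENNReal.ofReal_lt_ofReal_iff ht0pos).2 h
      calc nu f α (Ioc 0 v) ≤ nu f α (U f ∪ {t0}) := measure_mono hsub
        _ ≤ nu f α (U f) + nu f α {t0} := measure_union_le _ _
        _ = nu f α (U f) := by rw [nu_singleton, add_zero]
    -- (i) above t0 the integral exceeds S
    have hAgt : ∀ v : ℝ, t0 < v → nu f α (U f) < nu f α (Ioc 0 v) := by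
      intro v hv
      rcases eq_or_lt_of_le hα with hα0 | hαneg
      · -- α = 0 : everything is explicit
        have hD1 : ∀ r : ℝ, D f α r = 1 := by
          intro r
          rw [D, hα0, ENNReal.rpow_zero]
        have hnuv : ∀ s : Set ℝ, MeasurableSet s → nu f α s = volume s := by
          intro s hs
          rw [nu, withDensity_apply _ hs]
          simp only [hD1]
          rw [setLIntegral_const, one_mul]
        have hU : U f = Ico 0 t0 := by
          ext r
          simp only [U, Set.mem_setOf_eq, Set.mem_Ico, ← hofrT]
          constructor
          · rintro ⟨hr0, hrt⟩
            exact ⟨hr0, (ENNReal.ofReal_lt_ofReal_iff ht0pos).1 hrt⟩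
          · rintro ⟨hr0, hrt⟩
            exact ⟨hr0, (ENNReal.ofReal_lt_ofReal_iff ht0pos).2 hrt⟩
        rw [hnuv _ measUf, hnuv _ measurableSet_Ioc, hU, Real.volume_Ico,
          Real.volume_Ioc, sub_zero, sub_zero]
        exact (ENNReal.ofReal_lt_ofReal_iff (lt_of_le_of_lt ht00 hv)).2 hv
      · -- α < 0 : infinite mass just after t0
        have htop : nu f α (Ioc t0 v) = ⊤ := by
          rw [nu, withDensity_apply _ measurableSet_Ioc]
          have hDt : ∀ r : ℝ, r ∈ Ioc t0 v → D f α r = ⊤ := by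
            intro r hr
            have hr0 : 0 ≤ r := le_trans ht00 hr.1.le
            have hfr : f r = 0 := fzero hnonneg hmono hcadlag hr0
              (by rw [← hofrT]; exact ENNReal.ofReal_le_ofReal hr.1.le)
            rw [D, max_eq_left hr0, hfr, ENNReal.ofReal_zero]
            exact ENNReal.zero_rpow_of_neg hαneg
          rw [setLIntegral_congr_fun measurableSet_Ioc
            (fun r hr => hDt r hr), setLIntegral_const]
          rw [Real.volume_Ioc]
          exact ENNReal.top_mul (by
            rw [Ne, ENNReal.ofReal_eq_zero]
            push_neg
            linarith)
        have : nu f α (Ioc 0 v) = ⊤ := by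
          refine top_le_iff.1 ?_
          rw [← htop]
          exact measure_mono (Set.Ioc_subset_Ioc ht00 le_rfl)
        rw [this]
        exact lt_top_iff_ne_top.2 hS
    -- identify τ(s0)
    have htau : lampTau f α s0 = ENNReal.ofReal t0 := by
      rw [lampTau]
      refine sInf_ofReal_upper ht00 ?_ ?_
      · intro v hv
        by_contra hc
        rw [Set.mem_Ici, not_le] at hc
        rw [Set.mem_setOf_eq, nu_Ioc, hofr] at hv
        exact absurd hv.2 (not_lt.2 (hAle v hc.le))
      · intro v hv
        exact ⟨le_trans ht00 hv.le, by rw [nu_Ioc, hofr]; exact hAgt v hv⟩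
    rw [lampG, htau, if_neg ENNReal.ofReal_ne_top, ENNReal.toReal_ofReal ht00]
    exact hft0

include hnonneg hmono hcadlag hf0 in
lemma sub_core {c v : ℝ} (hc0 : 0 ≤ c) (hv0 : 0 ≤ v) (hvS : ENNReal.ofReal v < nu f α (U f))
    (h : ENNReal.ofReal c < nuG f α (Ioc 0 v)) :
    ∃ uv : ℝ, 0 ≤ uv ∧ c < uv ∧ nu f α (Ioc 0 uv) = ENNReal.ofReal v := by
  obtain ⟨uv, huv0, _, hAuv, htauv⟩ := tau_spec hnonneg hmono hcadlag hf0 hv0 hvS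
  rw [B_tau hnonneg hmono hcadlag hf0 hv0 hvS, htauv] at h
  exact ⟨uv, huv0, (ENNReal.ofReal_lt_ofReal_iff_of_nonneg hc0).1 h, hAuv⟩

include hnonneg hmono hcadlag hf0 in
lemma gt_core {c v : ℝ} (hc0 : 0 ≤ c) (hv0 : 0 ≤ v) (hvS : ENNReal.ofReal v < nu f α (U f))
    (hlt : nu f α (Ioc 0 c) < ENNReal.ofReal v) :
    ENNReal.ofReal c < nuG f α (Ioc 0 v) := by
  obtain ⟨uv, huv0, _, hAuv, htauv⟩ := tau_spec hnonneg hmono hcadlag hf0 hv0 hvS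
  rw [B_tau hnonneg hmono hcadlag hf0 hv0 hvS, htauv]
  have hcuv : c < uv := by
    by_contra hcon
    push_neg at hcon
    have : nu f α (Ioc 0 uv) ≤ nu f α (Ioc 0 c) :=
      measure_mono (Set.Ioc_subset_Ioc le_rfl hcon)
    rw [hAuv] at this
    exact absurd hlt (not_lt.2 this)
  exact (ENNReal.ofReal_lt_ofReal_iff_of_nonneg hc0).2 hcuv

end

end LampAux

/-- the Lamperti time change `ρ` associated to `(g, -α)` is the
inverse bijection of `τ` between `[0, T₀(g))` and `[0, T₀(f))`. -/
theorem lamperti_time_change_inverse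
    (f : ℝ → ℝ) (α : ℝ)
    (hnonneg : ∀ t : ℝ, 0 ≤ t → 0 ≤ f t)
    (hmono : ∀ s t : ℝ, 0 ≤ s → s ≤ t → f t ≤ f s)
    (hcadlag : Cadlag f)
    (hf0 : f 0 = 1) :
    -- ρ(τ(t)) = t for every t ∈ [0, T₀(g))
    (∀ t : ℝ, 0 ≤ t → ENNReal.ofReal t < hit0 (lampG f α) →
      lampTau (lampG f α) (-α) ((lampTau f α t).toReal) = ENNReal.ofReal t) ∧
    -- τ(ρ(s)) = s for every s ∈ [0, T₀(f))
    (∀ s : ℝ, 0 ≤ s → ENNReal.ofReal s < hit0 f →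
      lampTau f α ((lampTau (lampG f α) (-α) s).toReal) = ENNReal.ofReal s) := by
  classical
  constructor
  · -- ρ(τ(t)) = t on [0, T₀(g))
    intro t ht htlt
    have hS : ENNReal.ofReal t < LampAux.nu f α (LampAux.U f) :=
      lt_of_lt_of_le htlt (LampAux.hit0g_le_S hnonneg hmono hcadlag hf0)
    obtain ⟨u, hu0, huT, hAu, htau⟩ := LampAux.tau_spec hnonneg hmono hcadlag hf0 ht hS
    rw [htau, ENNReal.toReal_ofReal hu0, lampTau]
    refine LampAux.sInf_ofReal_upper ht ?_ ?_
    · intro v hv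
      rw [Set.mem_setOf_eq, LampAux.B_Ioc] at hv
      by_contra hc
      rw [Set.mem_Ici, not_le] at hc
      have hv0 : 0 ≤ v := hv.1
      have hvS : ENNReal.ofReal v < LampAux.nu f α (LampAux.U f) :=
        lt_of_le_of_lt (ENNReal.ofReal_le_ofReal hc.le) hS
      obtain ⟨uv, huv0, hcuv, hAuv⟩ :=
        LampAux.sub_core hnonneg hmono hcadlag hf0 hu0 hv0 hvS hv.2
      have h1 : LampAux.nu f α (Ioc 0 u) ≤ LampAux.nu f α (Ioc 0 uv) :=
        measure_mono (Set.Ioc_subset_Ioc le_rfl hcuv.le)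
      rw [hAu, hAuv] at h1
      have : t ≤ v := (ENNReal.ofReal_le_ofReal_iff hv0).1 h1
      linarith
    · intro v hv
      have hv0 : 0 ≤ v := le_trans ht (le_of_lt hv)
      refine ⟨hv0, ?_⟩
      rw [LampAux.B_Ioc]
      rcases lt_or_ge (ENNReal.ofReal v) (LampAux.nu f α (LampAux.U f)) with hvS | hvS
      · refine LampAux.gt_core hnonneg hmono hcadlag hf0 hu0 hv0 hvS ?_
        rw [hAu]
        exact (ENNReal.ofReal_lt_ofReal_iff (lt_of_le_of_lt ht hv)).2 hv
      · have hSne : LampAux.nu f α (LampAux.U f) ≠ ⊤ := by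
          intro hcon
          rw [hcon, top_le_iff] at hvS
          exact ENNReal.ofReal_ne_top hvS
        set w := (t + (LampAux.nu f α (LampAux.U f)).toReal) / 2 with hw
        have htS : t < (LampAux.nu f α (LampAux.U f)).toReal :=
          (ENNReal.ofReal_lt_iff_lt_toReal ht hSne).1 hS
        have hw1 : t < w := by rw [hw]; linarith
        have hw0 : 0 ≤ w := le_trans ht hw1.le
        have hwS : ENNReal.ofReal w < LampAux.nu f α (LampAux.U f) :=
          (ENNReal.ofReal_lt_iff_lt_toReal hw0 hSne).2 (by rw [hw]; linarith)
        have hwv : w ≤ v := by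
          have h2 : (LampAux.nu f α (LampAux.U f)).toReal ≤ v := by
            have := ENNReal.toReal_mono ENNReal.ofReal_ne_top hvS
            rwa [ENNReal.toReal_ofReal hv0] at this
          rw [hw]; linarith
        have hcore : ENNReal.ofReal u < LampAux.nuG f α (Ioc 0 w) := by
          refine LampAux.gt_core hnonneg hmono hcadlag hf0 hu0 hw0 hwS ?_
          rw [hAu]
          exact (ENNReal.ofReal_lt_ofReal_iff (lt_of_le_of_lt ht hw1)).2 hw1
        exact lt_of_lt_of_le hcore (measure_mono (Set.Ioc_subset_Ioc le_rfl hwv))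
  · -- τ(ρ(s)) = s on [0, T₀(f))
    intro s hs hsT
    have hAfin : LampAux.nu f α (Ioc 0 s) ≠ ⊤ :=
      ne_of_lt (LampAux.A_fin hnonneg hmono hf0 hs hsT)
    set a := (LampAux.nu f α (Ioc 0 s)).toReal with ha
    have ha0 : 0 ≤ a := ENNReal.toReal_nonneg
    have hofa : ENNReal.ofReal a = LampAux.nu f α (Ioc 0 s) := ENNReal.ofReal_toReal hAfin
    have haS : ENNReal.ofReal a < LampAux.nu f α (LampAux.U f) := by
      obtain ⟨w, hsw, _, hwT⟩ :=
        LampAux.exists_mid hnonneg hmono hcadlag hf0 hs hsT (s + 1) (by linarith)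
      calc ENNReal.ofReal a = LampAux.nu f α (Ioc 0 s) := hofa
        _ < LampAux.nu f α (Ioc 0 w) := LampAux.A_strict hnonneg hmono hf0 hs hsw hsT
        _ ≤ LampAux.nu f α (LampAux.U f) := LampAux.A_le_S (le_trans hs hsw.le) hwT
    have hrho : lampTau (lampG f α) (-α) s = ENNReal.ofReal a := by
      rw [lampTau]
      refine LampAux.sInf_ofReal_upper ha0 ?_ ?_
      · intro v hv
        rw [Set.mem_setOf_eq, LampAux.B_Ioc] at hv
        by_contra hc
        rw [Set.mem_Ici, not_le] at hc
        have hv0 : 0 ≤ v := hv.1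
        have hvS : ENNReal.ofReal v < LampAux.nu f α (LampAux.U f) :=
          lt_of_le_of_lt (ENNReal.ofReal_le_ofReal hc.le) haS
        obtain ⟨uv, huv0, hsuv, hAuv⟩ :=
          LampAux.sub_core hnonneg hmono hcadlag hf0 hs hv0 hvS hv.2
        have h1 : LampAux.nu f α (Ioc 0 s) ≤ LampAux.nu f α (Ioc 0 uv) :=
          measure_mono (Set.Ioc_subset_Ioc le_rfl hsuv.le)
        rw [hAuv, ← hofa] at h1
        have : a ≤ v := (ENNReal.ofReal_le_ofReal_iff hv0).1 h1
        linarith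
      · intro v hv
        have hv0 : 0 ≤ v := le_trans ha0 (le_of_lt hv)
        refine ⟨hv0, ?_⟩
        rw [LampAux.B_Ioc]
        rcases lt_or_ge (ENNReal.ofReal v) (LampAux.nu f α (LampAux.U f)) with hvS | hvS
        · refine LampAux.gt_core hnonneg hmono hcadlag hf0 hs hv0 hvS ?_
          rw [← hofa]
          exact (ENNReal.ofReal_lt_ofReal_iff (lt_of_le_of_lt ha0 hv)).2 hv
        · have hSne : LampAux.nu f α (LampAux.U f) ≠ ⊤ := by
            intro hcon
            rw [hcon, top_le_iff] at hvS
            exact ENNReal.ofReal_ne_top hvS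
          set w := (a + (LampAux.nu f α (LampAux.U f)).toReal) / 2 with hw
          have htS : a < (LampAux.nu f α (LampAux.U f)).toReal :=
            (ENNReal.ofReal_lt_iff_lt_toReal ha0 hSne).1 haS
          have hw1 : a < w := by rw [hw]; linarith
          have hw0 : 0 ≤ w := le_trans ha0 hw1.le
          have hwS : ENNReal.ofReal w < LampAux.nu f α (LampAux.U f) :=
            (ENNReal.ofReal_lt_iff_lt_toReal hw0 hSne).2 (by rw [hw]; linarith)
          have hwv : w ≤ v := by
            have h2 : (LampAux.nu f α (LampAux.U f)).toReal ≤ v := by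
              have := ENNReal.toReal_mono ENNReal.ofReal_ne_top hvS
              rwa [ENNReal.toReal_ofReal hv0] at this
            rw [hw]; linarith
          have hcore : ENNReal.ofReal s < LampAux.nuG f α (Ioc 0 w) := by
            refine LampAux.gt_core hnonneg hmono hcadlag hf0 hs hw0 hwS ?_
            rw [← hofa]
            exact (ENNReal.ofReal_lt_ofReal_iff (lt_of_le_of_lt ha0 hw1)).2 hw1
          exact lt_of_lt_of_le hcore (measure_mono (Set.Ioc_subset_Ioc le_rfl hwv))
    rw [hrho, ENNReal.toReal_ofReal ha0, ha]
    exact LampAux.tau_A hnonneg hmono hcadlag hf0 hs hsT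
end

section
/- Let (f_n)_{n∈ℕ} be non-increasing càdlàg functions from [0,∞) to [0,∞) converging in the Skorokhod (J1) sense to a non-increasing càdlàg function f. Let α < 0, and let τ_n and τ be the Lamperti time-changes associated to (f_n, α) and (f, α) respectively. Then τ_n converges to τ uniformly on every compact subset of [0,∞). -/
open MeasureTheory Filter Set
open scoped ENNReal NNReal
open scoped Topology

/-- Skorokhod (J1) convergence of càdlàg functions from `[0,∞)` to `ℝ`:
there exist continuous strictly increasing bijections `λₙ` of `[0,∞)` such that
`λₙ → id` and `hₙ ∘ λₙ → h` uniformly on every compact set. -/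
def SkorokhodTendsto (h : ℕ → ℝ → ℝ) (l : ℝ → ℝ) : Prop :=
  ∃ lam : ℕ → ℝ → ℝ,
    (∀ n, ContinuousOn (lam n) (Set.Ici 0) ∧ StrictMonoOn (lam n) (Set.Ici 0) ∧
      Set.BijOn (lam n) (Set.Ici 0) (Set.Ici 0)) ∧
    (∀ T : ℝ, 0 < T →
      TendstoUniformlyOn (fun n t => lam n t) id atTop (Set.Icc 0 T)) ∧
    (∀ T : ℝ, 0 < T →
      TendstoUniformlyOn (fun n t => h n (lam n t)) l atTop (Set.Icc 0 T))

namespace LampAux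

lemma ennrpow_anti {α : ℝ} (hα : α < 0) {x y : ℝ≥0∞} (h : x ≤ y) : y ^ α ≤ x ^ α := by
  rw [show α = -(-α) by ring, ENNReal.rpow_neg x, ENNReal.rpow_neg y]
  exact ENNReal.inv_le_inv' (ENNReal.rpow_le_rpow h (by linarith))

lemma lampInt_mono (f : ℝ → ℝ) (α : ℝ) {u v : ℝ} (h : u ≤ v) :
    lampInt f α u ≤ lampInt f α v :=
  lintegral_mono_set (Set.Ioc_subset_Ioc_right h)

lemma lampInt_zero (f : ℝ → ℝ) (α : ℝ) : lampInt f α 0 = 0 := by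
  simp [lampInt]

lemma lampInt_split (f : ℝ → ℝ) (α : ℝ) {u v : ℝ} (h0 : 0 ≤ u) (h : u ≤ v) :
    lampInt f α v = lampInt f α u + ∫⁻ r in Set.Ioc u v, (ENNReal.ofReal (f r)) ^ α := by
  rw [lampInt, lampInt, ← lintegral_union measurableSet_Ioc (Set.Ioc_disjoint_Ioc_of_le le_rfl),
    Set.Ioc_union_Ioc_eq_Ioc h0 h]

lemma setLIntegral_const_le' {g : ℝ → ℝ≥0∞} {s : Set ℝ} (hs : MeasurableSet s) {c : ℝ≥0∞}
    (h : ∀ r ∈ s, c ≤ g r) : c * volume s ≤ ∫⁻ r in s, g r := by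
  rw [← setLIntegral_const s c]
  exact lintegral_mono_ae ((ae_restrict_iff' hs).2 (Filter.Eventually.of_forall h))

section Main

variable {fseq : ℕ → ℝ → ℝ} {f : ℝ → ℝ} {α : ℝ}

lemma lampInt_slope (hα : α < 0) (hnn : 0 ≤ f 0)
    (hmono : ∀ s t : ℝ, 0 ≤ s → s ≤ t → f t ≤ f s) {u v : ℝ} (h0 : 0 ≤ u) (h : u ≤ v) :
    lampInt f α u + ENNReal.ofReal ((f 0 + 1) ^ α * (v - u)) ≤ lampInt f α v := by
  have hc : (0:ℝ) < (f 0 + 1) ^ α := Real.rpow_pos_of_pos (by linarith) α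
  rw [lampInt_split f α h0 h]
  refine add_le_add_right ?_ _
  have hpt : ∀ r ∈ Set.Ioc u v, ENNReal.ofReal ((f 0 + 1) ^ α) ≤ (ENNReal.ofReal (f r)) ^ α := by
    intro r hr
    have hfr : f r ≤ f 0 + 1 := (hmono 0 r le_rfl (h0.trans hr.1.le)).trans (by linarith)
    calc ENNReal.ofReal ((f 0 + 1) ^ α) = (ENNReal.ofReal (f 0 + 1)) ^ α :=
          (ENNReal.ofReal_rpow_of_pos (by linarith)).symm
      _ ≤ _ := ennrpow_anti hα (ENNReal.ofReal_le_ofReal hfr)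
  calc ENNReal.ofReal ((f 0 + 1) ^ α * (v - u))
      = ENNReal.ofReal ((f 0 + 1) ^ α) * ENNReal.ofReal (v - u) := ENNReal.ofReal_mul hc.le
    _ = ENNReal.ofReal ((f 0 + 1) ^ α) * volume (Set.Ioc u v) := by rw [Real.volume_Ioc]
    _ ≤ _ := setLIntegral_const_le' measurableSet_Ioc hpt

lemma lampTau_le (f : ℝ → ℝ) (α t : ℝ) {v : ℝ} (hv : 0 ≤ v)
    (h : ENNReal.ofReal t < lampInt f α v) :
    lampTau f α t ≤ ENNReal.ofReal v :=
  sInf_le ⟨v, ⟨hv, h⟩, rfl⟩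

lemma le_lampTau (f : ℝ → ℝ) (α t : ℝ) {u : ℝ}
    (h : lampInt f α u ≤ ENNReal.ofReal t) :
    ENNReal.ofReal u ≤ lampTau f α t := by
  apply le_sInf
  rintro x ⟨v, ⟨hv0, hv⟩, rfl⟩
  refine ENNReal.ofReal_le_ofReal (le_of_not_gt fun hvu => ?_)
  exact absurd (hv.trans_le ((lampInt_mono f α hvu.le).trans h)) (lt_irrefl _)

lemma lampInt_le_of_lt_tau (f : ℝ → ℝ) (α t : ℝ) {v : ℝ} (hv : 0 ≤ v)
    (h : ENNReal.ofReal v < lampTau f α t) :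
    lampInt f α v ≤ ENNReal.ofReal t := by
  by_contra hc
  push_neg at hc
  exact absurd ((lampTau_le f α t hv hc).trans_lt h) (lt_irrefl _)

lemma lt_lampInt_of_tau_lt {f : ℝ → ℝ} {α t v : ℝ}
    (h : lampTau f α t < ENNReal.ofReal v) :
    ENNReal.ofReal t < lampInt f α v := by
  rw [lampTau, sInf_lt_iff] at h
  obtain ⟨x, ⟨w, ⟨hw0, hw⟩, rfl⟩, hx⟩ := h
  have hwv : w ≤ v := by
    by_contra hc
    push_neg at hc
    exact absurd (lt_of_le_of_lt (ENNReal.ofReal_le_ofReal hc.le) hx) (lt_irrefl _)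
  exact hw.trans_le (lampInt_mono f α hwv)

lemma lampTau_le_bound (hα : α < 0) (hnn : 0 ≤ f 0)
    (hmono : ∀ s t : ℝ, 0 ≤ s → s ≤ t → f t ≤ f s) {t : ℝ} (ht : 0 ≤ t) :
    lampTau f α t ≤ ENNReal.ofReal ((t + 1) / ((f 0 + 1) ^ α)) := by
  have hc : (0:ℝ) < (f 0 + 1) ^ α := Real.rpow_pos_of_pos (by linarith) α
  set v := (t + 1) / ((f 0 + 1) ^ α) with hv
  have hv0 : 0 < v := by positivity
  apply lampTau_le _ _ _ hv0.le
  have hs := lampInt_slope hα hnn hmono le_rfl hv0.le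
  rw [lampInt_zero, zero_add, sub_zero] at hs
  refine lt_of_lt_of_le ?_ hs
  have hveq : (f 0 + 1) ^ α * v = t + 1 := by
    rw [hv]; field_simp
  rw [hveq]
  exact (ENNReal.ofReal_lt_ofReal_iff (by linarith)).2 (by linarith)

lemma lampTau_ne_top (hα : α < 0) (hnn : 0 ≤ f 0)
    (hmono : ∀ s t : ℝ, 0 ≤ s → s ≤ t → f t ≤ f s) {t : ℝ} (ht : 0 ≤ t) :
    lampTau f α t ≠ ∞ :=
  ne_top_of_le_ne_top ENNReal.ofReal_ne_top (lampTau_le_bound hα hnn hmono ht)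

lemma lampTau_mono (f : ℝ → ℝ) (α : ℝ) {t t' : ℝ} (h : t ≤ t') :
    lampTau f α t ≤ lampTau f α t' := by
  apply sInf_le_sInf
  apply Set.image_mono
  intro v hv
  exact ⟨hv.1, lt_of_le_of_lt (ENNReal.ofReal_le_ofReal h) hv.2⟩

lemma lampTau_lipschitz (hα : α < 0) (hnn : 0 ≤ f 0)
    (hmono : ∀ s t : ℝ, 0 ≤ s → s ≤ t → f t ≤ f s) {t t' : ℝ} (ht : 0 ≤ t) (htt' : t ≤ t') :
    (lampTau f α t').toReal ≤ (lampTau f α t).toReal + (t' - t) / ((f 0 + 1) ^ α) := by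
  have hc : (0:ℝ) < (f 0 + 1) ^ α := Real.rpow_pos_of_pos (by linarith) α
  set a := (lampTau f α t).toReal with ha
  have ha0 : 0 ≤ a := ENNReal.toReal_nonneg
  have hfin : lampTau f α t ≠ ∞ := lampTau_ne_top hα hnn hmono ht
  have hdiv0 : 0 ≤ (t' - t) / ((f 0 + 1) ^ α) := div_nonneg (by linarith) hc.le
  have key : ∀ δ : ℝ, 0 < δ →
      lampTau f α t' ≤ ENNReal.ofReal (a + (t' - t) / ((f 0 + 1) ^ α) + δ) := by
    intro δ hδ
    set v := a + (t' - t) / ((f 0 + 1) ^ α) + δ with hvdef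
    have hw : a + δ/2 ≤ v := by simp only [hvdef]; linarith
    apply lampTau_le _ _ _ (by simp only [hvdef]; linarith)
    have h1 : ENNReal.ofReal t < lampInt f α (a + δ/2) := by
      apply lt_lampInt_of_tau_lt
      rw [← ENNReal.ofReal_toReal hfin]
      exact (ENNReal.ofReal_lt_ofReal_iff (by linarith)).2 (by linarith)
    have h2 := lampInt_slope hα hnn hmono (u := a + δ/2) (v := v) (by linarith) hw
    have h3 : t' - t ≤ (f 0 + 1) ^ α * (v - (a + δ/2)) := by
      have hveq : v - (a + δ/2) = (t' - t) / ((f 0 + 1) ^ α) + δ/2 := by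
        simp only [hvdef]; ring
      rw [hveq, mul_add, mul_div_cancel₀ _ (ne_of_gt hc)]
      nlinarith [mul_pos hc (half_pos hδ)]
    calc ENNReal.ofReal t' = ENNReal.ofReal t + ENNReal.ofReal (t' - t) := by
          rw [← ENNReal.ofReal_add ht (by linarith)]; ring_nf
      _ < lampInt f α (a + δ/2) + ENNReal.ofReal (t' - t) :=
          ENNReal.add_lt_add_right ENNReal.ofReal_ne_top h1
      _ ≤ lampInt f α (a + δ/2) + ENNReal.ofReal ((f 0 + 1) ^ α * (v - (a + δ/2))) :=
          add_le_add_right (ENNReal.ofReal_le_ofReal h3) _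
      _ ≤ lampInt f α v := h2
  by_contra hcon
  push_neg at hcon
  have hδ : 0 < ((lampTau f α t').toReal - (a + (t' - t) / ((f 0 + 1) ^ α))) / 2 := by linarith
  have hkey := key _ hδ
  have := ENNReal.toReal_le_of_le_ofReal (by linarith) hkey
  linarith

lemma exists_contPt (hmono : ∀ s t : ℝ, 0 ≤ s → s ≤ t → f t ≤ f s) :
    ∃ D : Set ℝ, D.Countable ∧ ∀ r : ℝ, 0 < r → r ∉ D → ContinuousAt f r := by
  have hant : Antitone (fun x : ℝ => f (max x 0)) := by
    intro a b hab
    exact hmono _ _ (le_max_right a 0) (max_le_max hab le_rfl)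
  refine ⟨{x | ¬ContinuousAt (fun x : ℝ => f (max x 0)) x},
    hant.countable_not_continuousAt, ?_⟩
  intro r hr hrD
  have hcont : ContinuousAt (fun x : ℝ => f (max x 0)) r := not_not.1 hrD
  refine hcont.congr ?_
  filter_upwards [isOpen_Ioi.eventually_mem hr] with x hx
  simp [max_eq_left (le_of_lt (Set.mem_Ioi.1 hx))]

lemma exists_cont_in (hmono : ∀ s t : ℝ, 0 ≤ s → s ≤ t → f t ≤ f s)
    {x y : ℝ} (hx : 0 ≤ x) (hxy : x < y) :
    ∃ u : ℝ, x < u ∧ u < y ∧ ContinuousAt f u := by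
  obtain ⟨D, hD, hDc⟩ := exists_contPt hmono
  have hnot : ¬ (Set.Ioo x y ⊆ D) := by
    intro hsub
    have h0 : volume (Set.Ioo x y) = 0 := measure_mono_null hsub (hD.measure_zero _)
    rw [Real.volume_Ioo] at h0
    rw [ENNReal.ofReal_eq_zero] at h0
    linarith
  obtain ⟨u, huIoo, huD⟩ := Set.not_subset.1 hnot
  exact ⟨u, huIoo.1, huIoo.2, hDc u (lt_of_le_of_lt hx huIoo.1) huD⟩

lemma fseq_tendsto (hconv : SkorokhodTendsto fseq f)
    {u : ℝ} (hu : 0 < u) (hcont : ContinuousAt f u) :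
    Tendsto (fun n => fseq n u) atTop (𝓝 (f u)) := by
  obtain ⟨lam, hlam, hlamconv, hfconv⟩ := hconv
  rw [Metric.tendsto_atTop]
  intro ε hε
  obtain ⟨δ, hδpos, hδ⟩ := Metric.continuousAt_iff.1 hcont (ε/2) (by linarith)
  set T' := u + 1 with hT'
  have hT'pos : (0:ℝ) < T' := by linarith
  have E1 := Metric.tendstoUniformlyOn_iff.1 (hlamconv T' hT'pos) (min δ (1/2))
    (lt_min hδpos (by norm_num))
  have E2 := Metric.tendstoUniformlyOn_iff.1 (hfconv T' hT'pos) (ε/2) (by linarith)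
  rw [eventually_atTop] at E1 E2
  obtain ⟨N1, h1⟩ := E1
  obtain ⟨N2, h2⟩ := E2
  refine ⟨max N1 N2, fun n hn => ?_⟩
  have h1n := h1 n (le_trans (le_max_left _ _) hn)
  have h2n := h2 n (le_trans (le_max_right _ _) hn)
  obtain ⟨s, hs0, hsu⟩ : ∃ s ∈ Set.Ici (0:ℝ), lam n s = u :=
    (hlam n).2.2.surjOn (show u ∈ Set.Ici (0:ℝ) from hu.le)
  have hlamT' : u < lam n T' := by
    have hmem : T' ∈ Set.Icc (0:ℝ) T' := ⟨hT'pos.le, le_refl T'⟩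
    have := lt_of_lt_of_le (h1n T' hmem) (min_le_right _ _)
    rw [Real.dist_eq] at this
    have habs := abs_lt.1 this
    simp only [id] at habs
    linarith [habs.1]
  have hsT' : s ≤ T' := by
    by_contra hcc
    push_neg at hcc
    have := (hlam n).2.1 (Set.mem_Ici.2 hT'pos.le) hs0 hcc
    rw [hsu] at this
    linarith
  have hsmem : s ∈ Set.Icc (0:ℝ) T' := ⟨hs0, hsT'⟩
  have hd1 : |s - u| < δ := by
    have := lt_of_lt_of_le (h1n s hsmem) (min_le_left _ _)
    rw [Real.dist_eq, hsu] at this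
    simpa using this
  have hd2 : dist (f s) (fseq n (lam n s)) < ε/2 := h2n s hsmem
  have hfs : dist (f s) (f u) < ε/2 := hδ (by rwa [Real.dist_eq])
  calc dist (fseq n u) (f u) ≤ dist (fseq n u) (f s) + dist (f s) (f u) := dist_triangle _ _ _
    _ < ε/2 + ε/2 := by
        refine add_lt_add ?_ hfs
        rw [dist_comm, ← hsu]
        exact hd2
    _ = ε := by ring

lemma lampInt_tendsto (hα : α < 0)
    (hseq_mono : ∀ n, ∀ s t : ℝ, 0 ≤ s → s ≤ t → fseq n t ≤ fseq n s)
    (hmono : ∀ s t : ℝ, 0 ≤ s → s ≤ t → f t ≤ f s)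
    (hconv : SkorokhodTendsto fseq f)
    {u : ℝ} (hu : 0 < u) (hcont : ContinuousAt f u) (hfu : 0 < f u) :
    Tendsto (fun n => lampInt (fseq n) α u) atTop (𝓝 (lampInt f α u)) := by
  set F : ℕ → ℝ → ℝ≥0∞ := fun n r => (ENNReal.ofReal (fseq n (max r 0))) ^ α with hF
  set G : ℝ → ℝ≥0∞ := fun r => (ENNReal.ofReal (f (max r 0))) ^ α with hG
  have hFeq : ∀ n, lampInt (fseq n) α u = ∫⁻ r in Set.Ioc (0:ℝ) u, F n r := by
    intro n
    apply setLIntegral_congr_fun measurableSet_Ioc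
    exact fun r hr => by
      simp [hF, max_eq_left hr.1.le]
  have hGeq : lampInt f α u = ∫⁻ r in Set.Ioc (0:ℝ) u, G r := by
    apply setLIntegral_congr_fun measurableSet_Ioc
    exact fun r hr => by
      simp [hG, max_eq_left hr.1.le]
  rw [hGeq]
  simp only [hFeq]
  apply tendsto_lintegral_filter_of_dominated_convergence
    (fun _ => ENNReal.ofReal ((f u / 2) ^ α))
  · apply Filter.Eventually.of_forall
    intro n
    have hant : Antitone fun r : ℝ => fseq n (max r 0) := by
      intro a b hab
      exact hseq_mono n _ _ (le_max_right a 0) (max_le_max hab le_rfl)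
    exact ENNReal.continuous_rpow_const.measurable.comp hant.measurable.ennreal_ofReal
  · have hev := (fseq_tendsto hconv hu hcont).eventually_const_lt (half_lt_self hfu)
    filter_upwards [hev] with n hn
    refine (ae_restrict_iff' measurableSet_Ioc).2 (Filter.Eventually.of_forall ?_)
    intro r hr
    have h1 : f u / 2 ≤ fseq n (max r 0) := by
      rw [max_eq_left hr.1.le]
      exact hn.le.trans (hseq_mono n r u hr.1.le hr.2)
    calc F n r ≤ (ENNReal.ofReal (f u / 2)) ^ α :=
          ennrpow_anti hα (ENNReal.ofReal_le_ofReal h1)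
      _ = ENNReal.ofReal ((f u / 2) ^ α) := ENNReal.ofReal_rpow_of_pos (half_pos hfu)
  · rw [setLIntegral_const]
    exact ENNReal.mul_ne_top ENNReal.ofReal_ne_top
      (by rw [Real.volume_Ioc]; exact ENNReal.ofReal_ne_top)
  · obtain ⟨D, hDcount, hDcont⟩ := exists_contPt hmono
    have hae : ∀ᵐ r ∂(volume.restrict (Set.Ioc (0:ℝ) u)), r ∉ D :=
      ae_restrict_of_ae (measure_eq_zero_iff_ae_notMem.1 (hDcount.measure_zero _))
    filter_upwards [hae, ae_restrict_mem measurableSet_Ioc] with r hrD hrmem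
    have hrcont := hDcont r hrmem.1 hrD
    have h1 : Tendsto (fun n => fseq n r) atTop (𝓝 (f r)) := fseq_tendsto hconv hrmem.1 hrcont
    have h2 : Tendsto (fun n => (ENNReal.ofReal (fseq n r)) ^ α) atTop
        (𝓝 ((ENNReal.ofReal (f r)) ^ α)) :=
      (ENNReal.continuous_rpow_const.tendsto _).comp
        ((ENNReal.continuous_ofReal.tendsto _).comp h1)
    simpa [hF, hG, max_eq_left hrmem.1.le] using h2

lemma lampTau_pointwise (hα : α < 0)
    (hseq_mono : ∀ n, ∀ s t : ℝ, 0 ≤ s → s ≤ t → fseq n t ≤ fseq n s)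
    (hnonneg : ∀ t : ℝ, 0 ≤ t → 0 ≤ f t)
    (hmono : ∀ s t : ℝ, 0 ≤ s → s ≤ t → f t ≤ f s)
    (hconv : SkorokhodTendsto fseq f)
    {t ε : ℝ} (ht : 0 ≤ t) (hε : 0 < ε) :
    ∀ᶠ n in atTop,
      lampTau (fseq n) α t ≤ ENNReal.ofReal ((lampTau f α t).toReal + ε) ∧
      ENNReal.ofReal ((lampTau f α t).toReal - ε) ≤ lampTau (fseq n) α t := by
  have hnn : 0 ≤ f 0 := hnonneg 0 le_rfl
  set a := (lampTau f α t).toReal with ha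
  have ha0 : 0 ≤ a := ENNReal.toReal_nonneg
  have hfin : lampTau f α t ≠ ∞ := lampTau_ne_top hα hnn hmono ht
  have hτa : lampTau f α t = ENNReal.ofReal a := (ENNReal.ofReal_toReal hfin).symm
  refine Filter.Eventually.and ?_ ?_
  · -- upper bound
    obtain ⟨u₂, hu₂a, hu₂half, hcont₂⟩ := exists_cont_in hmono ha0 (show a < a + ε/2 by linarith)
    obtain ⟨u₁, h21, hu₁, hcont₁⟩ := exists_cont_in hmono (by linarith : (0:ℝ) ≤ u₂)
      (show u₂ < a + ε by linarith)
    have hu₂pos : 0 < u₂ := lt_of_le_of_lt ha0 hu₂a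
    have hIu₂ : ENNReal.ofReal t < lampInt f α u₂ := by
      apply lt_lampInt_of_tau_lt
      rw [hτa]
      exact (ENNReal.ofReal_lt_ofReal_iff hu₂pos).2 hu₂a
    by_cases hf2 : 0 < f u₂
    · have htend := lampInt_tendsto hα hseq_mono hmono hconv hu₂pos hcont₂ hf2
      filter_upwards [htend.eventually_const_lt hIu₂] with n hn
      exact (lampTau_le _ _ _ hu₂pos.le hn).trans (ENNReal.ofReal_le_ofReal (by linarith))
    · have hf20 : f u₂ = 0 := le_antisymm (not_lt.1 hf2) (hnonneg u₂ hu₂pos.le)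
      have h12 : (0:ℝ) < u₁ - u₂ := by linarith
      have htend0 : Tendsto (fun n => fseq n u₂) atTop (𝓝 0) := by
        have := fseq_tendsto hconv hu₂pos hcont₂
        rwa [hf20] at this
      have htendinf : Tendsto (fun n => (ENNReal.ofReal (fseq n u₂)) ^ α *
          ENNReal.ofReal (u₁ - u₂)) atTop (𝓝 ∞) := by
        have h0 : Tendsto (fun n => ENNReal.ofReal (fseq n u₂)) atTop (𝓝 0) := by
          have := (ENNReal.continuous_ofReal.tendsto 0).comp htend0
          simpa [Function.comp_def, ENNReal.ofReal_zero] using this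
        have h2 : Tendsto (fun n => (ENNReal.ofReal (fseq n u₂)) ^ α) atTop (𝓝 ∞) := by
          have := ((ENNReal.continuous_rpow_const (y := α)).tendsto (0:ℝ≥0∞)).comp h0
          rwa [ENNReal.zero_rpow_of_neg hα] at this
        have := ENNReal.Tendsto.mul_const (b := ENNReal.ofReal (u₁ - u₂)) h2 (Or.inr ENNReal.ofReal_ne_top)
        rwa [ENNReal.top_mul (by simp [ENNReal.ofReal_eq_zero]; linarith)] at this
      have key : ∀ n, (ENNReal.ofReal (fseq n u₂)) ^ α * ENNReal.ofReal (u₁ - u₂) ≤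
          lampInt (fseq n) α u₁ := by
        intro n
        have h1 : ∀ r ∈ Set.Ioc u₂ u₁,
            (ENNReal.ofReal (fseq n u₂)) ^ α ≤ (ENNReal.ofReal (fseq n r)) ^ α :=
          fun r hr => ennrpow_anti hα
            (ENNReal.ofReal_le_ofReal (hseq_mono n u₂ r hu₂pos.le hr.1.le))
        calc (ENNReal.ofReal (fseq n u₂)) ^ α * ENNReal.ofReal (u₁ - u₂)
            = (ENNReal.ofReal (fseq n u₂)) ^ α * volume (Set.Ioc u₂ u₁) := by
              rw [Real.volume_Ioc]
          _ ≤ ∫⁻ r in Set.Ioc u₂ u₁, (ENNReal.ofReal (fseq n r)) ^ α :=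
              setLIntegral_const_le' measurableSet_Ioc h1
          _ ≤ lampInt (fseq n) α u₁ := lintegral_mono_set (Set.Ioc_subset_Ioc_left hu₂pos.le)
      filter_upwards [htendinf.eventually_const_lt
        (show ENNReal.ofReal t < ∞ from ENNReal.ofReal_lt_top)] with n hn
      have : ENNReal.ofReal t < lampInt (fseq n) α u₁ := hn.trans_le (key n)
      exact (lampTau_le _ _ _ (by linarith : (0:ℝ) ≤ u₁) this).trans
        (ENNReal.ofReal_le_ofReal (by linarith))
  · -- lower bound
    rcases le_or_gt a ε with hcase | hcase
    · apply Filter.Eventually.of_forall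
      intro n
      have : ENNReal.ofReal (a - ε) = 0 := by
        rw [ENNReal.ofReal_eq_zero]; linarith
      rw [this]
      exact zero_le
    · obtain ⟨u₀, h0l, h0a, hcont₀⟩ := exists_cont_in hmono
        (show (0:ℝ) ≤ a - ε by linarith) (show a - ε < a by linarith)
      have hu₀pos : 0 < u₀ := by linarith
      set u₀' := (u₀ + a)/2 with hu₀'
      have h0'lt : u₀ < u₀' := by simp only [hu₀']; linarith
      have h0'a : u₀' < a := by simp only [hu₀']; linarith
      have hIu₀' : lampInt f α u₀' ≤ ENNReal.ofReal t := by
        apply lampInt_le_of_lt_tau f α t (by linarith)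
        rw [hτa]
        exact (ENNReal.ofReal_lt_ofReal_iff (by linarith)).2 h0'a
      have hf0 : 0 < f u₀ := by
        rcases lt_or_ge 0 (f u₀) with h | h
        · exact h
        · exfalso
          have hfu₀ : f u₀ = 0 := le_antisymm h (hnonneg u₀ hu₀pos.le)
          have hinf : ∀ r ∈ Set.Ioc u₀ u₀', (∞:ℝ≥0∞) ≤ (ENNReal.ofReal (f r)) ^ α := by
            intro r hr
            have : f r = 0 := le_antisymm (hfu₀ ▸ hmono u₀ r hu₀pos.le hr.1.le)
              (hnonneg r (by linarith [hr.1] : 0 ≤ r))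
            rw [this, ENNReal.ofReal_zero, ENNReal.zero_rpow_of_neg hα]
          have hbig : (∞:ℝ≥0∞) * volume (Set.Ioc u₀ u₀') ≤
              ∫⁻ r in Set.Ioc u₀ u₀', (ENNReal.ofReal (f r)) ^ α :=
            setLIntegral_const_le' measurableSet_Ioc hinf
          have hvol : volume (Set.Ioc u₀ u₀') ≠ 0 := by
            rw [Real.volume_Ioc]
            simp only [ne_eq, ENNReal.ofReal_eq_zero, not_le]
            linarith
          rw [ENNReal.top_mul hvol] at hbig
          have : lampInt f α u₀' = ∞ := by
            have h1 : (∞:ℝ≥0∞) ≤ lampInt f α u₀' := hbig.trans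
              (lintegral_mono_set (Set.Ioc_subset_Ioc_left hu₀pos.le))
            exact top_le_iff.1 h1
          rw [this] at hIu₀'
          exact absurd (hIu₀'.trans_lt ENNReal.ofReal_lt_top) (lt_irrefl _)
      have hnn0 : 0 ≤ f 0 := hnonneg 0 le_rfl
      have hc : (0:ℝ) < (f 0 + 1) ^ α := Real.rpow_pos_of_pos (by linarith) α
      have hstrict : lampInt f α u₀ < ENNReal.ofReal t := by
        have hs := lampInt_slope hα hnn0 hmono hu₀pos.le h0'lt.le
        have hfin' : lampInt f α u₀ ≠ ∞ :=
          ne_top_of_le_ne_top ENNReal.ofReal_ne_top ((lampInt_mono f α h0'lt.le).trans hIu₀')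
        calc lampInt f α u₀ < lampInt f α u₀ + ENNReal.ofReal ((f 0 + 1) ^ α * (u₀' - u₀)) := by
              apply ENNReal.lt_add_right hfin'
              simp only [ne_eq, ENNReal.ofReal_eq_zero, not_le]
              nlinarith
          _ ≤ lampInt f α u₀' := hs
          _ ≤ ENNReal.ofReal t := hIu₀'
      have htend := lampInt_tendsto hα hseq_mono hmono hconv hu₀pos hcont₀ hf0
      filter_upwards [htend.eventually_lt_const hstrict] with n hn
      calc ENNReal.ofReal (a - ε) ≤ ENNReal.ofReal u₀ := ENNReal.ofReal_le_ofReal (by linarith)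
        _ ≤ lampTau (fseq n) α t := le_lampTau _ _ _ hn.le

end Main

end LampAux

open LampAux in
/-- if non-increasing càdlàg `fₙ → f` in the Skorokhod sense and
`α < 0`, then the Lamperti time changes `τₙ` converge to `τ` uniformly on
compact sets (these time changes are finite-valued since `α < 0`). -/
theorem lamperti_time_change_skorokhod_convergence
    (fseq : ℕ → ℝ → ℝ) (f : ℝ → ℝ) (α : ℝ) (hα : α < 0)
    (hseq_nonneg : ∀ n, ∀ t : ℝ, 0 ≤ t → 0 ≤ fseq n t)
    (hseq_mono : ∀ n, ∀ s t : ℝ, 0 ≤ s → s ≤ t → fseq n t ≤ fseq n s)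
    (hseq_cadlag : ∀ n, Cadlag (fseq n))
    (hnonneg : ∀ t : ℝ, 0 ≤ t → 0 ≤ f t)
    (hmono : ∀ s t : ℝ, 0 ≤ s → s ≤ t → f t ≤ f s)
    (hcadlag : Cadlag f)
    (hconv : SkorokhodTendsto fseq f) :
    ∀ T : ℝ, 0 < T →
      TendstoUniformlyOn (fun n t => (lampTau (fseq n) α t).toReal)
        (fun t => (lampTau f α t).toReal) atTop (Set.Icc 0 T) := by
  intro T hT
  rw [Metric.tendstoUniformlyOn_iff]
  intro ε hε
  have hnn : 0 ≤ f 0 := hnonneg 0 le_rfl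
  have hc : (0:ℝ) < (f 0 + 1) ^ α := Real.rpow_pos_of_pos (by linarith) α
  set c := (f 0 + 1) ^ α with hcdef
  set δ := ε * c / 8 with hδdef
  have hδpos : 0 < δ := by positivity
  set k := Nat.floor (T / δ) + 1 with hk
  have hptw : ∀ᶠ n in atTop, ∀ i ∈ Finset.range (k + 1),
      lampTau (fseq n) α (i * δ) ≤ ENNReal.ofReal ((lampTau f α (i * δ)).toReal + ε/4) ∧
      ENNReal.ofReal ((lampTau f α (i * δ)).toReal - ε/4) ≤ lampTau (fseq n) α (i * δ) := by
    rw [Filter.eventually_all_finset]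
    intro i _
    exact lampTau_pointwise hα hseq_mono hnonneg hmono hconv
      (by positivity) (by linarith)
  filter_upwards [hptw] with n hn
  intro t htmem
  obtain ⟨ht0, htT⟩ := htmem
  set i := Nat.floor (t / δ) with hi
  have hidlet : (i : ℝ) * δ ≤ t := by
    rw [hi]
    calc (Nat.floor (t / δ) : ℝ) * δ ≤ (t / δ) * δ :=
          mul_le_mul_of_nonneg_right (Nat.floor_le (by positivity)) hδpos.le
      _ = t := by field_simp
  have htlti1 : t < ((i : ℝ) + 1) * δ := by
    have := Nat.lt_floor_add_one (t / δ)
    calc t = (t / δ) * δ := by field_simp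
      _ < ((i:ℝ) + 1) * δ := by
          apply mul_lt_mul_of_pos_right _ hδpos
          exact_mod_cast this
  have hik : i + 1 ∈ Finset.range (k + 1) := by
    rw [Finset.mem_range]
    have h1 : i ≤ Nat.floor (T / δ) := Nat.floor_le_floor ((div_le_div_iff_of_pos_right hδpos).2 htT)
    omega
  have hik' : i ∈ Finset.range (k + 1) := by
    rw [Finset.mem_range] at hik ⊢
    omega
  obtain ⟨hup, _⟩ := hn (i + 1) hik
  obtain ⟨_, hlow⟩ := hn i hik'
  push_cast at hup hlow
  -- upper estimate
  have hmono_n : lampTau (fseq n) α t ≤ lampTau (fseq n) α (((i:ℝ) + 1) * δ) :=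
    lampTau_mono _ _ htlti1.le
  have hτn_le : lampTau (fseq n) α t ≤
      ENNReal.ofReal ((lampTau f α (((i:ℝ) + 1) * δ)).toReal + ε/4) := hmono_n.trans hup
  have hτn_ne : lampTau (fseq n) α t ≠ ∞ := ne_top_of_le_ne_top ENNReal.ofReal_ne_top hτn_le
  have hub : (lampTau (fseq n) α t).toReal ≤
      (lampTau f α (((i:ℝ) + 1) * δ)).toReal + ε/4 :=
    ENNReal.toReal_le_of_le_ofReal (add_nonneg ENNReal.toReal_nonneg (by linarith)) hτn_le
  have hlip_up : (lampTau f α (((i:ℝ) + 1) * δ)).toReal ≤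
      (lampTau f α t).toReal + (((i:ℝ) + 1) * δ - t) / c :=
    lampTau_lipschitz hα hnn hmono ht0 htlti1.le
  have hdelta_up : (((i:ℝ) + 1) * δ - t) / c ≤ ε / 8 := by
    rw [div_le_iff₀ hc]
    have : ((i:ℝ) + 1) * δ - t ≤ δ := by linarith
    calc ((i:ℝ) + 1) * δ - t ≤ δ := this
      _ = ε / 8 * c := by rw [hδdef]; ring
  -- lower estimate
  have hmono_n' : lampTau (fseq n) α ((i:ℝ) * δ) ≤ lampTau (fseq n) α t :=
    lampTau_mono _ _ hidlet
  have hlb0 : ENNReal.ofReal ((lampTau f α ((i:ℝ) * δ)).toReal - ε/4) ≤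
      lampTau (fseq n) α t := hlow.trans hmono_n'
  have hlb : (lampTau f α ((i:ℝ) * δ)).toReal - ε/4 ≤ (lampTau (fseq n) α t).toReal := by
    rcases le_or_gt ((lampTau f α ((i:ℝ) * δ)).toReal - ε/4) 0 with h | h
    · exact h.trans ENNReal.toReal_nonneg
    · have := ENNReal.toReal_mono hτn_ne hlb0
      rwa [ENNReal.toReal_ofReal h.le] at this
  have hlip_low : (lampTau f α t).toReal ≤
      (lampTau f α ((i:ℝ) * δ)).toReal + (t - (i:ℝ) * δ) / c :=
    lampTau_lipschitz hα hnn hmono (by positivity) hidlet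
  have hdelta_low : (t - (i:ℝ) * δ) / c ≤ ε / 8 := by
    rw [div_le_iff₀ hc]
    calc t - (i:ℝ) * δ ≤ δ := by linarith
      _ = ε / 8 * c := by rw [hδdef]; ring
  rw [Real.dist_eq, abs_sub_lt_iff]
  constructor
  · -- τ t - τ_n t < ε
    linarith
  · -- τ_n t - τ t < ε
    linarith
end

section
/- Let f_n, f, g_n, g be càdlàg functions from [0,∞) to [0,∞) and t_n, t real numbers with t_n, t > 0. Assume: (1) f_n → f in the Skorokhod (J1) sense, with each f_n non-increasing; (2) g_n → g in the Skorokhod (J1) sense; (3) t_n → t; (4) f_n(t_n−) → f(t−), where h(s−) denotes the left limit of h at s. Then glue^{[t_n]}(f_n, g_n) converges to glue^{[t]}(f, g) in the Skorokhod (J1) sense. -/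
/-!
Let `λₙ`, `μₙ` be time changes witnessing `fₙ → f` and `gₙ → g`. Pick cut points `cₙ ↑ t` with
`λₙ(cₙ) < tₙ` (possible because `λₙ → id` uniformly on `[0, t]` and `tₙ → t`) and use the time
change that follows `λₙ` on `[0, cₙ]`, maps `[cₙ, t]` affinely onto `[λₙ(cₙ), tₙ]` and equals
`tₙ + μₙ(· - t)` beyond `t`. Away from the shrinking window `(cₙ, t)` the glued functions are
then compared piece by piece. On the window only monotonicity is available: `f` is antitone as a
limit of antitone functions, so `f(s)` lies between `f(t−)` and `f(cₙ)`, and the value of `fₙ`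
lies between `fₙ(tₙ−)` and `fₙ(λₙ(cₙ))`. All four bounds tend to `f(t−)`.
-/

open MeasureTheory Filter Set
open scoped ENNReal NNReal

/-- `glue^[t](f,g)(s) = f(s)` for `s < t` and `g(s - t)` for `s ≥ t`. -/
noncomputable def glue (f g : ℝ → ℝ) (t : ℝ) : ℝ → ℝ :=
  fun s => if s < t then f s else g (s - t)



open scoped Topology
open Metric

def IsTimeChange (φ : ℝ → ℝ) : Prop :=
  ContinuousOn φ (Ici 0) ∧ StrictMonoOn φ (Ici 0) ∧ BijOn φ (Ici 0) (Ici 0)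

section IsTimeChange

variable {φ : ℝ → ℝ}

theorem isTimeChange_id : IsTimeChange id :=
  ⟨continuousOn_id, strictMonoOn_id, bijOn_id _⟩

theorem IsTimeChange.nonneg (hφ : IsTimeChange φ) {s : ℝ} (hs : 0 ≤ s) : 0 ≤ φ s :=
  hφ.2.2.mapsTo hs

theorem IsTimeChange.map_zero (hφ : IsTimeChange φ) : φ 0 = 0 := by
  obtain ⟨x, hx, hx0⟩ := hφ.2.2.surjOn (self_mem_Ici : (0 : ℝ) ∈ Ici 0)
  exact le_antisymm (hx0 ▸ hφ.2.1.monotoneOn self_mem_Ici hx hx) (hφ.nonneg le_rfl)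

theorem isTimeChange_of_strictMonoOn (hcont : ContinuousOn φ (Ici 0))
    (hmono : StrictMonoOn φ (Ici 0)) (h0 : φ 0 = 0)
    (hunbdd : ∀ y, 0 ≤ y → ∃ x, 0 ≤ x ∧ y ≤ φ x) : IsTimeChange φ := by
  have hmaps : MapsTo φ (Ici 0) (Ici 0) := fun x hx =>
    h0.symm.trans_le (hmono.monotoneOn self_mem_Ici hx hx)
  refine ⟨hcont, hmono, hmaps, hmono.injOn, fun y hy => ?_⟩
  obtain ⟨x, hx, hyx⟩ := hunbdd y hy
  obtain ⟨z, hz, rfl⟩ :=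
    intermediate_value_Icc hx (hcont.mono Icc_subset_Ici_self) ⟨h0.symm ▸ hy, hyx⟩
  exact ⟨z, hz.1, rfl⟩

end IsTimeChange

theorem skorokhodTendsto_of_eventually_isTimeChange {h : ℕ → ℝ → ℝ} {l : ℝ → ℝ}
    (lam : ℕ → ℝ → ℝ)
    (hlam : ∀ᶠ n in atTop, IsTimeChange (lam n))
    (hid : ∀ T : ℝ, 0 < T → TendstoUniformlyOn lam id atTop (Icc 0 T))
    (hconv : ∀ T : ℝ, 0 < T →
      TendstoUniformlyOn (fun n s => h n (lam n s)) l atTop (Icc 0 T)) :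
    SkorokhodTendsto h l := by
  classical
  refine ⟨fun n => if IsTimeChange (lam n) then lam n else id, fun n => ?_,
    fun T hT => (hid T hT).congr ?_, fun T hT => (hconv T hT).congr ?_⟩
  · dsimp only
    split_ifs with hn
    exacts [hn, isTimeChange_id]
  all_goals filter_upwards [hlam] with n hn s _
  all_goals simp only [if_pos hn]

theorem SkorokhodTendsto.antitoneOn {h : ℕ → ℝ → ℝ} {l : ℝ → ℝ} (hconv : SkorokhodTendsto h l)
    (hanti : ∀ n, AntitoneOn (h n) (Ici 0)) : AntitoneOn l (Ici 0) := by
  obtain ⟨lam, hlam, -, hl⟩ := hconv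
  intro s hs u hu hsu
  have hT : (0 : ℝ) < u + 1 := by linarith [mem_Ici.1 hu]
  refine le_of_tendsto_of_tendsto' ((hl _ hT).tendsto_at ⟨hu, by linarith⟩)
    ((hl _ hT).tendsto_at ⟨hs, by linarith⟩) fun n => ?_
  exact hanti n (IsTimeChange.nonneg (hlam n) hs) (IsTimeChange.nonneg (hlam n) hu)
    ((hlam n).2.1.monotoneOn hs hu hsu)

theorem Cadlag.tendsto_leftLim {h : ℝ → ℝ} (hc : Cadlag h) {x : ℝ} (hx : 0 < x) :
    Tendsto h (𝓝[<] x) (𝓝 (Function.leftLim h x)) := by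
  obtain ⟨l, hl⟩ := hc.2 x hx
  rwa [leftLim_eq_of_tendsto hl]

theorem AntitoneOn.apply_mem_Icc_leftLim {h : ℝ → ℝ} {p q x : ℝ} (hanti : AntitoneOn h (Ici p))
    (hlim : Tendsto h (𝓝[<] q) (𝓝 (Function.leftLim h q))) (hpx : p ≤ x) (hxq : x < q) :
    h x ∈ Icc (Function.leftLim h q) (h p) := by
  refine ⟨le_of_tendsto hlim ?_, hanti self_mem_Ici hpx hpx⟩
  filter_upwards [Ioo_mem_nhdsLT hxq] with y hy
  exact hanti hpx (hpx.trans hy.1.le) hy.1.le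

theorem TendstoUniformlyOn.exists_tendsto_zero_forall_dist_le {ι α β : Type*}
    [PseudoMetricSpace β] {F : ι → α → β} {f : α → β} {p : Filter ι} {s : Set α}
    (h : TendstoUniformlyOn F f p s) :
    ∃ e : ι → ℝ, Tendsto e p (𝓝 0) ∧ ∀ᶠ i in p, ∀ x ∈ s, dist (f x) (F i x) ≤ e i := by
  have hsmall := Metric.tendstoUniformlyOn_iff.1 h
  refine ⟨fun i => sSup ((fun x => dist (f x) (F i x)) '' s), ?_, ?_⟩
  · refine Metric.tendsto_nhds.2 fun ε hε => ?_
    filter_upwards [hsmall (ε / 2) (half_pos hε)] with i hi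
    have hle : sSup ((fun x => dist (f x) (F i x)) '' s) ≤ ε / 2 :=
      Real.sSup_le (by rintro _ ⟨x, hx, rfl⟩; exact (hi x hx).le) (half_pos hε).le
    rw [Real.dist_0_eq_abs, abs_of_nonneg (Real.sSup_nonneg (by rintro _ ⟨x, -, rfl⟩; positivity))]
    linarith
  · filter_upwards [hsmall 1 one_pos] with i hi x hx
    exact le_csSup ⟨1, by rintro _ ⟨y, hy, rfl⟩; exact (hi y hy).le⟩ ⟨x, hx, rfl⟩

theorem TendstoUniformlyOn.tendsto_comp_of_tendsto {ι α β : Type*} [PseudoMetricSpace β]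
    {F : ι → α → β} {f : α → β} {p : Filter ι} {s : Set α} {g : ι → α} {a : β}
    (h : TendstoUniformlyOn F f p s) (hg : ∀ᶠ i in p, g i ∈ s)
    (hfg : Tendsto (fun i => f (g i)) p (𝓝 a)) : Tendsto (fun i => F i (g i)) p (𝓝 a) := by
  refine Metric.tendsto_nhds.2 fun ε hε => ?_
  filter_upwards [Metric.tendsto_nhds.1 hfg (ε / 2) (half_pos hε),
    Metric.tendstoUniformlyOn_iff.1 h (ε / 2) (half_pos hε), hg] with i hfi hFi hgi
  calc dist (F i (g i)) a ≤ dist (f (g i)) (F i (g i)) + dist (f (g i)) a :=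
        dist_triangle_left _ _ _
    _ < ε / 2 + ε / 2 := add_lt_add (hFi _ hgi) hfi
    _ = ε := add_halves ε

theorem glue_of_lt {f g : ℝ → ℝ} {t s : ℝ} (h : s < t) : glue f g t s = f s := if_pos h

theorem glue_of_le {f g : ℝ → ℝ} {t s : ℝ} (h : t ≤ s) : glue f g t s = g (s - t) :=
  if_neg h.not_gt

noncomputable def glueTimeChange (φ ψ : ℝ → ℝ) (c t τ : ℝ) (s : ℝ) : ℝ :=
  if s ≤ c then φ s else if s ≤ t then φ c + (τ - φ c) / (t - c) * (s - c) else τ + ψ (s - t)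

section GlueTimeChange

variable {φ ψ : ℝ → ℝ} {c t τ s : ℝ}

theorem glueTimeChange_of_le (h : s ≤ c) : glueTimeChange φ ψ c t τ s = φ s := if_pos h

theorem glueTimeChange_of_mem_Icc (h : s ∈ Icc c t) :
    glueTimeChange φ ψ c t τ s = φ c + (τ - φ c) / (t - c) * (s - c) := by
  rcases h.1.eq_or_lt with rfl | hcs
  · simp [glueTimeChange_of_le le_rfl]
  · exact (if_neg hcs.not_ge).trans (if_pos h.2)

theorem glueTimeChange_of_ge (hct : c < t) (hψ : ψ 0 = 0) (h : t ≤ s) :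
    glueTimeChange φ ψ c t τ s = τ + ψ (s - t) := by
  rcases h.eq_or_lt with rfl | hts
  · rw [glueTimeChange_of_mem_Icc ⟨hct.le, le_rfl⟩, sub_self, hψ,
      div_mul_cancel₀ _ (sub_pos.2 hct).ne']
    ring
  · exact (if_neg (hct.trans hts).not_ge).trans (if_neg hts.not_ge)

theorem glueTimeChange_mem_Ico (hτ : φ c < τ) (hcs : c ≤ s) (hst : s < t) :
    glueTimeChange φ ψ c t τ s ∈ Ico (φ c) τ := by
  have hslope : 0 < (τ - φ c) / (t - c) := div_pos (sub_pos.2 hτ) (by linarith)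
  have hlt : (τ - φ c) / (t - c) * (s - c) < (τ - φ c) / (t - c) * (t - c) := by gcongr
  rw [div_mul_cancel₀ _ (by linarith)] at hlt
  rw [glueTimeChange_of_mem_Icc ⟨hcs, hst.le⟩]
  constructor <;> nlinarith

theorem glueTimeChange_continuousOn (hφ : ContinuousOn φ (Ici 0)) (hψ : ContinuousOn ψ (Ici 0))
    (hψ0 : ψ 0 = 0) (hc : 0 ≤ c) (hct : c < t) :
    ContinuousOn (glueTimeChange φ ψ c t τ) (Ici 0) := by
  have hmid : ContinuousOn (glueTimeChange φ ψ c t τ) (Icc c t) :=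
    (by fun_prop : Continuous fun s => φ c + (τ - φ c) / (t - c) * (s - c)).continuousOn.congr
      fun s hs => glueTimeChange_of_mem_Icc hs
  have hright : ContinuousOn (glueTimeChange φ ψ c t τ) (Ici t) :=
    (continuousOn_const.add (hψ.comp (continuousOn_id.sub continuousOn_const)
      fun s (hs : t ≤ s) => sub_nonneg.2 hs)).congr fun s (hs : t ≤ s) =>
        glueTimeChange_of_ge hct hψ0 hs
  have hleft : ContinuousOn (glueTimeChange φ ψ c t τ) (Icc 0 c) :=
    (hφ.mono Icc_subset_Ici_self).congr fun s hs => glueTimeChange_of_le hs.2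
  rw [← Icc_union_Ici_eq_Ici hc, ← Icc_union_Ici_eq_Ici hct.le]
  exact hleft.union_of_isClosed (hmid.union_of_isClosed hright isClosed_Icc isClosed_Ici)
    isClosed_Icc (isClosed_Icc.union isClosed_Ici)

theorem glueTimeChange_strictMonoOn (hφ : StrictMonoOn φ (Ici 0)) (hψ : StrictMonoOn ψ (Ici 0))
    (hψ0 : ψ 0 = 0) (hc : 0 ≤ c) (hct : c < t) (hτ : φ c < τ) :
    StrictMonoOn (glueTimeChange φ ψ c t τ) (Ici 0) := by
  have hslope : 0 < (τ - φ c) / (t - c) := div_pos (sub_pos.2 hτ) (sub_pos.2 hct)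
  have hmid : StrictMonoOn (glueTimeChange φ ψ c t τ) (Icc c t) := by
    refine StrictMonoOn.congr (fun a _ b _ hab => ?_)
      fun s hs => (glueTimeChange_of_mem_Icc hs).symm
    gcongr
  have hright : StrictMonoOn (glueTimeChange φ ψ c t τ) (Ici t) := by
    refine StrictMonoOn.congr (fun a (ha : t ≤ a) b (hb : t ≤ b) hab => ?_)
      fun s hs => (glueTimeChange_of_ge hct hψ0 hs).symm
    have : ψ (a - t) < ψ (b - t) :=
      hψ (mem_Ici.2 (sub_nonneg.2 ha)) (mem_Ici.2 (sub_nonneg.2 hb)) (sub_lt_sub_right hab t)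
    linarith
  have hleft : StrictMonoOn (glueTimeChange φ ψ c t τ) (Icc 0 c) :=
    (hφ.mono Icc_subset_Ici_self).congr fun s hs => (glueTimeChange_of_le hs.2).symm
  rw [← Icc_union_Ici_eq_Ici hc, ← Icc_union_Ici_eq_Ici hct.le]
  exact hleft.union (hmid.union hright (isGreatest_Icc hct.le) isLeast_Ici) (isGreatest_Icc hc)
    (by rw [Icc_union_Ici_eq_Ici hct.le]; exact isLeast_Ici)

theorem IsTimeChange.glueTimeChange (hφ : IsTimeChange φ) (hψ : IsTimeChange ψ) (hc : 0 ≤ c)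
    (hct : c < t) (hτ : φ c < τ) : IsTimeChange (glueTimeChange φ ψ c t τ) := by
  refine isTimeChange_of_strictMonoOn (glueTimeChange_continuousOn hφ.1 hψ.1 hψ.map_zero hc hct)
    (glueTimeChange_strictMonoOn hφ.2.1 hψ.2.1 hψ.map_zero hc hct hτ)
    ((glueTimeChange_of_le hc).trans hφ.map_zero) fun y hy => ?_
  obtain ⟨w, hw, hψw⟩ := hψ.2.2.surjOn hy
  have hw : (0 : ℝ) ≤ w := hw
  refine ⟨t + w, by linarith, ?_⟩
  rw [glueTimeChange_of_ge hct hψ.map_zero (le_add_of_nonneg_right hw), add_sub_cancel_left, hψw]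
  linarith [hφ.nonneg hc]

end GlueTimeChange

theorem exists_tendsto_nhdsLT_apply_lt {lf : ℕ → ℝ → ℝ} {τ : ℕ → ℝ} {t : ℝ} (ht : 0 < t)
    (hlf : TendstoUniformlyOn lf id atTop (Icc 0 t)) (hτ : Tendsto τ atTop (𝓝 t)) :
    ∃ c : ℕ → ℝ, Tendsto c atTop (𝓝[<] t) ∧ ∀ᶠ n in atTop, 0 ≤ c n ∧ lf n (c n) < τ n := by
  obtain ⟨e, he, hle⟩ := hlf.exists_tendsto_zero_forall_dist_le
  -- `δ n` strictly exceeds the error of `lf n` on `[0, t]` plus `|τ n - t|`,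
  -- which forces `lf n (t - δ n) < τ n`.
  set δ : ℕ → ℝ := fun n => |e n| + |τ n - t| + 1 / ((n : ℝ) + 1)
  have hδ : Tendsto δ atTop (𝓝 0) := by
    simpa only [abs_zero, sub_self, add_zero] using
      (he.abs.add (hτ.sub_const t).abs).add tendsto_one_div_add_atTop_nhds_zero_nat
  have hδpos : ∀ n, 0 < δ n := fun n => by positivity
  have hc : Tendsto (fun n => t - δ n) atTop (𝓝 t) := by
    simpa using tendsto_const_nhds.sub hδ
  refine ⟨fun n => t - δ n, tendsto_nhdsWithin_iff.2 ⟨hc, .of_forall fun n => ?_⟩, ?_⟩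
  · exact sub_lt_self t (hδpos n)
  filter_upwards [hc.eventually_const_lt ht, hle] with n hn hlen
  have hdist := (abs_le.1 (hlen (t - δ n) ⟨hn.le, (sub_lt_self t (hδpos n)).le⟩)).1
  refine ⟨hn.le, ?_⟩
  have : 0 < 1 / ((n : ℝ) + 1) := by positivity
  simp only [id, δ] at hdist ⊢
  linarith [le_abs_self (e n), neg_abs_le (τ n - t)]

theorem Real.mem_ball_of_mem_Icc {L r a b x : ℝ} (ha : a ∈ ball L r) (hb : b ∈ ball L r)
    (hx : x ∈ Icc a b) : x ∈ ball L r := by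
  rw [Real.ball_eq_Ioo] at *
  exact ordConnected_Ioo.out ha hb hx

theorem tendstoUniformlyOn_glueTimeChange_id {lf lg : ℕ → ℝ → ℝ} {c τ : ℕ → ℝ} {t T : ℝ}
    (hlf : TendstoUniformlyOn lf id atTop (Icc 0 t))
    (hlg : TendstoUniformlyOn lg id atTop (Icc 0 T))
    (hlg0 : ∀ n, lg n 0 = 0) (hc : Tendsto c atTop (𝓝[<] t)) (hτ : Tendsto τ atTop (𝓝 t))
    (hgood : ∀ᶠ n in atTop, 0 ≤ c n ∧ lf n (c n) < τ n) :
    TendstoUniformlyOn (fun n => glueTimeChange (lf n) (lg n) (c n) t (τ n)) id atTop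
      (Icc 0 T) := by
  have hct : ∀ᶠ n in atTop, c n < t := hc.eventually eventually_mem_nhdsWithin
  have hc' := tendsto_nhds_of_tendsto_nhdsWithin hc
  have hlfc : Tendsto (fun n => lf n (c n)) atTop (𝓝 t) := hlf.tendsto_comp_of_tendsto
    (by filter_upwards [hgood, hct] with n hn hctn using ⟨hn.1, hctn.le⟩) hc'
  refine Metric.tendstoUniformlyOn_iff.2 fun ε hε => ?_
  have hε2 := half_pos hε
  filter_upwards [Metric.tendstoUniformlyOn_iff.1 hlf ε hε,
    Metric.tendstoUniformlyOn_iff.1 hlg (ε / 2) hε2, hc'.eventually (ball_mem_nhds t hε2),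
    hlfc.eventually (ball_mem_nhds t hε2), hτ.eventually (ball_mem_nhds t hε2), hgood, hct]
    with n hlfn hlgn hcn hlfcn hτn ⟨hc0, hlt⟩ hctn
  rintro s ⟨hs0, hsT⟩
  rcases le_or_gt s (c n) with hsc | hcs
  · rw [glueTimeChange_of_le hsc]
    exact hlfn s ⟨hs0, by linarith⟩
  rcases lt_or_ge s t with hst | hts
  · have hs := Real.mem_ball_of_mem_Icc hcn (mem_ball_self hε2) ⟨hcs.le, hst.le⟩
    have hls := Real.mem_ball_of_mem_Icc hlfcn hτn
      (Ico_subset_Icc_self (glueTimeChange_mem_Ico (ψ := lg n) hlt hcs.le hst))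
    rw [mem_ball] at hs hls
    rw [id]
    linarith [dist_triangle_right s (glueTimeChange (lf n) (lg n) (c n) t (τ n) s) t]
  · rw [glueTimeChange_of_ge hctn (hlg0 n) hts]
    calc dist (id s) (τ n + lg n (s - t)) = dist (t + (s - t)) (τ n + lg n (s - t)) := by
          rw [add_sub_cancel, id]
      _ ≤ dist t (τ n) + dist (s - t) (lg n (s - t)) := dist_add_add_le _ _ _ _
      _ < ε / 2 + ε / 2 :=
          add_lt_add (by rw [dist_comm]; exact hτn) (hlgn _ ⟨sub_nonneg.2 hts, by linarith⟩)
      _ = ε := add_halves ε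

theorem tendstoUniformlyOn_glue_comp_glueTimeChange {fseq gseq lf lg : ℕ → ℝ → ℝ}
    {f g : ℝ → ℝ} {c τ : ℕ → ℝ} {t T : ℝ} (ht : 0 < t)
    (hfseq : ∀ n, AntitoneOn (fseq n) (Ici 0)) (hfseq_cadlag : ∀ n, Cadlag (fseq n))
    (hf : AntitoneOn f (Ici 0)) (hf_cadlag : Cadlag f)
    (hF : TendstoUniformlyOn (fun n s => fseq n (lf n s)) f atTop (Icc 0 t))
    (hG : TendstoUniformlyOn (fun n s => gseq n (lg n s)) g atTop (Icc 0 T))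
    (hlf : ∀ n, IsTimeChange (lf n)) (hlg : ∀ n, IsTimeChange (lg n))
    (hc : Tendsto c atTop (𝓝[<] t)) (hgood : ∀ᶠ n in atTop, 0 ≤ c n ∧ lf n (c n) < τ n)
    (hleft : Tendsto (fun n => Function.leftLim (fseq n) (τ n)) atTop
      (𝓝 (Function.leftLim f t))) :
    TendstoUniformlyOn
      (fun n s => glue (fseq n) (gseq n) (τ n) (glueTimeChange (lf n) (lg n) (c n) t (τ n) s))
      (glue f g t) atTop (Icc 0 T) := by
  set L := Function.leftLim f t
  have hct : ∀ᶠ n in atTop, c n < t := hc.eventually eventually_mem_nhdsWithin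
  have hfc : Tendsto (fun n => f (c n)) atTop (𝓝 L) := (hf_cadlag.tendsto_leftLim ht).comp hc
  have hFc : Tendsto (fun n => fseq n (lf n (c n))) atTop (𝓝 L) := hF.tendsto_comp_of_tendsto
    (by filter_upwards [hgood, hct] with n hn hctn using ⟨hn.1, hctn.le⟩) hfc
  refine Metric.tendstoUniformlyOn_iff.2 fun ε hε => ?_
  have hε2 := half_pos hε
  filter_upwards [Metric.tendstoUniformlyOn_iff.1 hF ε hε, Metric.tendstoUniformlyOn_iff.1 hG ε hε,
    hfc.eventually (ball_mem_nhds L hε2), hFc.eventually (ball_mem_nhds L hε2),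
    hleft.eventually (ball_mem_nhds L hε2), hgood, hct]
    with n hFn hGn hfcn hFcn hleftn ⟨hc0, hlt⟩ hctn
  rintro s ⟨hs0, hsT⟩
  have hlfc0 := (hlf n).nonneg hc0
  rcases le_or_gt s (c n) with hsc | hcs
  · have hlfs : lf n s < τ n := ((hlf n).2.1.monotoneOn hs0 hc0 hsc).trans_lt hlt
    rw [glueTimeChange_of_le hsc, glue_of_lt (hsc.trans_lt hctn), glue_of_lt hlfs]
    exact hFn s ⟨hs0, by linarith⟩
  rcases lt_or_ge s t with hst | hts
  · set u := glueTimeChange (lf n) (lg n) (c n) t (τ n) s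
    have hu : u ∈ Ico (lf n (c n)) (τ n) := glueTimeChange_mem_Ico hlt hcs.le hst
    rw [glue_of_lt hst, glue_of_lt hu.2]
    have hfs := Real.mem_ball_of_mem_Icc (mem_ball_self hε2) hfcn
      ((hf.mono (Ici_subset_Ici.2 hc0)).apply_mem_Icc_leftLim (hf_cadlag.tendsto_leftLim ht)
        hcs.le hst)
    have hfu := Real.mem_ball_of_mem_Icc hleftn hFcn
      (((hfseq n).mono (Ici_subset_Ici.2 hlfc0)).apply_mem_Icc_leftLim
        ((hfseq_cadlag n).tendsto_leftLim (hlfc0.trans_lt hlt)) hu.1 hu.2)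
    rw [mem_ball] at hfs hfu
    linarith [dist_triangle_right (f s) (fseq n u) L]
  · have hτle : τ n ≤ τ n + lg n (s - t) :=
      le_add_of_nonneg_right ((hlg n).nonneg (sub_nonneg.2 hts))
    rw [glueTimeChange_of_ge hctn (hlg n).map_zero hts, glue_of_le hts, glue_of_le hτle,
      add_sub_cancel_left]
    exact hGn (s - t) ⟨sub_nonneg.2 hts, by linarith⟩

theorem glue_skorokhod_convergence_general
    (fseq gseq : ℕ → ℝ → ℝ) (f g : ℝ → ℝ) (tseq : ℕ → ℝ) (t : ℝ)
    (ht : 0 < t)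
    (hf_cadlag : Cadlag f)
    (hfseq_cadlag : ∀ n, Cadlag (fseq n))
    -- (1) fₙ → f in the Skorokhod sense, each fₙ non-increasing
    (hfseq_mono : ∀ n, ∀ s u : ℝ, 0 ≤ s → s ≤ u → fseq n u ≤ fseq n s)
    (hfconv : SkorokhodTendsto fseq f)
    -- (2) gₙ → g in the Skorokhod sense
    (hgconv : SkorokhodTendsto gseq g)
    -- (3) tₙ → t
    (htconv : Filter.Tendsto tseq atTop (nhds t))
    -- (4) fₙ(tₙ−) → f(t−)
    (hleft : Filter.Tendsto (fun n => Function.leftLim (fseq n) (tseq n)) atTop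
      (nhds (Function.leftLim f t))) :
    SkorokhodTendsto (fun n => glue (fseq n) (gseq n) (tseq n)) (glue f g t) := by
  have hfseq_anti : ∀ n, AntitoneOn (fseq n) (Ici 0) := fun n s hs u _ hsu =>
    hfseq_mono n s u hs hsu
  have hf_anti := hfconv.antitoneOn hfseq_anti
  obtain ⟨lf, hlf, hlf_id, hlf_conv⟩ := hfconv
  obtain ⟨lg, hlg, hlg_id, hlg_conv⟩ := hgconv
  obtain ⟨c, hc, hgood⟩ := exists_tendsto_nhdsLT_apply_lt ht (hlf_id t ht) htconv
  refine skorokhodTendsto_of_eventually_isTimeChange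
    (fun n => glueTimeChange (lf n) (lg n) (c n) t (tseq n)) ?_ (fun T hT => ?_) fun T hT => ?_
  · filter_upwards [hgood, hc.eventually eventually_mem_nhdsWithin] with n ⟨hc0, hlt⟩ hct
    exact IsTimeChange.glueTimeChange (hlf n) (hlg n) hc0 hct hlt
  · exact tendstoUniformlyOn_glueTimeChange_id (hlf_id t ht) (hlg_id T hT)
      (fun n => IsTimeChange.map_zero (hlg n)) hc htconv hgood
  · exact tendstoUniformlyOn_glue_comp_glueTimeChange ht hfseq_anti hfseq_cadlag hf_anti hf_cadlag
      (hlf_conv t ht) (hlg_conv T hT) hlf hlg hc hgood hleft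

/-- gluing lemma for Skorokhod convergence. -/
theorem glue_skorokhod_convergence
    (fseq gseq : ℕ → ℝ → ℝ) (f g : ℝ → ℝ) (tseq : ℕ → ℝ) (t : ℝ)
    (htseq : ∀ n, 0 < tseq n) (ht : 0 < t)
    (hf_nonneg : ∀ s : ℝ, 0 ≤ s → 0 ≤ f s) (hf_cadlag : Cadlag f)
    (hg_nonneg : ∀ s : ℝ, 0 ≤ s → 0 ≤ g s) (hg_cadlag : Cadlag g)
    (hfseq_nonneg : ∀ n, ∀ s : ℝ, 0 ≤ s → 0 ≤ fseq n s)
    (hfseq_cadlag : ∀ n, Cadlag (fseq n))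
    (hgseq_nonneg : ∀ n, ∀ s : ℝ, 0 ≤ s → 0 ≤ gseq n s)
    (hgseq_cadlag : ∀ n, Cadlag (gseq n))
    -- (1) fₙ → f in the Skorokhod sense, each fₙ non-increasing
    (hfseq_mono : ∀ n, ∀ s u : ℝ, 0 ≤ s → s ≤ u → fseq n u ≤ fseq n s)
    (hfconv : SkorokhodTendsto fseq f)
    -- (2) gₙ → g in the Skorokhod sense
    (hgconv : SkorokhodTendsto gseq g)
    -- (3) tₙ → t
    (htconv : Filter.Tendsto tseq atTop (nhds t))
    -- (4) fₙ(tₙ−) → f(t−)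
    (hleft : Filter.Tendsto (fun n => Function.leftLim (fseq n) (tseq n)) atTop
      (nhds (Function.leftLim f t))) :
    SkorokhodTendsto (fun n => glue (fseq n) (gseq n) (tseq n)) (glue f g t) :=
  glue_skorokhod_convergence_general fseq gseq f g tseq t ht hf_cadlag hfseq_cadlag hfseq_mono
    hfconv hgconv htconv hleft
end

section
/- Let f_n, f be non-increasing non-negative càdlàg functions on [0,∞) such that f_n → f in the Skorokhod (J1) sense. Set t_n = inf{s ≥ 0 : f_n(s) = 0} and t = inf{s ≥ 0 : f(s) = 0}, and assume t < ∞ and t_n → t. If f(t−) = 0, then f_n(t_n−) → 0. (Here h(s−) denotes the left limit of h at s > 0, with the convention h(0−) := h(0).) -/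
open MeasureTheory Filter Set
open scoped ENNReal NNReal

/-- Left limit of `h` at `s`, with the convention `h(0−) := h(0)` (and the same
junk convention for `s < 0`). -/
noncomputable def leftLimC (h : ℝ → ℝ) (s : ℝ) : ℝ :=
  if s ≤ 0 then h 0 else Function.leftLim h s

/-!
Each `fₙ` is non-increasing, so `fₙ(tₙ−) ≤ fₙ(λₙ(s))` as soon as `0 ≤ λₙ(s) < tₙ`. For fixed
`s < t` this holds eventually, because `λₙ(s) → s` and `tₙ → t`, while `fₙ(λₙ(s)) → f(s)`; and
`f(s)` is as close to `f(t−) = 0` as we like for `s` close to `t`. When `t = 0` the time changes fix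
`0`, so `fₙ(tₙ−) ≤ fₙ(0) = fₙ(λₙ(0)) → f(0) = 0`.
-/

open Topology

theorem Function.leftLim_mem_of_isClosed {α β : Type*} [TopologicalSpace α] [LinearOrder α]
    [OrderTopology α] [TopologicalSpace β] [T2Space β] {f : α → β} {a : α} {s : Set β}
    (hs : IsClosed s) (ha : f a ∈ s) (hev : ∀ᶠ x in 𝓝[<] a, f x ∈ s) :
    Function.leftLim f a ∈ s := by
  by_cases hex : ∃ y, Tendsto f (𝓝[<] a) (𝓝 y)
  · obtain ⟨y, hy⟩ := hex
    rcases (𝓝[<] a).eq_or_neBot with hbot | hne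
    · rwa [leftLim_eq_of_eq_bot f hbot]
    · rw [leftLim_eq_of_tendsto hy]
      exact hs.mem_of_tendsto hy hev
  · rwa [leftLim_eq_of_not_tendsto f hex]

theorem leftLimC_le_of_lt {h : ℝ → ℝ} (hanti : AntitoneOn h (Ici 0)) {s u : ℝ} (hs : 0 ≤ s)
    (hsu : s < u) : leftLimC h u ≤ h s := by
  rw [leftLimC, if_neg (hs.trans_lt hsu).not_ge]
  refine Function.leftLim_mem_of_isClosed (s := Iic (h s)) isClosed_Iic
    (hanti hs (hs.trans hsu.le) hsu.le) ?_
  filter_upwards [Ioo_mem_nhdsLT hsu] with x hx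
  exact hanti hs (hs.trans hx.1.le) hx.1.le

theorem leftLimC_le_apply_zero {h : ℝ → ℝ} (hanti : AntitoneOn h (Ici 0)) (u : ℝ) :
    leftLimC h u ≤ h 0 := by
  rcases le_or_gt u 0 with hu | hu
  · rw [leftLimC, if_pos hu]
  · exact leftLimC_le_of_lt hanti le_rfl hu

theorem leftLimC_nonneg {h : ℝ → ℝ} (hnonneg : ∀ s, 0 ≤ s → 0 ≤ h s) (u : ℝ) :
    0 ≤ leftLimC h u := by
  rw [leftLimC]
  split_ifs with hu
  · exact hnonneg 0 le_rfl
  · rw [not_le] at hu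
    refine Function.leftLim_mem_of_isClosed (f := h) (s := Ici 0) isClosed_Ici
      (hnonneg u hu.le) ?_
    filter_upwards [Ioo_mem_nhdsLT hu] with x hx
    exact hnonneg x hx.1.le

theorem Cadlag.tendsto_nhdsLT_leftLimC {h : ℝ → ℝ} (hh : Cadlag h) {t : ℝ} (ht : 0 < t) :
    Tendsto h (𝓝[<] t) (𝓝 (leftLimC h t)) := by
  obtain ⟨l, hl⟩ := hh.2 t ht
  rwa [leftLimC, if_neg ht.not_ge, leftLim_eq_of_tendsto hl]

theorem MonotoneOn.apply_eq_of_bijOn_Ici {α : Type*} [PartialOrder α] {g : α → α} {a : α}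
    (hg : MonotoneOn g (Ici a)) (hbij : BijOn g (Ici a) (Ici a)) : g a = a := by
  obtain ⟨s, hs, hgs⟩ := hbij.surjOn self_mem_Ici
  exact le_antisymm (hgs ▸ hg self_mem_Ici hs hs) (hbij.mapsTo self_mem_Ici)

theorem SkorokhodTendsto.exists_timeChange {h : ℕ → ℝ → ℝ} {l : ℝ → ℝ}
    (hconv : SkorokhodTendsto h l) :
    ∃ lam : ℕ → ℝ → ℝ, (∀ n, lam n 0 = 0 ∧ MapsTo (lam n) (Ici 0) (Ici 0)) ∧
      ∀ s, 0 ≤ s → Tendsto (fun n => lam n s) atTop (𝓝 s) ∧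
        Tendsto (fun n => h n (lam n s)) atTop (𝓝 (l s)) := by
  obtain ⟨lam, hlam, hlam_id, hcomp⟩ := hconv
  refine ⟨lam, fun n => ⟨?_, (hlam n).2.2.mapsTo⟩, fun s hs => ⟨?_, ?_⟩⟩
  · exact (hlam n).2.1.monotoneOn.apply_eq_of_bijOn_Ici (hlam n).2.2
  · exact (hlam_id (s + 1) (by linarith)).tendsto_at ⟨hs, by linarith⟩
  · exact (hcomp (s + 1) (by linarith)).tendsto_at ⟨hs, by linarith⟩

theorem left_limit_at_absorption_convergence_zero_case_general
    (fseq : ℕ → ℝ → ℝ) (f : ℝ → ℝ)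
    (hseq_nonneg : ∀ n, ∀ s : ℝ, 0 ≤ s → 0 ≤ fseq n s)
    (hseq_mono : ∀ n, ∀ s u : ℝ, 0 ≤ s → s ≤ u → fseq n u ≤ fseq n s)
    (hcadlag : Cadlag f)
    (hconv : SkorokhodTendsto fseq f)
    (ht_fin : hit0 f ≠ ∞)
    (ht_conv : Filter.Tendsto (fun n => hit0 (fseq n)) atTop (nhds (hit0 f)))
    (hzero : leftLimC f ((hit0 f).toReal) = 0) :
    Filter.Tendsto (fun n => leftLimC (fseq n) ((hit0 (fseq n)).toReal)) atTop
      (nhds 0) := by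
  obtain ⟨lam, hlam, hlim⟩ := hconv.exists_timeChange
  set t := (hit0 f).toReal
  have hanti : ∀ n, AntitoneOn (fseq n) (Ici 0) := fun n s hs u _ hsu => hseq_mono n s u hs hsu
  have htn : Tendsto (fun n => (hit0 (fseq n)).toReal) atTop (𝓝 t) :=
    (ENNReal.tendsto_toReal ht_fin).comp ht_conv
  refine tendsto_order.2 ⟨fun a ha => Eventually.of_forall fun n =>
    ha.trans_le (leftLimC_nonneg (hseq_nonneg n) _), fun ε hε => ?_⟩
  rcases ENNReal.toReal_nonneg.eq_or_lt with ht | ht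
  · have hf0 : f 0 = 0 := by rwa [leftLimC, if_pos (le_of_eq ht.symm)] at hzero
    have hstart : Tendsto (fun n => fseq n 0) atTop (𝓝 0) := by
      simpa only [hlam, hf0] using (hlim 0 le_rfl).2
    filter_upwards [hstart.eventually_lt_const hε] with n hn
    exact (leftLimC_le_apply_zero (hanti n) _).trans_lt hn
  · obtain ⟨s, hfs, hs⟩ := (((hzero ▸ hcadlag.tendsto_nhdsLT_leftLimC ht).eventually
      (gt_mem_nhds hε)).and (Ioo_mem_nhdsLT ht)).exists
    obtain ⟨hlam_s, hf_s⟩ := hlim s hs.1.le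
    have hmid : s < (s + t) / 2 ∧ (s + t) / 2 < t := by constructor <;> linarith [hs.2]
    filter_upwards [hlam_s.eventually_lt_const hmid.1, htn.eventually_const_lt hmid.2,
      hf_s.eventually_lt_const hfs] with n hlam_lt hmid_lt hfn
    exact (leftLimC_le_of_lt (hanti n) ((hlam n).2 hs.1.le) (hlam_lt.trans hmid_lt)).trans_lt hfn

/-- if non-increasing non-negative càdlàg `fₙ → f` in the Skorokhod
sense, `tₙ = inf{s ≥ 0 : fₙ(s) = 0} → t = inf{s ≥ 0 : f(s) = 0} < ∞`,
and `f(t−) = 0`, then `fₙ(tₙ−) → 0`. -/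
theorem left_limit_at_absorption_convergence_zero_case
    (fseq : ℕ → ℝ → ℝ) (f : ℝ → ℝ)
    (hseq_nonneg : ∀ n, ∀ s : ℝ, 0 ≤ s → 0 ≤ fseq n s)
    (hseq_mono : ∀ n, ∀ s u : ℝ, 0 ≤ s → s ≤ u → fseq n u ≤ fseq n s)
    (hseq_cadlag : ∀ n, Cadlag (fseq n))
    (hnonneg : ∀ s : ℝ, 0 ≤ s → 0 ≤ f s)
    (hmono : ∀ s u : ℝ, 0 ≤ s → s ≤ u → f u ≤ f s)
    (hcadlag : Cadlag f)
    (hconv : SkorokhodTendsto fseq f)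
    (ht_fin : hit0 f ≠ ∞)
    (ht_conv : Filter.Tendsto (fun n => hit0 (fseq n)) atTop (nhds (hit0 f)))
    (hzero : leftLimC f ((hit0 f).toReal) = 0) :
    Filter.Tendsto (fun n => leftLimC (fseq n) ((hit0 (fseq n)).toReal)) atTop
      (nhds 0) :=
  left_limit_at_absorption_convergence_zero_case_general fseq f hseq_nonneg hseq_mono hcadlag hconv
    ht_fin ht_conv hzero
end

section
/- Let (Ω, 𝓕, P) be a probability space, let (X_n)_{n≥1} be non-negative measurable real-valued random variables, let N : Ω → ℕ be measurable, and let a ≥ 0 be such that for all n ≥ 1, E[X_n 1_{{N ≥ n}}] ≥ a·P(N ≥ n) (this is the condition E[X_n | N ≥ n] ≥ a whenever P(N ≥ n) > 0). Then E[Σ_{i=1}^{N} X_i] ≥ a·E[N], the expectations being taken in [0,∞]. -/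
open MeasureTheory Filter Set
open scoped ENNReal NNReal

/-- a variant of Wald's formula. If `E[Xₙ 1_{N ≥ n}] ≥ a·P(N ≥ n)`
for all `n ≥ 1`, then `E[Σ_{i=1}^N Xᵢ] ≥ a·E[N]`, expectations in `[0,∞]`. -/
theorem wald_lower_bound
    {Ω : Type*} [MeasurableSpace Ω] (P : Measure Ω) [IsProbabilityMeasure P]
    (X : ℕ → Ω → ℝ) (N : Ω → ℕ) (a : ℝ) (ha : 0 ≤ a)
    (hX_meas : ∀ n, Measurable (X n))
    (hX_nonneg : ∀ n ω, 0 ≤ X n ω)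
    (hN_meas : Measurable N)
    (hbound : ∀ n : ℕ, 1 ≤ n →
      ENNReal.ofReal a * P {ω | n ≤ N ω} ≤
        ∫⁻ ω in {ω | n ≤ N ω}, ENNReal.ofReal (X n ω) ∂P) :
    ENNReal.ofReal a * ∫⁻ ω, (N ω : ℝ≥0∞) ∂P ≤
      ∫⁻ ω, ENNReal.ofReal (∑ i ∈ Finset.Icc 1 (N ω), X i ω) ∂P := by
  have hmset : ∀ n : ℕ, MeasurableSet {ω | n ≤ N ω} := fun n => by
    have : {ω | n ≤ N ω} = N ⁻¹' Set.Ici n := rfl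
    rw [this]; exact hN_meas measurableSet_Ici
  set g : ℕ → Ω → ℝ≥0∞ := fun n ω =>
    ({ω | n + 1 ≤ N ω}).indicator (fun ω => ENNReal.ofReal (X (n + 1) ω)) ω with hg
  have hg_meas : ∀ n, Measurable (g n) := fun n =>
    ((hX_meas (n + 1)).ennreal_ofReal).indicator (hmset (n + 1))
  -- pointwise identity for the sum
  have hsum : ∀ ω, ∑' n, g n ω = ENNReal.ofReal (∑ i ∈ Finset.Icc 1 (N ω), X i ω) := by
    intro ω
    rw [ENNReal.ofReal_sum_of_nonneg (fun i _ => hX_nonneg i ω),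
      tsum_eq_sum (s := Finset.range (N ω)) (by
        intro n hn
        simp only [Finset.mem_range, not_lt] at hn
        exact Set.indicator_of_notMem (by simp only [Set.mem_setOf_eq]; omega) _)]
    rw [← Finset.Ico_add_one_right_eq_Icc, Finset.sum_Ico_eq_sum_range]
    simp only [Nat.add_sub_cancel, Nat.succ_sub_one]
    refine Finset.sum_congr rfl fun i hi => ?_
    simp only [Finset.mem_range] at hi
    have : i + 1 ≤ N ω := hi
    simp [hg, Set.indicator_of_mem, this, Set.mem_setOf_eq, Nat.add_comm 1 i, not_le.mpr hi]
  -- integral of N as a tsum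
  have hNint : ∫⁻ ω, (N ω : ℝ≥0∞) ∂P = ∑' n : ℕ, P {ω | n + 1 ≤ N ω} := by
    have hpt : ∀ ω, (N ω : ℝ≥0∞)
        = ∑' n : ℕ, ({ω | n + 1 ≤ N ω}).indicator (fun _ => (1 : ℝ≥0∞)) ω := by
      intro ω
      rw [tsum_eq_sum (s := Finset.range (N ω)) (by
        intro n hn
        simp only [Finset.mem_range, not_lt] at hn
        apply Set.indicator_of_notMem
        simp only [Set.mem_setOf_eq]; omega)]
      have : ∀ i ∈ Finset.range (N ω),
          ({ω | i + 1 ≤ N ω}).indicator (fun _ => (1 : ℝ≥0∞)) ω = 1 := by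
        intro i hi
        simp only [Finset.mem_range] at hi
        exact Set.indicator_of_mem (by simpa [Set.mem_setOf_eq] using hi) _
      rw [Finset.sum_congr rfl this]
      simp
    calc ∫⁻ ω, (N ω : ℝ≥0∞) ∂P
        = ∫⁻ ω, ∑' n : ℕ, ({ω | n + 1 ≤ N ω}).indicator (fun _ => (1 : ℝ≥0∞)) ω ∂P := by
          exact lintegral_congr hpt
      _ = ∑' n : ℕ, ∫⁻ ω, ({ω | n + 1 ≤ N ω}).indicator (fun _ => (1 : ℝ≥0∞)) ω ∂P := by
          exact lintegral_tsum fun n =>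
            ((measurable_const).indicator (hmset (n + 1))).aemeasurable
      _ = ∑' n : ℕ, P {ω | n + 1 ≤ N ω} := by
          refine tsum_congr fun n => ?_
          rw [lintegral_indicator (hmset (n + 1))]
          simp
  calc ENNReal.ofReal a * ∫⁻ ω, (N ω : ℝ≥0∞) ∂P
      = ∑' n : ℕ, ENNReal.ofReal a * P {ω | n + 1 ≤ N ω} := by
        rw [hNint, ENNReal.tsum_mul_left]
    _ ≤ ∑' n : ℕ, ∫⁻ ω in {ω | n + 1 ≤ N ω}, ENNReal.ofReal (X (n + 1) ω) ∂P :=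
        ENNReal.tsum_le_tsum fun n => hbound (n + 1) (Nat.succ_le_succ (Nat.zero_le n))
    _ = ∑' n : ℕ, ∫⁻ ω, g n ω ∂P := by
        refine tsum_congr fun n => ?_
        rw [hg]
        rw [lintegral_indicator (hmset (n + 1))]
    _ = ∫⁻ ω, ∑' n, g n ω ∂P := (lintegral_tsum fun n => (hg_meas n).aemeasurable).symm
    _ = ∫⁻ ω, ENNReal.ofReal (∑ i ∈ Finset.Icc 1 (N ω), X i ω) ∂P := lintegral_congr hsum
end
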